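/- arXiv:2105.08580 — 6 statements merged into one kernel-verified Lean document; each statement's English description precedes it below -/
import Mathlib

section
/- Let l ≥ 1, let λ = (λ^0,…,λ^{l−1}) be an l-partition with multicharge s = (s_0,…,s_{l−1}) ∈ ℤ^l, and fix m ∈ ℤ_{>0} with m + s_c ≥ 1 and λ^c_{m+s_c} = 0 for all c; set X^c := {λ^c_j − j + s_c + 1 : 1 ≤ j ≤ m + s_c}. Fix c₁, c₂ ∈ {0,…,l−1} and x ∈ X^{c₁}. Set δ(x) := #{y ∈ ℤ : −m < y < x, y ∉ X^{c₁}}, let y^{c₂}_1 < y^{c₂}_2 < ⋯ be the increasing enumeration of {y ∈ ℤ : y > −m, y ∉ X^{c₂}}, and set H^{c₂}(x) := {x − y^{c₂}_d : 1 ≤ d ≤ δ(x)}. Then 0 ∈ H^{c₂}(x) if and only if both (i) x ∉ X^{c₂} and (ii) #{y ∈ X^{c₁} : y < x} < #{y ∈ X^{c₂} : y < x}. -/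
/-- A partition, encoded as a nonincreasing eventually-zero sequence of naturals;
`part i` is the `(i+1)`-st part `λ_{i+1}`. -/
structure IntPartition where
  part : ℕ → ℕ
  antitone : Antitone part
  eventually_zero : ∃ N : ℕ, ∀ i, N ≤ i → part i = 0

namespace IntPartition

/-- `conj p k` is the `(k+1)`-st part `λ'_{k+1} = #{I ≥ 1 : λ_I ≥ k+1}` of the conjugate. -/
noncomputable def conj (p : IntPartition) (k : ℕ) : ℕ :=
  Set.ncard {i : ℕ | k < p.part i}

end IntPartition

/-- Generalised hook length `h^{λ,μ}_{i+1,j+1} = λ_{i+1} - (i+1) + μ'_{j+1} - (j+1) + 1`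
of the (0-indexed) node `(i,j)`. -/
noncomputable def hookLen (p q : IntPartition) (i j : ℕ) : ℤ :=
  (p.part i : ℤ) + q.conj j - i - j - 1

/-- Charged hook length `ch^{a,b}_{c,d} = h^{λ^a,λ^b}_{c,d} + s_a - s_b` (0-indexed node). -/
noncomputable def chargedHook {l : ℕ} (lam : Fin l → IntPartition) (s : Fin l → ℤ)
    (a b : Fin l) (i j : ℕ) : ℤ :=
  hookLen (lam a) (lam b) i j + s a - s b

/-- The charged β-numbers `X = {λ_j − j + s + 1 : 1 ≤ j ≤ m + s}`. -/
def betaFinset (p : IntPartition) (s : ℤ) (m : ℕ) : Finset ℤ :=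
  (Finset.range ((m : ℤ) + s).toNat).image (fun j : ℕ => (p.part j : ℤ) - j + s)

/-- The abacus `L_s(λ) = {λ_j − j + s + 1 : j ∈ ℤ_{>0}}`. -/
def abacusSet (p : IntPartition) (s : ℤ) : Set ℤ :=
  {x : ℤ | ∃ j : ℕ, x = (p.part j : ℤ) - j + s}

/-- Every charged β-number is greater than `-m`. -/
lemma beta_mem_gt_aux (p : IntPartition) (s : ℤ) (m : ℕ) (hms : 1 ≤ (m : ℤ) + s) :
    ∀ y ∈ betaFinset p s m, -(m : ℤ) < y := by
  intro y hy
  simp only [betaFinset, Finset.mem_image, Finset.mem_range] at hy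
  obtain ⟨j, hj, rfl⟩ := hy
  have h1 : ((m : ℤ) + s).toNat = (m : ℤ) + s := Int.toNat_of_nonneg (by linarith)
  have h2 : (j : ℤ) < ((((m : ℤ) + s).toNat : ℕ) : ℤ) := by exact_mod_cast hj
  have h3 : (0 : ℤ) ≤ (p.part j : ℤ) := Int.natCast_nonneg _
  omega

/-- Counting identity: complement count plus member count below `x` equals the
size of the interval `(-m, x)`. -/
lemma beta_count_aux (X : Finset ℤ) (m : ℕ) (x : ℤ)
    (hmem : ∀ y ∈ X, -(m : ℤ) < y) :
    Set.ncard {y : ℤ | -(m : ℤ) < y ∧ y < x ∧ y ∉ X} +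
      Set.ncard {y : ℤ | y ∈ X ∧ y < x} = (Finset.Ioo (-(m : ℤ)) x).card := by
  have h1 : {y : ℤ | -(m : ℤ) < y ∧ y < x ∧ y ∉ X} =
      ↑((Finset.Ioo (-(m : ℤ)) x).filter (fun y => y ∉ X)) := by
    ext y; simp [Finset.mem_Ioo, and_assoc]
  have h2 : {y : ℤ | y ∈ X ∧ y < x} =
      ↑((Finset.Ioo (-(m : ℤ)) x).filter (fun y => y ∈ X)) := by
    ext y
    simp only [Set.mem_setOf_eq, Finset.coe_filter, Finset.mem_Ioo]
    constructor
    · rintro ⟨hyX, hyx⟩; exact ⟨⟨hmem y hyX, hyx⟩, hyX⟩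
    · rintro ⟨⟨_, hyx⟩, hyX⟩; exact ⟨hyX, hyx⟩
  rw [h1, h2, Set.ncard_coe_finset, Set.ncard_coe_finset, add_comm]
  exact Finset.card_filter_add_card_filter_not _

/-- The index of `x` in a strictly monotone enumeration equals the number of
elements of the range below `x`. -/
lemma index_eq_aux (yf : ℕ → ℤ) (hyf : StrictMono yf) (d : ℕ) (x : ℤ) (hd : yf d = x) :
    d = Set.ncard {y : ℤ | y ∈ Set.range yf ∧ y < x} := by
  have h : {y : ℤ | y ∈ Set.range yf ∧ y < x} = yf '' Set.Iio d := by
    ext y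
    simp only [Set.mem_setOf_eq, Set.mem_range, Set.mem_image, Set.mem_Iio]
    constructor
    · rintro ⟨⟨i, rfl⟩, hlt⟩
      exact ⟨i, by rwa [← hd, hyf.lt_iff_lt] at hlt, rfl⟩
    · rintro ⟨i, hi, rfl⟩
      exact ⟨⟨i, rfl⟩, by rw [← hd]; exact hyf hi⟩
  rw [h, Set.ncard_image_of_injective _ hyf.injective, ← Finset.coe_range,
    Set.ncard_coe_finset, Finset.card_range]

/-- Lemma (`when0`): `0 ∈ H^{c₂}(x)` iff `x ∉ X^{c₂}` and
`#{y ∈ X^{c₁} : y < x} < #{y ∈ X^{c₂} : y < x}`.  Here `yf` is the increasing enumeration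
of the empty positions `{y > −m : y ∉ X^{c₂}}` (so `y_d = yf (d-1)`), and
`H^{c₂}(x) = {x − y_d : 1 ≤ d ≤ δ(x)}`. -/
theorem stmt0 (l : ℕ) (hl : 1 ≤ l) (lam : Fin l → IntPartition) (s : Fin l → ℤ)
    (m : ℕ) (hm : 0 < m)
    (hms : ∀ c, 1 ≤ (m : ℤ) + s c)
    (hzero : ∀ c, (lam c).part (((m : ℤ) + s c).toNat - 1) = 0)
    (c₁ c₂ : Fin l) (x : ℤ) (hx : x ∈ betaFinset (lam c₁) (s c₁) m)
    (δ : ℕ)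
    (hδ : δ = Set.ncard {y : ℤ | -(m : ℤ) < y ∧ y < x ∧ y ∉ betaFinset (lam c₁) (s c₁) m})
    (yf : ℕ → ℤ) (hyf : StrictMono yf)
    (hyfr : Set.range yf = {y : ℤ | -(m : ℤ) < y ∧ y ∉ betaFinset (lam c₂) (s c₂) m}) :
    (∃ d : ℕ, d < δ ∧ x - yf d = 0) ↔
      (x ∉ betaFinset (lam c₂) (s c₂) m ∧
        Set.ncard {y : ℤ | y ∈ betaFinset (lam c₁) (s c₁) m ∧ y < x} <
          Set.ncard {y : ℤ | y ∈ betaFinset (lam c₂) (s c₂) m ∧ y < x}) := by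
  set X₁ := betaFinset (lam c₁) (s c₁) m with hX₁
  set X₂ := betaFinset (lam c₂) (s c₂) m with hX₂
  have hgt1 : ∀ y ∈ X₁, -(m : ℤ) < y := beta_mem_gt_aux _ _ _ (hms c₁)
  have hgt2 : ∀ y ∈ X₂, -(m : ℤ) < y := beta_mem_gt_aux _ _ _ (hms c₂)
  have hxm : -(m : ℤ) < x := hgt1 x hx
  have hcount1 := beta_count_aux X₁ m x hgt1
  have hcount2 := beta_count_aux X₂ m x hgt2
  -- description of the "range" set below x
  have hrset : {y : ℤ | y ∈ Set.range yf ∧ y < x} =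
      {y : ℤ | -(m : ℤ) < y ∧ y < x ∧ y ∉ X₂} := by
    ext y
    simp only [hyfr, Set.mem_setOf_eq]
    tauto
  constructor
  · rintro ⟨d, hdδ, hsub⟩
    have hdx : yf d = x := by omega
    have hxr : x ∈ Set.range yf := ⟨d, hdx⟩
    rw [hyfr] at hxr
    refine ⟨hxr.2, ?_⟩
    have hidx := index_eq_aux yf hyf d x hdx
    rw [hrset] at hidx
    omega
  · rintro ⟨hx2, hlt⟩
    have hxr : x ∈ Set.range yf := by rw [hyfr]; exact ⟨hxm, hx2⟩
    obtain ⟨d, hdx⟩ := hxr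
    have hidx := index_eq_aux yf hyf d x hdx
    rw [hrset] at hidx
    exact ⟨d, by omega, by omega⟩
end

section
/- Let l ≥ 1, let λ = (λ^0,…,λ^{l−1}) be an l-partition and let s = (s_0,…,s_{l−1}) ∈ ℤ^l with s_0 ≤ s_1 ≤ ⋯ ≤ s_{l−1}. Fix m ∈ ℤ_{>0} with m + s_c ≥ 1 and λ^c_{m+s_c} = 0 for all c, and set X^c := {λ^c_j − j + s_c + 1 : 1 ≤ j ≤ m + s_c}. For x ∈ X^c set N_0(x) := #{t : c < t ≤ l−1, x ∉ X^t}. Then the multiplicity of 0 in the multiset H(λ) of charged hook lengths equals ∑_{c=0}^{l−1} ∑_{x ∈ X^c} N_0(x). -/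
namespace Aux

open IntPartition

lemma exists_part_le (p : IntPartition) (k : ℕ) : ∃ i, p.part i ≤ k := by
  obtain ⟨N, hN⟩ := p.eventually_zero
  exact ⟨N, by simp [hN N le_rfl]⟩

lemma conj_eq_find (p : IntPartition) (k : ℕ) :
    p.conj k = Nat.find (exists_part_le p k) := by
  have h : {i : ℕ | k < p.part i} = Set.Iio (Nat.find (exists_part_le p k)) := by
    ext i
    simp only [Set.mem_setOf_eq, Set.mem_Iio]
    constructor
    · intro hi
      by_contra h
      push_neg at h
      have := p.antitone h
      have := Nat.find_spec (exists_part_le p k)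
      omega
    · intro hi
      have := Nat.find_min (exists_part_le p k) hi
      omega
  rw [conj, h, ← Finset.coe_Iio, Set.ncard_coe_finset, Nat.card_Iio]


lemma part_conj_le (p : IntPartition) (k : ℕ) : p.part (p.conj k) ≤ k := by
  rw [conj_eq_find]; exact Nat.find_spec (exists_part_le p k)

lemma lt_part_of_lt_conj (p : IntPartition) {k i : ℕ} (h : i < p.conj k) :
    k < p.part i := by
  rw [conj_eq_find] at h
  have := Nat.find_min (exists_part_le p k) h
  omega

lemma conj_le (p : IntPartition) {k c : ℕ} (h : p.part c ≤ k) : p.conj k ≤ c := by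
  rw [conj_eq_find]; exact Nat.find_le h

lemma le_conj (p : IntPartition) {k c : ℕ} (h : ∀ i < c, k < p.part i) :
    c ≤ p.conj k := by
  by_contra hc
  push_neg at hc
  have h1 := part_conj_le p k
  have h2 := h _ hc
  omega

lemma conj_anti (p : IntPartition) : Antitone p.conj := by
  intro k k' h
  exact conj_le p (le_trans (part_conj_le p k) h)

lemma beta_strictAnti (p : IntPartition) (s : ℤ) :
    StrictAnti (fun j : ℕ => (p.part j : ℤ) - j + s) := by
  intro j k h
  have := p.antitone h.le
  simp only []
  have : (p.part k : ℤ) ≤ p.part j := by exact_mod_cast this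
  have : (j : ℤ) < k := by exact_mod_cast h
  omega

/-- gap value `G_k = k + 1 - conj k + s` -/
lemma gap_strictMono (p : IntPartition) (s : ℤ) :
    StrictMono (fun k : ℕ => (k : ℤ) + 1 - p.conj k + s) := by
  apply strictMono_nat_of_lt_succ
  intro k
  have := conj_anti p (Nat.le_succ k)
  have : (p.conj (k+1) : ℤ) ≤ p.conj k := by exact_mod_cast this
  push_cast
  omega

lemma bead_ne_gap (p : IntPartition) (s : ℤ) (j k : ℕ) :
    (p.part j : ℤ) - j + s ≠ (k : ℤ) + 1 - p.conj k + s := by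
  rcases lt_or_ge k (p.part j) with h | h
  · -- conj k ≥ j+1
    have hc : j + 1 ≤ p.conj k := by
      apply le_conj
      intro i hi
      exact lt_of_lt_of_le h (p.antitone (by omega))
    have hc' : (j : ℤ) + 1 ≤ p.conj k := by exact_mod_cast hc
    have h' : (k : ℤ) + 1 ≤ p.part j := by exact_mod_cast h
    intro he; omega
  · have hc : p.conj k ≤ j := conj_le p h
    have hc' : (p.conj k : ℤ) ≤ j := by exact_mod_cast hc
    have h' : (p.part j : ℤ) ≤ k := by exact_mod_cast h
    intro he; omega

lemma exists_gap (p : IntPartition) (s : ℤ) (x : ℤ)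
    (hx : x ∉ abacusSet p s) : ∃ k : ℕ, x = (k : ℤ) + 1 - p.conj k + s := by
  simp only [abacusSet, Set.mem_setOf_eq, not_exists] at hx
  set y := x - s with hy
  have hx' : ∀ j : ℕ, y ≠ (p.part j : ℤ) - j := by
    intro j he; exact hx j (by omega)
  rcases lt_or_ge (p.part 0 : ℤ) y with h0 | h0
  · -- take k = y - 1, conj k = 0
    have hy1 : 1 ≤ y := by
      have : (0:ℤ) ≤ p.part 0 := by positivity
      omega
    set k := (y - 1).toNat with hk
    have hkz : (k : ℤ) = y - 1 := Int.toNat_of_nonneg (by omega)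
    have hconj : p.conj k = 0 := by
      have h1 : p.part 0 ≤ k := by
        have : (p.part 0 : ℤ) ≤ k := by omega
        exact_mod_cast this
      exact Nat.le_zero.mp (conj_le p h1)
    exact ⟨k, by rw [hconj]; push_cast; omega⟩
  · -- find least n with p n - n < y
    have hne : ∃ n : ℕ, (p.part n : ℤ) - n < y := by
      obtain ⟨N, hN⟩ := p.eventually_zero
      refine ⟨N + (p.part 0 - y).toNat + 1, ?_⟩
      rw [hN _ (by omega)]
      push_cast
      have : (p.part 0 : ℤ) - y ≤ ((p.part 0 - y).toNat : ℤ) := Int.self_le_toNat _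
      omega
    classical
    set n := Nat.find hne with hn
    have hns : (p.part n : ℤ) - n < y := Nat.find_spec hne
    have hn1 : n ≠ 0 := by
      intro h; rw [h] at hns; simp at hns; omega
    set i := n - 1 with hi
    have hin : i + 1 = n := by omega
    have hgi : y < (p.part i : ℤ) - i := by
      have h1 : ¬ ((p.part i : ℤ) - i < y) := Nat.find_min hne (by omega)
      have h2 := hx' i
      omega
    have hknn : 0 ≤ (i : ℤ) + y := by
      have : (0 : ℤ) ≤ p.part (i+1) := by positivity
      rw [hin] at *
      omega
    set k := ((i : ℤ) + y).toNat with hk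
    have hkz : (k : ℤ) = i + y := Int.toNat_of_nonneg hknn
    have hconj : p.conj k = i + 1 := by
      have h1 : p.part (i + 1) ≤ k := by
        rw [hin]
        have : (p.part n : ℤ) ≤ k := by omega
        exact_mod_cast this
      have h2 : ∀ i' < i + 1, k < p.part i' := by
        intro i' hi'
        have : (p.part i : ℤ) ≤ p.part i' := by
          exact_mod_cast p.antitone (by omega)
        have : (k : ℤ) < p.part i' := by omega
        exact_mod_cast this
      exact le_antisymm (conj_le p h1) (le_conj p h2)
    refine ⟨k, ?_⟩
    rw [hconj]
    push_cast
    omega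


section Beta

variable (p : IntPartition) (s : ℤ) (m : ℕ)
  (hms : 1 ≤ (m : ℤ) + s) (hz : p.part (((m : ℤ) + s).toNat - 1) = 0)

include hms hz

omit hz in
lemma M_cast : (((m : ℤ) + s).toNat : ℤ) = (m : ℤ) + s := Int.toNat_of_nonneg (by omega)

omit hms in

omit hms in
lemma part_zero : ∀ i : ℕ, ((m : ℤ) + s).toNat - 1 ≤ i → p.part i = 0 := fun i hi =>
  Nat.le_zero.mp (hz ▸ p.antitone hi)

lemma mem_beta_iff (x : ℤ) :
    x ∈ betaFinset p s m ↔ x ∈ abacusSet p s ∧ 1 - (m : ℤ) ≤ x := by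
  have hM := M_cast s m hms
  constructor
  · rintro hx
    simp only [betaFinset, Finset.mem_image, Finset.mem_range] at hx
    obtain ⟨j, hj, rfl⟩ := hx
    refine ⟨⟨j, rfl⟩, ?_⟩
    have : (j : ℤ) ≤ ((m : ℤ) + s).toNat - 1 := by omega
    have : (0:ℤ) ≤ p.part j := by positivity
    omega
  · rintro ⟨⟨j, rfl⟩, hge⟩
    simp only [betaFinset, Finset.mem_image, Finset.mem_range]
    refine ⟨j, ?_, rfl⟩
    by_contra hj
    push_neg at hj
    have h0 : p.part j = 0 := part_zero p s m hz j (by omega)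
    rw [h0] at hge
    have : (((m : ℤ) + s).toNat : ℤ) ≤ j := by exact_mod_cast hj
    simp at hge
    omega

lemma abacus_low (x : ℤ) (hx : x ≤ -(m:ℤ)) : x ∈ abacusSet p s := by
  have hM := M_cast s m hms
  refine ⟨(s - x).toNat, ?_⟩
  have h1 : (((s - x).toNat) : ℤ) = s - x := Int.toNat_of_nonneg (by omega)
  have h0 : p.part (s - x).toNat = 0 := by
    apply part_zero p s m hz
    omega
  rw [h0]
  push_cast
  omega

omit hms hz

lemma card_beta : (betaFinset p s m).card = ((m : ℤ) + s).toNat := by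
  rw [betaFinset, Finset.card_image_of_injective _ (beta_strictAnti p s).injective,
    Finset.card_range]

/-- (C1): number of beta-numbers below the `i`-th one. -/
lemma count_beta_lt (i : ℕ) (hi : i < ((m : ℤ) + s).toNat) :
    (((betaFinset p s m).filter (· < (p.part i : ℤ) - i + s)).card : ℤ)
      = (((m : ℤ) + s).toNat : ℤ) - 1 - i := by
  have he : (betaFinset p s m).filter (· < (p.part i : ℤ) - i + s)
      = (Finset.Ioo i ((m : ℤ) + s).toNat).image (fun j : ℕ => (p.part j : ℤ) - j + s) := by
    ext x
    simp only [betaFinset, Finset.mem_filter, Finset.mem_image, Finset.mem_range,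
      Finset.mem_Ioo]
    constructor
    · rintro ⟨⟨j, hj, rfl⟩, hlt⟩
      refine ⟨j, ⟨?_, hj⟩, rfl⟩
      by_contra hji
      push_neg at hji
      exact absurd hlt (not_lt.mpr ((beta_strictAnti p s).antitone hji))
    · rintro ⟨j, ⟨hij, hj⟩, rfl⟩
      exact ⟨⟨j, hj, rfl⟩, beta_strictAnti p s hij⟩
  rw [he, Finset.card_image_of_injective _ (beta_strictAnti p s).injective,
    Nat.card_Ioo]
  omega

include hms hz

lemma gap_ge (k : ℕ) : 2 - (m : ℤ) ≤ (k : ℤ) + 1 - p.conj k + s := by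
  have hM := M_cast s m hms
  have h0 : p.conj 0 ≤ ((m : ℤ) + s).toNat - 1 :=
    conj_le p (le_of_eq hz)
  have h0' : (p.conj 0 : ℤ) ≤ ((((m : ℤ) + s).toNat : ℤ) - 1) := by
    have : (((m : ℤ) + s).toNat : ℤ) - 1 = ((((m : ℤ) + s).toNat - 1 : ℕ) : ℤ) := by
      omega
    rw [this]
    exact_mod_cast h0
  have hmono := (gap_strictMono p s).monotone (Nat.zero_le k)
  simp only [Nat.cast_zero] at hmono
  omega

/-- (C2): number of beta-numbers below the `j`-th gap. -/
lemma count_beta_lt_gap (j : ℕ) :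
    (((betaFinset p s m).filter (· < (j : ℤ) + 1 - p.conj j + s)).card : ℤ)
      = ((j : ℤ) + 1 - p.conj j + s) + m - 1 - j := by
  classical
  set x := (j : ℤ) + 1 - p.conj j + s with hx
  have hxge : 2 - (m : ℤ) ≤ x := gap_ge p s m hms hz j
  have hsplit : Finset.Ico (1 - (m:ℤ)) x
      = ((betaFinset p s m).filter (· < x))
        ∪ ((Finset.range j).image (fun k : ℕ => (k : ℤ) + 1 - p.conj k + s)) := by
    ext z
    simp only [Finset.mem_Ico, Finset.mem_union, Finset.mem_filter, Finset.mem_image,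
      Finset.mem_range]
    constructor
    · rintro ⟨hz1, hz2⟩
      by_cases hab : z ∈ abacusSet p s
      · exact Or.inl ⟨(mem_beta_iff p s m hms hz z).2 ⟨hab, hz1⟩, hz2⟩
      · obtain ⟨k, rfl⟩ := exists_gap p s z hab
        refine Or.inr ⟨k, ?_, rfl⟩
        by_contra hk
        push_neg at hk
        exact absurd hz2 (not_lt.mpr ((gap_strictMono p s).monotone (by exact_mod_cast hk)))
    · rintro (⟨hmem, hlt⟩ | ⟨k, hk, rfl⟩)
      · exact ⟨((mem_beta_iff p s m hms hz z).1 hmem).2, hlt⟩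
      · exact ⟨by have := gap_ge p s m hms hz k; omega, gap_strictMono p s hk⟩
  have hdisj : Disjoint ((betaFinset p s m).filter (· < x))
      ((Finset.range j).image (fun k : ℕ => (k : ℤ) + 1 - p.conj k + s)) := by
    rw [Finset.disjoint_left]
    rintro z hz1 hz2
    simp only [Finset.mem_image, Finset.mem_range] at hz2
    obtain ⟨k, _, rfl⟩ := hz2
    have := ((mem_beta_iff p s m hms hz _).1 (Finset.mem_filter.mp hz1).1).1
    obtain ⟨j', hj'⟩ := this
    exact bead_ne_gap p s j' k (hj' ▸ rfl)
  have hcard := congrArg Finset.card hsplit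
  rw [Finset.card_union_of_disjoint hdisj,
    Finset.card_image_of_injective _ (gap_strictMono p s).injective,
    Finset.card_range, Int.card_Ico] at hcard
  have h2 : ((x - (1 - (m:ℤ))).toNat : ℤ) = x - (1 - m) := Int.toNat_of_nonneg (by omega)
  omega

end Beta


section Path

def dd (A B : Finset ℤ) (x : ℤ) : ℤ :=
  ((A.filter (· < x)).card : ℤ) - (B.filter (· < x)).card

def pstat (A B : Finset ℤ) : Prop :=
  (A.filter (fun x => dd A B x < 0)).card + (B.filter (fun x => 0 < dd A B x)).card
    = min A.card B.card

lemma dd_symm (A B : Finset ℤ) (x : ℤ) : dd B A x = - dd A B x := by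
  unfold dd; ring

lemma pstat_symm {A B : Finset ℤ} (h : pstat A B) : pstat B A := by
  unfold pstat at h ⊢
  have h1 : (B.filter (fun x => dd B A x < 0)) = (B.filter (fun x => 0 < dd A B x)) := by
    apply Finset.filter_congr; intro x _; rw [dd_symm]; constructor <;> intro <;> omega
  have h2 : (A.filter (fun x => 0 < dd B A x)) = (A.filter (fun x => dd A B x < 0)) := by
    apply Finset.filter_congr; intro x _; rw [dd_symm]; constructor <;> intro <;> omega
  rw [h1, h2, min_comm]
  omega

lemma pstat_step {A B : Finset ℤ} (hd : Disjoint A B) (z : ℤ) (hzB : z ∈ B)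
    (hmax : ∀ x ∈ A ∪ B, x ≤ z) (ih : pstat A (B.erase z)) : pstat A B := by
  unfold pstat at ih ⊢
  set B' := B.erase z with hB'
  have hcardB' : B'.card = B.card - 1 := Finset.card_erase_of_mem hzB
  have hBpos : 1 ≤ B.card := Finset.card_pos.mpr ⟨z, hzB⟩
  have hzA : z ∉ A := fun h => (Finset.disjoint_left.mp hd h) hzB
  -- all elements of A and B' are < z
  have hltA : ∀ x ∈ A, x < z := fun x hx =>
    lt_of_le_of_ne (hmax x (Finset.mem_union_left _ hx)) (fun h => hzA (h ▸ hx))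
  have hltB' : ∀ x ∈ B', x < z := fun x hx => by
    have hxB : x ∈ B := Finset.mem_of_mem_erase hx
    have hne : x ≠ z := Finset.ne_of_mem_erase hx
    exact lt_of_le_of_ne (hmax x (Finset.mem_union_right _ hxB)) hne
  -- dd with B' agrees with dd with B below (or at) z
  have hddeq : ∀ x : ℤ, x ≤ z → dd A B' x = dd A B x := by
    intro x hxz
    unfold dd
    have : B'.filter (· < x) = B.filter (· < x) := by
      rw [hB', Finset.filter_erase, Finset.erase_eq_of_notMem]
      simp only [Finset.mem_filter]
      rintro ⟨-, hlt⟩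
      omega
    rw [this]
  have hAeq : A.filter (fun x => dd A B' x < 0) = A.filter (fun x => dd A B x < 0) := by
    apply Finset.filter_congr
    intro x hx
    rw [hddeq x (hltA x hx).le]
  have hBfz : B.filter (· < z) = B' := by
    ext x
    simp only [Finset.mem_filter, hB', Finset.mem_erase]
    constructor
    · rintro ⟨hxB, hlt⟩; exact ⟨by omega, hxB⟩
    · rintro ⟨hne, hxB⟩
      exact ⟨hxB, lt_of_le_of_ne (hmax x (Finset.mem_union_right _ hxB)) hne⟩
  have hAfz : A.filter (· < z) = A := Finset.filter_true_of_mem hltA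
  have hddz : dd A B z = (A.card : ℤ) - B'.card := by
    unfold dd; rw [hBfz, hAfz]
  have hBsplit : B.filter (fun x => 0 < dd A B x)
      = if 0 < dd A B z then insert z (B'.filter (fun x => 0 < dd A B x))
        else B'.filter (fun x => 0 < dd A B x) := by
    by_cases hc : 0 < dd A B z
    · rw [if_pos hc]
      ext x
      simp only [Finset.mem_filter, Finset.mem_insert, hB', Finset.mem_erase]
      constructor
      · rintro ⟨hxB, hdx⟩
        rcases eq_or_ne x z with rfl | hne
        · exact Or.inl rfl
        · exact Or.inr ⟨⟨hne, hxB⟩, hdx⟩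
      · rintro (rfl | ⟨⟨hne, hxB⟩, hdx⟩)
        · exact ⟨hzB, hc⟩
        · exact ⟨hxB, hdx⟩
    · rw [if_neg hc]
      ext x
      simp only [Finset.mem_filter, hB', Finset.mem_erase]
      constructor
      · rintro ⟨hxB, hdx⟩
        rcases eq_or_ne x z with rfl | hne
        · exact absurd hdx hc
        · exact ⟨⟨hne, hxB⟩, hdx⟩
      · rintro ⟨⟨hne, hxB⟩, hdx⟩
        exact ⟨hxB, hdx⟩
  have hB'eq : B'.filter (fun x => 0 < dd A B x) = B'.filter (fun x => 0 < dd A B' x) := by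
    apply Finset.filter_congr
    intro x hx
    rw [hddeq x (hltB' x hx).le]
  have hznotin : z ∉ B'.filter (fun x => 0 < dd A B x) := by
    simp [hB', Finset.mem_erase]
  rw [hAeq] at ih
  by_cases hc : 0 < dd A B z
  · rw [hBsplit]
    rw [if_pos hc]
    rw [Finset.card_insert_of_notMem hznotin]
    rw [hB'eq]
    have : (B.card : ℤ) ≤ A.card := by omega
    omega
  · rw [hBsplit]
    rw [if_neg hc]
    rw [hB'eq]
    have : (A.card : ℤ) < B.card := by omega
    omega


lemma pstat_empty (A B : Finset ℤ) (h : A ∪ B = ∅) : pstat A B := by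
  rcases Finset.union_eq_empty.mp h with ⟨rfl, rfl⟩
  unfold pstat
  simp

lemma pstat_of_card (n : ℕ) : ∀ A B : Finset ℤ, Disjoint A B → (A ∪ B).card ≤ n → pstat A B := by
  induction n with
  | zero =>
    intro A B hd hc
    exact pstat_empty A B (Finset.card_eq_zero.mp (le_antisymm hc (Nat.zero_le _)))
  | succ n ih =>
    intro A B hd hc
    by_cases hne : A ∪ B = ∅
    · exact pstat_empty A B hne
    · have hnon : (A ∪ B).Nonempty := Finset.nonempty_of_ne_empty hne
      set z := (A ∪ B).max' hnon with hzdef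
      have hmax : ∀ x ∈ A ∪ B, x ≤ z := fun x hx => Finset.le_max' _ x hx
      have hzmem : z ∈ A ∪ B := (A ∪ B).max'_mem hnon
      have hcard : ((A ∪ B).erase z).card ≤ n := by
        rw [Finset.card_erase_of_mem hzmem]
        omega
      rcases Finset.mem_union.mp hzmem with hzA | hzB
      · apply pstat_symm
        apply pstat_step hd.symm z hzA (by intro x hx; exact hmax x (by rwa [Finset.union_comm]))
        apply ih _ _ (hd.symm.mono_right (Finset.erase_subset _ _))
        have hzB' : z ∉ B := fun h => (Finset.disjoint_left.mp hd hzA) h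
        calc (B ∪ A.erase z).card = ((A ∪ B).erase z).card := by
              rw [Finset.erase_union_distrib, Finset.erase_eq_of_notMem hzB',
                Finset.union_comm]
          _ ≤ n := hcard
      · apply pstat_step hd z hzB hmax
        apply ih _ _ (hd.mono_right (Finset.erase_subset _ _))
        have hzA' : z ∉ A := fun h => (Finset.disjoint_left.mp hd h) hzB
        calc (A ∪ B.erase z).card = ((A ∪ B).erase z).card := by
              rw [Finset.erase_union_distrib, Finset.erase_eq_of_notMem hzA']
          _ ≤ n := hcard

lemma pstat_all (A B : Finset ℤ) (hd : Disjoint A B) : pstat A B :=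
  pstat_of_card (A ∪ B).card A B hd le_rfl

end Path


section Pair

variable (pA pB : IntPartition) (sA sB : ℤ) (m : ℕ)

lemma d_eq (x : ℤ) :
    dd (betaFinset pA sA m \ betaFinset pB sB m) (betaFinset pB sB m \ betaFinset pA sA m) x
      = (((betaFinset pA sA m).filter (· < x)).card : ℤ)
        - ((betaFinset pB sB m).filter (· < x)).card := by
  set XA := betaFinset pA sA m
  set XB := betaFinset pB sB m
  have hA : XA.filter (· < x) = (XA \ XB).filter (· < x) ∪ (XA ∩ XB).filter (· < x) := by
    rw [← Finset.filter_union, Finset.sdiff_union_inter]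
  have hB : XB.filter (· < x) = (XB \ XA).filter (· < x) ∪ (XA ∩ XB).filter (· < x) := by
    rw [← Finset.filter_union, Finset.inter_comm, Finset.sdiff_union_inter]
  have hdA : Disjoint ((XA \ XB).filter (· < x)) ((XA ∩ XB).filter (· < x)) :=
    Finset.disjoint_filter_filter (Finset.disjoint_sdiff_inter XA XB)
  have hdB : Disjoint ((XB \ XA).filter (· < x)) ((XA ∩ XB).filter (· < x)) :=
    Finset.disjoint_filter_filter (Finset.inter_comm XA XB ▸ Finset.disjoint_sdiff_inter XB XA)
  rw [dd]
  rw [hA, hB, Finset.card_union_of_disjoint hdA, Finset.card_union_of_disjoint hdB]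
  push_cast
  ring

variable (hmsA : 1 ≤ (m : ℤ) + sA) (hzA : pA.part (((m : ℤ) + sA).toNat - 1) = 0)
  (hmsB : 1 ≤ (m : ℤ) + sB) (hzB : pB.part (((m : ℤ) + sB).toNat - 1) = 0)

include hmsA hzA hmsB hzB in
lemma cond_iff (i j : ℕ) (hi : i < ((m : ℤ) + sA).toNat)
    (hx : (pA.part i : ℤ) - i + sA = (j : ℤ) + 1 - pB.conj j + sB) :
    (j < pA.part i) ↔ dd (betaFinset pA sA m \ betaFinset pB sB m)
      (betaFinset pB sB m \ betaFinset pA sA m) ((pA.part i : ℤ) - i + sA) < 0 := by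
  have hMA := M_cast sA m hmsA
  have hC1 := count_beta_lt pA sA m i hi
  have hC2 := count_beta_lt_gap pB sB m hmsB hzB j
  rw [d_eq]
  rw [hC1, hx, hC2, ← hx]
  constructor
  · intro h
    have : (j : ℤ) < pA.part i := by exact_mod_cast h
    omega
  · intro h
    have : (j : ℤ) < pA.part i := by omega
    exact_mod_cast this

include hmsA hzA hmsB hzB in
lemma pair_count (N : ℕ) (hN1 : ((m : ℤ) + sA).toNat ≤ N) (hN2 : pA.part 0 ≤ N) :
    ((Finset.range N ×ˢ Finset.range N).filter
        (fun q : ℕ × ℕ => q.2 < pA.part q.1 ∧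
          (pA.part q.1 : ℤ) + pB.conj q.2 - q.1 - q.2 - 1 + sA - sB = 0)).card
      = ((betaFinset pA sA m \ betaFinset pB sB m).filter
          (fun x => dd (betaFinset pA sA m \ betaFinset pB sB m)
             (betaFinset pB sB m \ betaFinset pA sA m) x < 0)).card := by
  have hMA := M_cast sA m hmsA
  apply Finset.card_bij (fun q _ => (pA.part q.1 : ℤ) - q.1 + sA)
  · -- maps into target
    rintro ⟨i, j⟩ hq
    simp only [Finset.mem_filter, Finset.mem_product, Finset.mem_range] at hq
    obtain ⟨⟨hiN, hjN⟩, hnode, hch⟩ := hq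
    have hx : (pA.part i : ℤ) - i + sA = (j : ℤ) + 1 - pB.conj j + sB := by
      have h1 : (j:ℤ) < pA.part i := by exact_mod_cast hnode
      omega
    have hiM : i < ((m : ℤ) + sA).toNat := by
      by_contra hcon
      push_neg at hcon
      have : pA.part i = 0 := part_zero pA sA m hzA i (by omega)
      omega
    simp only [Finset.mem_filter]
    constructor
    · rw [Finset.mem_sdiff]
      constructor
      · simp only [betaFinset, Finset.mem_image, Finset.mem_range]
        exact ⟨i, hiM, rfl⟩
      · intro hmem
        have := ((mem_beta_iff pB sB m hmsB hzB _).1 hmem).1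
        obtain ⟨j', hj'⟩ := this
        rw [hx] at hj'
        exact bead_ne_gap pB sB j' j hj'.symm
    · exact (cond_iff pA pB sA sB m hmsA hzA hmsB hzB i j hiM hx).1 hnode
  · -- injective
    rintro ⟨i, j⟩ hq ⟨i', j'⟩ hq' heq
    simp only [Finset.mem_filter, Finset.mem_product, Finset.mem_range] at hq hq'
    have hii : i = i' := (beta_strictAnti pA sA).injective heq
    subst hii
    have hgap : (j : ℤ) + 1 - pB.conj j + sB = (j' : ℤ) + 1 - pB.conj j' + sB := by
      obtain ⟨-, hnode, hch⟩ := hq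
      obtain ⟨-, hnode', hch'⟩ := hq'
      have h1 : (j:ℤ) < pA.part i := by exact_mod_cast hnode
      have h1' : (j':ℤ) < pA.part i := by exact_mod_cast hnode'
      omega
    have := (gap_strictMono pB sB).injective hgap
    simp [this]
  · -- surjective
    intro x hx
    simp only [Finset.mem_filter, Finset.mem_sdiff] at hx
    obtain ⟨⟨hxA, hxB⟩, hdx⟩ := hx
    obtain ⟨i, hiM, rfl⟩ : ∃ i, i < ((m : ℤ) + sA).toNat ∧ (pA.part i : ℤ) - i + sA = x := by
      simp only [betaFinset, Finset.mem_image, Finset.mem_range] at hxA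
      obtain ⟨i, hi, hival⟩ := hxA
      exact ⟨i, hi, hival⟩
    have hxab : ((pA.part i : ℤ) - i + sA) ∉ abacusSet pB sB := by
      intro hab
      apply hxB
      apply (mem_beta_iff pB sB m hmsB hzB _).2
      refine ⟨hab, ?_⟩
      have hmemA : ((pA.part i : ℤ) - i + sA) ∈ betaFinset pA sA m := by
        simp only [betaFinset, Finset.mem_image, Finset.mem_range]
        exact ⟨i, hiM, rfl⟩
      have := ((mem_beta_iff pA sA m hmsA hzA _).1 hmemA).2
      omega
    obtain ⟨j, hj⟩ := exists_gap pB sB _ hxab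
    have hnode : j < pA.part i := (cond_iff pA pB sA sB m hmsA hzA hmsB hzB i j hiM hj).2 hdx
    refine ⟨⟨i, j⟩, ?_, rfl⟩
    simp only [Finset.mem_filter, Finset.mem_product, Finset.mem_range]
    refine ⟨⟨by omega, ?_⟩, hnode, ?_⟩
    · have : pA.part i ≤ pA.part 0 := pA.antitone (Nat.zero_le i)
      omega
    · have h1 : (j:ℤ) < pA.part i := by exact_mod_cast hnode
      omega

end Pair

end Aux

/-- The number of zero charged hooks of `λ^a` relative to `(λ^b, s_b)`. -/
noncomputable def zc {l : ℕ} (lam : Fin l → IntPartition) (s : Fin l → ℤ) (m : ℕ)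
    (a b : Fin l) : ℕ :=
  ((betaFinset (lam a) (s a) m \ betaFinset (lam b) (s b) m).filter
    (fun x => Aux.dd (betaFinset (lam a) (s a) m \ betaFinset (lam b) (s b) m)
       (betaFinset (lam b) (s b) m \ betaFinset (lam a) (s a) m) x < 0)).card

open Aux in
/-- The multiplicity of `0` in the multiset `H(λ)` of charged hook lengths equals
`∑_{c} ∑_{x ∈ X^c} N_0(x)`, where `N_0(x) = #{t > c : x ∉ X^t}`. -/
theorem stmt1 (l : ℕ) (hl : 1 ≤ l) (lam : Fin l → IntPartition) (s : Fin l → ℤ)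
    (hchain : ∀ c d : Fin l, c ≤ d → s c ≤ s d)
    (m : ℕ) (hm : 0 < m)
    (hms : ∀ c, 1 ≤ (m : ℤ) + s c)
    (hzero : ∀ c, (lam c).part (((m : ℤ) + s c).toNat - 1) = 0) :
    Set.ncard {x : Fin l × Fin l × ℕ × ℕ |
        x.2.2.2 < (lam x.1).part x.2.2.1 ∧
          chargedHook lam s x.1 x.2.1 x.2.2.1 x.2.2.2 = 0}
      = ∑ c : Fin l, ∑ x ∈ betaFinset (lam c) (s c) m,
          Set.ncard {t : Fin l | c < t ∧ x ∉ betaFinset (lam t) (s t) m} := by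
  classical
  set N : ℕ := Finset.univ.sup (fun a : Fin l => ((m : ℤ) + s a).toNat + (lam a).part 0)
    with hNdef
  have hNa : ∀ a : Fin l, ((m : ℤ) + s a).toNat ≤ N ∧ (lam a).part 0 ≤ N := by
    intro a
    have h := Finset.le_sup (f := fun a : Fin l => ((m : ℤ) + s a).toNat + (lam a).part 0)
      (Finset.mem_univ a)
    constructor <;> omega
  -- the LHS as a Finset card
  have hTset : {x : Fin l × Fin l × ℕ × ℕ |
        x.2.2.2 < (lam x.1).part x.2.2.1 ∧
          chargedHook lam s x.1 x.2.1 x.2.2.1 x.2.2.2 = 0}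
      = ↑((Finset.univ ×ˢ Finset.univ ×ˢ Finset.range N ×ˢ Finset.range N).filter
          (fun x : Fin l × Fin l × ℕ × ℕ => x.2.2.2 < (lam x.1).part x.2.2.1 ∧
            chargedHook lam s x.1 x.2.1 x.2.2.1 x.2.2.2 = 0)) := by
    ext ⟨a, b, i, j⟩
    simp only [Set.mem_setOf_eq, Finset.coe_filter, Finset.mem_product, Finset.mem_univ,
      Finset.mem_range, true_and]
    constructor
    · rintro ⟨hnode, hch⟩
      refine ⟨⟨?_, ?_⟩, hnode, hch⟩
      · by_contra hcon
        push_neg at hcon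
        have h0 : (lam a).part i = 0 := by
          apply part_zero (lam a) (s a) m (hzero a)
          have := (hNa a).1
          omega
        omega
      · have h1 : (lam a).part i ≤ (lam a).part 0 := (lam a).antitone (Nat.zero_le i)
        have := (hNa a).2
        omega
    · rintro ⟨-, hnode, hch⟩
      exact ⟨hnode, hch⟩
  rw [hTset, Set.ncard_coe_finset]
  -- split the card into a double sum over (a, b)
  have hsplit : ((Finset.univ ×ˢ Finset.univ ×ˢ Finset.range N ×ˢ Finset.range N).filter
          (fun x : Fin l × Fin l × ℕ × ℕ => x.2.2.2 < (lam x.1).part x.2.2.1 ∧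
            chargedHook lam s x.1 x.2.1 x.2.2.1 x.2.2.2 = 0)).card
      = ∑ a : Fin l, ∑ b : Fin l,
          ((Finset.range N ×ˢ Finset.range N).filter
            (fun q : ℕ × ℕ => q.2 < (lam a).part q.1 ∧
              chargedHook lam s a b q.1 q.2 = 0)).card := by
    rw [Finset.card_filter, Finset.sum_product]
    refine Finset.sum_congr rfl (fun a _ => ?_)
    rw [Finset.sum_product]
    refine Finset.sum_congr rfl (fun b _ => ?_)
    rw [Finset.card_filter]
  rw [hsplit]
  -- identify each summand with the abacus count
  have hpair : ∀ a b : Fin l,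
      ((Finset.range N ×ˢ Finset.range N).filter
        (fun q : ℕ × ℕ => q.2 < (lam a).part q.1 ∧
          chargedHook lam s a b q.1 q.2 = 0)).card = zc lam s m a b := by
    intro a b
    rw [zc, ← pair_count (lam a) (lam b) (s a) (s b) m (hms a) (hzero a) (hms b) (hzero b)
      N (hNa a).1 (hNa a).2]
    congr 1
  have hzaa : ∀ a : Fin l, zc lam s m a a = 0 := by
    intro a
    rw [zc]
    simp [Finset.sdiff_self]
  -- the key pairing identity
  have hkey : ∀ c t : Fin l, c < t →
      zc lam s m c t + zc lam s m t c
      = (betaFinset (lam c) (s c) m \ betaFinset (lam t) (s t) m).card := by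
    intro c t hct
    rw [zc, zc]
    set XC := betaFinset (lam c) (s c) m with hXC
    set XT := betaFinset (lam t) (s t) m with hXT
    have hd : Disjoint (XC \ XT) (XT \ XC) := disjoint_sdiff_sdiff
    have hstat := pstat_all (XC \ XT) (XT \ XC) hd
    unfold pstat at hstat
    have hflip : (XT \ XC).filter (fun x => dd (XT \ XC) (XC \ XT) x < 0)
        = (XT \ XC).filter (fun x => 0 < dd (XC \ XT) (XT \ XC) x) := by
      apply Finset.filter_congr
      intro x _
      rw [dd_symm]
      constructor <;> intro <;> omega
    rw [hflip, hstat]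
    have h1 : (XC \ XT).card + (XC ∩ XT).card = XC.card := Finset.card_sdiff_add_card_inter XC XT
    have h2 : (XT \ XC).card + (XT ∩ XC).card = XT.card := Finset.card_sdiff_add_card_inter XT XC
    have h3 : (XC ∩ XT).card = (XT ∩ XC).card := by rw [Finset.inter_comm]
    have h4 : XC.card ≤ XT.card := by
      rw [hXC, hXT, card_beta, card_beta]
      have := hchain c t hct.le
      omega
    omega
  -- transform the RHS
  have hRHS : ∀ c : Fin l,
      ∑ x ∈ betaFinset (lam c) (s c) m,
          Set.ncard {t : Fin l | c < t ∧ x ∉ betaFinset (lam t) (s t) m}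
      = ∑ t : Fin l, if c < t
          then (betaFinset (lam c) (s c) m \ betaFinset (lam t) (s t) m).card else 0 := by
    intro c
    calc ∑ x ∈ betaFinset (lam c) (s c) m,
          Set.ncard {t : Fin l | c < t ∧ x ∉ betaFinset (lam t) (s t) m}
        = ∑ x ∈ betaFinset (lam c) (s c) m,
            (Finset.univ.filter
              (fun t : Fin l => c < t ∧ x ∉ betaFinset (lam t) (s t) m)).card := by
          refine Finset.sum_congr rfl (fun x _ => ?_)
          rw [← Set.ncard_coe_finset]
          congr 1
          ext t
          simp
      _ = ∑ x ∈ betaFinset (lam c) (s c) m, ∑ t : Fin l,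
            if c < t ∧ x ∉ betaFinset (lam t) (s t) m then 1 else 0 := by
          refine Finset.sum_congr rfl (fun x _ => ?_)
          rw [Finset.card_filter]
      _ = ∑ t : Fin l, ∑ x ∈ betaFinset (lam c) (s c) m,
            if c < t ∧ x ∉ betaFinset (lam t) (s t) m then 1 else 0 := Finset.sum_comm
      _ = ∑ t : Fin l, if c < t
            then (betaFinset (lam c) (s c) m \ betaFinset (lam t) (s t) m).card else 0 := by
          refine Finset.sum_congr rfl (fun t _ => ?_)
          by_cases hct : c < t
          · simp only [hct, true_and, if_true]
            rw [Finset.sdiff_eq_filter, Finset.card_filter]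
          · simp [hct]
  -- final computation
  calc ∑ a : Fin l, ∑ b : Fin l,
        ((Finset.range N ×ˢ Finset.range N).filter
          (fun q : ℕ × ℕ => q.2 < (lam a).part q.1 ∧
            chargedHook lam s a b q.1 q.2 = 0)).card
      = ∑ a : Fin l, ∑ b : Fin l, zc lam s m a b :=
        Finset.sum_congr rfl (fun a _ => Finset.sum_congr rfl (fun b _ => hpair a b))
    _ = ∑ a : Fin l, ∑ b : Fin l,
          ((if a < b then zc lam s m a b else 0) + (if b < a then zc lam s m a b else 0)) := by
        refine Finset.sum_congr rfl (fun a _ => Finset.sum_congr rfl (fun b _ => ?_))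
        rcases lt_trichotomy a b with h | h | h
        · simp [h, not_lt.mpr h.le]
        · subst h
          simp [hzaa a]
        · simp [h, not_lt.mpr h.le]
    _ = (∑ a : Fin l, ∑ b : Fin l, if a < b then zc lam s m a b else 0)
        + (∑ a : Fin l, ∑ b : Fin l, if b < a then zc lam s m a b else 0) := by
        simp only [Finset.sum_add_distrib]
    _ = (∑ c : Fin l, ∑ t : Fin l, if c < t then zc lam s m c t else 0)
        + (∑ c : Fin l, ∑ t : Fin l, if c < t then zc lam s m t c else 0) := by
        congr 1
        exact Finset.sum_comm
    _ = ∑ c : Fin l, ∑ t : Fin l,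
          ((if c < t then zc lam s m c t else 0) + (if c < t then zc lam s m t c else 0)) := by
        simp only [Finset.sum_add_distrib]
    _ = ∑ c : Fin l, ∑ t : Fin l, if c < t
          then (betaFinset (lam c) (s c) m \ betaFinset (lam t) (s t) m).card else 0 := by
        refine Finset.sum_congr rfl (fun c _ => Finset.sum_congr rfl (fun t _ => ?_))
        by_cases hct : c < t
        · simp only [hct, if_true]
          exact hkey c t hct
        · simp [hct]
    _ = ∑ c : Fin l, ∑ x ∈ betaFinset (lam c) (s c) m,
          Set.ncard {t : Fin l | c < t ∧ x ∉ betaFinset (lam t) (s t) m} :=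
        Finset.sum_congr rfl (fun c _ => (hRHS c).symm)
end

section
/- Let l ≥ 1, e ∈ ℤ_{>1}, let λ = (λ^0,…,λ^{l−1}) be an l-partition and s = (s_0,…,s_{l−1}) ∈ ℤ^l. Then Fayers' weight equals the number of charged hook lengths divisible by e; equivalently (clearing the factor 1/2): 2·∑_{a=0}^{l−1} c_{s_a mod e}(λ) − ∑_{i ∈ ℤ/eℤ} (c_i(λ) − c_{i−1}(λ))² = 2·#{h ∈ H(λ) : h ≡ 0 (mod e)}, where the right-hand count is taken with multiplicity in the multiset H(λ). -/
/-- `resCount e lam s v` is `c_{v mod e}(λ)`: the number of nodes of the `l`-partition `λ`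
whose `s`-charged content `c − r + s_a` is congruent to `v` modulo `e`. -/
noncomputable def resCount (e : ℕ) {l : ℕ} (lam : Fin l → IntPartition) (s : Fin l → ℤ)
    (v : ℤ) : ℕ :=
  Set.ncard {x : Fin l × ℕ × ℕ | x.2.2 < (lam x.1).part x.2.1 ∧
    (e : ℤ) ∣ ((x.2.2 : ℤ) - x.2.1 + s x.1 - v)}


namespace FW

def chi (e : ℕ) (m : ℤ) : ℤ := if (e : ℤ) ∣ m then 1 else 0

lemma chi_congr {e : ℕ} {m m' : ℤ} (h : (e:ℤ) ∣ m - m') : chi e m = chi e m' := by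
  unfold chi
  by_cases h1 : (e:ℤ) ∣ m'
  · rw [if_pos h1, if_pos (by simpa using h.add h1)]
  · rw [if_neg h1, if_neg (fun h2 => h1 (by simpa using h2.sub h))]

lemma chi_neg {e : ℕ} (m : ℤ) : chi e (-m) = chi e m := by
  unfold chi
  simp [dvd_neg]

lemma chi_zero (e : ℕ) : chi e 0 = 1 := by simp [chi]

lemma chi_one {e : ℕ} (he : 1 < e) : chi e 1 = 0 := by
  have h : ¬ ((e:ℤ) ∣ 1) := by
    intro h
    have := Int.le_of_dvd one_pos h
    omega
  simp [chi, h]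

lemma chi_mul_self {e : ℕ} (m : ℤ) : chi e m * chi e m = chi e m := by
  unfold chi; split <;> simp

lemma chi_mul_succ {e : ℕ} (he : 1 < e) (m : ℤ) : chi e m * chi e (m + 1) = 0 := by
  unfold chi
  split <;> split <;> try simp
  rename_i h1 h2
  have h3 : (e:ℤ) ∣ 1 := by simpa using h2.sub h1
  have := Int.le_of_dvd one_pos h3
  omega

end FW

namespace IntPartition

/-- a bound beyond which all parts vanish -/
noncomputable def bnd (p : IntPartition) : ℕ := p.eventually_zero.choose

lemma part_eq_zero_of_bnd_le (p : IntPartition) {i : ℕ} (h : p.bnd ≤ i) : p.part i = 0 :=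
  p.eventually_zero.choose_spec i h

lemma lt_bnd_of_part_ne (p : IntPartition) {i : ℕ} (h : p.part i ≠ 0) : i < p.bnd := by
  by_contra hc
  exact h (p.part_eq_zero_of_bnd_le (by omega))

lemma conj_eq_card (p : IntPartition) (j : ℕ) :
    p.conj j = ((Finset.range p.bnd).filter (fun i => j < p.part i)).card := by
  have hs : {i : ℕ | j < p.part i} =
      ↑((Finset.range p.bnd).filter (fun i => j < p.part i)) := by
    ext i
    simp only [Set.mem_setOf_eq, Finset.coe_filter, Finset.mem_range, Set.mem_setOf_eq]
    constructor
    · intro h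
      exact ⟨p.lt_bnd_of_part_ne (by omega), h⟩
    · exact fun h => h.2
  rw [IntPartition.conj, hs, Set.ncard_coe_finset]

lemma lt_part_iff (p : IntPartition) (i j : ℕ) : j < p.part i ↔ i < p.conj j := by
  rw [conj_eq_card]
  constructor
  · intro h
    have hsub : Finset.range (i+1) ⊆ (Finset.range p.bnd).filter (fun k => j < p.part k) := by
      intro k hk
      simp only [Finset.mem_range] at hk
      have h1 : j < p.part k := lt_of_lt_of_le h (p.antitone (by omega))
      simp only [Finset.mem_filter, Finset.mem_range]
      exact ⟨p.lt_bnd_of_part_ne (by omega), h1⟩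
    have := Finset.card_le_card hsub
    simpa using this
  · intro h
    by_contra hc
    have hsub : (Finset.range p.bnd).filter (fun k => j < p.part k) ⊆ Finset.range i := by
      intro k hk
      simp only [Finset.mem_filter, Finset.mem_range] at hk ⊢
      by_contra hk2
      have : p.part k ≤ p.part i := p.antitone (by omega)
      omega
    have := Finset.card_le_card hsub
    simp only [Finset.card_range] at this
    omega

lemma conj_le_bnd (p : IntPartition) (j : ℕ) : p.conj j ≤ p.bnd := by
  rw [conj_eq_card]
  exact le_trans (Finset.card_filter_le _ _) (by simp)

lemma conj_eq_zero (p : IntPartition) {j : ℕ} (h : p.part 0 ≤ j) : p.conj j = 0 := by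
  by_contra hc
  have h2 := (p.lt_part_iff 0 j).mpr (by omega)
  omega

lemma conj_antitone (p : IntPartition) : Antitone p.conj := by
  intro j j' h
  by_contra hc
  push_neg at hc
  have h1 : j' < p.part (p.conj j) := (p.lt_part_iff _ _).mpr hc
  have h2 : p.conj j < p.conj j := (p.lt_part_iff _ _).mp (by omega)
  omega

lemma part_zero_eq_zero_iff (p : IntPartition) : p.part 0 = 0 ↔ ∀ i, p.part i = 0 := by
  constructor
  · intro h i
    have := p.antitone (Nat.zero_le i)
    omega
  · intro h; exact h 0

end IntPartition


namespace FW

open Finset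

noncomputable def Bt (p : IntPartition) (s : ℤ) (i : ℕ) : ℤ := (p.part i : ℤ) - i + s

noncomputable def Zb (p : IntPartition) (s : ℤ) (j : ℕ) : ℤ := (j : ℤ) + 1 - p.conj j + s

/-- count of nodes with content ≡ t, as a finite double sum -/
noncomputable def cntF (e : ℕ) (p : IntPartition) (s t : ℤ) : ℤ :=
  ∑ i ∈ range p.bnd, ∑ j ∈ range (p.part i), chi e ((j:ℤ) - i + s - t)

/-- count of hooks of (p, q) divisible by e -/
noncomputable def NhF (e : ℕ) (p q : IntPartition) (sp sq : ℤ) : ℤ :=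
  ∑ i ∈ range p.bnd, ∑ j ∈ range (p.part i), chi e (Bt p sp i - Zb q sq j)

/-- sums of row-wise node data are independent of the bound -/
lemma rowsum_ext (p : IntPartition) {A : ℕ} (hA : p.bnd ≤ A) (f : ℕ → ℕ → ℤ) :
    ∑ i ∈ range A, ∑ j ∈ range (p.part i), f i j
      = ∑ i ∈ range p.bnd, ∑ j ∈ range (p.part i), f i j := by
  symm
  apply Finset.sum_subset (by simp [Finset.range_subset, hA]; intro x hx; omega)
  intro i _ hi
  simp only [Finset.mem_range, not_lt] at hi
  rw [p.part_eq_zero_of_bnd_le hi]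
  simp

lemma cntF_eq (e : ℕ) (p : IntPartition) (s t : ℤ) {A : ℕ} (hA : p.bnd ≤ A) :
    cntF e p s t = ∑ i ∈ range A, ∑ j ∈ range (p.part i), chi e ((j:ℤ) - i + s - t) :=
  (rowsum_ext p hA _).symm

lemma NhF_eq (e : ℕ) (p q : IntPartition) (sp sq : ℤ) {A : ℕ} (hA : p.bnd ≤ A) :
    NhF e p q sp sq = ∑ i ∈ range A, ∑ j ∈ range (p.part i), chi e (Bt p sp i - Zb q sq j) :=
  (rowsum_ext p hA _).symm

/-- row-column swap -/
lemma rowsum_eq_colsum (p : IntPartition) {A A' : ℕ} (hA : p.bnd ≤ A) (hA' : p.part 0 ≤ A')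
    (f : ℕ → ℕ → ℤ) :
    ∑ i ∈ range A, ∑ j ∈ range (p.part i), f i j
      = ∑ j ∈ range A', ∑ i ∈ range (p.conj j), f i j := by
  have key : ∀ (i : ℕ), ∑ j ∈ range (p.part i), f i j
      = ∑ j ∈ range A', if j < p.part i then f i j else 0 := by
    intro i
    rw [Finset.sum_ite, Finset.sum_const_zero, add_zero]
    congr 1
    ext j
    simp only [Finset.mem_filter, Finset.mem_range]
    constructor
    · intro h
      exact ⟨lt_of_lt_of_le (lt_of_lt_of_le h (p.antitone (Nat.zero_le i))) hA', h⟩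
    · exact fun h => h.2
  have key2 : ∀ (j : ℕ), ∑ i ∈ range (p.conj j), f i j
      = ∑ i ∈ range A, if j < p.part i then f i j else 0 := by
    intro i
    rw [Finset.sum_ite, Finset.sum_const_zero, add_zero]
    congr 1
    ext j
    simp only [Finset.mem_filter, Finset.mem_range]
    rw [p.lt_part_iff]
    constructor
    · intro h
      exact ⟨lt_of_lt_of_le h (le_trans (p.conj_le_bnd _) hA), h⟩
    · exact fun h => h.2
  simp only [key, key2]
  exact Finset.sum_comm

lemma cntF_col (e : ℕ) (p : IntPartition) (s t : ℤ) {A' : ℕ} (hA' : p.part 0 ≤ A') :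
    cntF e p s t = ∑ j ∈ range A', ∑ i ∈ range (p.conj j), chi e ((j:ℤ) - i + s - t) :=
  rowsum_eq_colsum p le_rfl hA' _

/-- periodicity of cntF in t -/
lemma cntF_congr (e : ℕ) (p : IntPartition) (s : ℤ) {t t' : ℤ} (h : (e:ℤ) ∣ t - t') :
    cntF e p s t = cntF e p s t' := by
  unfold cntF
  refine Finset.sum_congr rfl fun i _ => Finset.sum_congr rfl fun j _ => ?_
  apply chi_congr
  have : (j:ℤ) - i + s - t - ((j:ℤ) - i + s - t') = t' - t := by ring
  rw [this]
  exact (dvd_sub_comm.mp h)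

end FW

namespace FW

open Finset

lemma chi_arg (e : ℕ) {x y : ℤ} (h : x = y) : chi e x = chi e y := by rw [h]

/-- Difference contribution `Δ₁`. -/
noncomputable def D1 (e : ℕ) (q : IntPartition) (sq t : ℤ) (c : ℕ) : ℤ :=
  (∑ j ∈ range (c+1), chi e (Zb q sq j - t - 1)) - ∑ j ∈ range c, chi e (Zb q sq j - t)

/-- Difference contribution `Δ₂`. -/
noncomputable def D2 (e : ℕ) (q : IntPartition) (sq t : ℤ) (c : ℕ) : ℤ :=
  ∑ i ∈ range (q.conj c), (chi e (Bt q sq i - t) - chi e (Bt q sq i - t - 1))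

lemma Fc_succ (e : ℕ) (q : IntPartition) (sq t : ℤ) (c : ℕ) :
    D1 e q sq t (c+1) + D2 e q sq t (c+1) = D1 e q sq t c + D2 e q sq t c := by
  set K' := q.conj (c+1) with hK'
  set K := q.conj c with hK
  have hKK : K' ≤ K := q.conj_antitone (by omega)
  set w : ℕ → ℤ := fun i => chi e (Bt q sq i - t) - chi e (Bt q sq i - t - 1) with hw
  set g : ℕ → ℤ := fun i => chi e ((c:ℤ) + 1 + sq - t - i) with hg
  have hIco : ∑ i ∈ Finset.Ico K' K, w i = g K' - g K := by
    have hpart : ∀ i ∈ Finset.Ico K' K, w i = g i - g (i+1) := by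
      intro i hi
      simp only [Finset.mem_Ico] at hi
      have h1 : c < q.part i := (q.lt_part_iff i c).mpr hi.2
      have h2 : ¬ (c + 1 < q.part i) := fun h => by
        have := (q.lt_part_iff i (c+1)).mp h; omega
      have hpi : q.part i = c + 1 := by omega
      simp only [hw, hg, Bt, hpi]
      push_cast
      rw [chi_arg e (show (c:ℤ) + 1 - (i:ℤ) + sq - t - 1 = (c:ℤ) + 1 + sq - t - ((i:ℤ)+1) by ring),
          chi_arg e (show (c:ℤ) + 1 - (i:ℤ) + sq - t = (c:ℤ) + 1 + sq - t - (i:ℤ) by ring)]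
    rw [Finset.sum_congr rfl hpart, Finset.sum_Ico_eq_sum_range]
    calc ∑ i ∈ range (K - K'), (g (K' + i) - g (K' + i + 1))
        = ∑ i ∈ range (K - K'), ((fun i => g (K' + i)) i - (fun i => g (K' + i)) (i+1)) := by
          apply Finset.sum_congr rfl
          intro i _
          have : K' + i + 1 = K' + (i + 1) := by omega
          rw [this]
      _ = g (K' + 0) - g (K' + (K - K')) := Finset.sum_range_sub' _ _
      _ = g K' - g K := by
          have e1 : K' + 0 = K' := by omega
          have e2 : K' + (K - K') = K := by omega
          rw [e1, e2]
  have hsplit : ∑ i ∈ range K, w i = (∑ i ∈ range K', w i) + ∑ i ∈ Finset.Ico K' K, w i := by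
    have h := Finset.sum_Ico_consecutive w (Nat.zero_le K') hKK
    rw [← Finset.range_eq_Ico, ← Finset.range_eq_Ico] at h
    exact h.symm
  have hD2 : D2 e q sq t (c+1) = D2 e q sq t c - (g K' - g K) := by
    unfold D2
    rw [← hK', ← hK, hsplit, hIco]
    ring
  have hD1 : D1 e q sq t (c+1)
      = D1 e q sq t c + (chi e (Zb q sq (c+1) - t - 1) - chi e (Zb q sq c - t)) := by
    unfold D1
    rw [Finset.sum_range_succ (fun j => chi e (Zb q sq j - t - 1)) (c+1),
        Finset.sum_range_succ (fun j => chi e (Zb q sq j - t)) c]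
    ring
  have hZ1 : Zb q sq (c+1) - t - 1 = (c:ℤ) + 1 + sq - t - K' := by
    simp only [Zb, hK']
    push_cast
    ring
  have hZ2 : Zb q sq c - t = (c:ℤ) + 1 + sq - t - K := by
    simp only [Zb, hK]
    push_cast
    ring
  rw [hD1, hD2, chi_arg e hZ1, chi_arg e hZ2]
  simp only [hg]
  ring

lemma Fc_ge (e : ℕ) (q : IntPartition) (sq t : ℤ) {C : ℕ} (hC : q.part 0 ≤ C) :
    D1 e q sq t C + D2 e q sq t C
      = chi e (sq - t) + cntF e q sq (t+1) + cntF e q sq (t-1) - 2 * cntF e q sq t := by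
  have hconjC : q.conj C = 0 := q.conj_eq_zero hC
  have hD2 : D2 e q sq t C = 0 := by
    unfold D2; rw [hconjC]; simp
  have hZC : Zb q sq C - t - 1 = (C:ℤ) + sq - t := by
    simp only [Zb, hconjC]; push_cast; ring
  have hD1 : D1 e q sq t C
      = (∑ j ∈ range C, (chi e (Zb q sq j - t - 1) - chi e (Zb q sq j - t)))
        + chi e ((C:ℤ) + sq - t) := by
    unfold D1
    rw [Finset.sum_range_succ (fun j => chi e (Zb q sq j - t - 1)) C, chi_arg e hZC,
        Finset.sum_sub_distrib]
    ring
  have hcols : cntF e q sq (t+1) + cntF e q sq (t-1) - 2 * cntF e q sq t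
      = ∑ j ∈ range C, ((chi e ((j:ℤ) + 1 + sq - t) - chi e ((j:ℤ) + sq - t))
          + (chi e (Zb q sq j - t - 1) - chi e (Zb q sq j - t))) := by
    rw [cntF_col e q sq (t+1) hC, cntF_col e q sq (t-1) hC, cntF_col e q sq t hC,
        ← Finset.sum_add_distrib, Finset.mul_sum, ← Finset.sum_sub_distrib]
    apply Finset.sum_congr rfl
    intro j _
    set K := q.conj j with hKdef
    set h : ℕ → ℤ := fun i => chi e ((j:ℤ) + sq - t + 1 - i) - chi e ((j:ℤ) + sq - t - i) with hh
    have inner : ∑ i ∈ range K, chi e ((j:ℤ) - i + sq - (t+1))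
          + ∑ i ∈ range K, chi e ((j:ℤ) - i + sq - (t-1))
          - 2 * ∑ i ∈ range K, chi e ((j:ℤ) - i + sq - t)
        = h 0 - h K := by
      calc ∑ i ∈ range K, chi e ((j:ℤ) - i + sq - (t+1))
            + ∑ i ∈ range K, chi e ((j:ℤ) - i + sq - (t-1))
            - 2 * ∑ i ∈ range K, chi e ((j:ℤ) - i + sq - t)
          = ∑ i ∈ range K, (chi e ((j:ℤ) - i + sq - (t+1)) + chi e ((j:ℤ) - i + sq - (t-1))
              - 2 * chi e ((j:ℤ) - i + sq - t)) := by
            rw [← Finset.sum_add_distrib, Finset.mul_sum, ← Finset.sum_sub_distrib]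
        _ = ∑ i ∈ range K, (h i - h (i+1)) := by
            apply Finset.sum_congr rfl
            intro i _
            simp only [hh]
            push_cast
            rw [chi_arg e (show (j:ℤ) - i + sq - (t+1) = (j:ℤ) + sq - t - i - 1 by ring),
                chi_arg e (show (j:ℤ) - i + sq - (t-1) = (j:ℤ) + sq - t + 1 - i by ring),
                chi_arg e (show (j:ℤ) + sq - t + 1 - ((i:ℤ)+1) = (j:ℤ) + sq - t - i by ring),
                chi_arg e (show (j:ℤ) + sq - t - ((i:ℤ)+1) = (j:ℤ) + sq - t - i - 1 by ring)]
            ring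
        _ = h 0 - h K := Finset.sum_range_sub' h K
    rw [inner]
    simp only [hh]
    rw [chi_arg e (show (j:ℤ) + sq - t + 1 - (K:ℤ) = Zb q sq j - t by
          simp only [Zb, hKdef]; push_cast; ring),
        chi_arg e (show (j:ℤ) + sq - t - (K:ℤ) = Zb q sq j - t - 1 by
          simp only [Zb, hKdef]; push_cast; ring),
        chi_arg e (show (j:ℤ) + sq - t + 1 - ((0:ℕ):ℤ) = (j:ℤ) + 1 + sq - t by push_cast; ring),
        chi_arg e (show (j:ℤ) + sq - t - ((0:ℕ):ℤ) = (j:ℤ) + sq - t by push_cast; ring)]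
    ring
  have hsplit2 : ∑ j ∈ range C, ((chi e ((j:ℤ) + 1 + sq - t) - chi e ((j:ℤ) + sq - t))
          + (chi e (Zb q sq j - t - 1) - chi e (Zb q sq j - t)))
      = (∑ j ∈ range C, (chi e ((j:ℤ) + 1 + sq - t) - chi e ((j:ℤ) + sq - t)))
        + ∑ j ∈ range C, (chi e (Zb q sq j - t - 1) - chi e (Zb q sq j - t)) :=
    Finset.sum_add_distrib
  have htel : ∑ j ∈ range C, (chi e ((j:ℤ) + 1 + sq - t) - chi e ((j:ℤ) + sq - t))
      = chi e ((C:ℤ) + sq - t) - chi e (sq - t) := by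
    calc ∑ j ∈ range C, (chi e ((j:ℤ) + 1 + sq - t) - chi e ((j:ℤ) + sq - t))
        = ∑ j ∈ range C, ((fun j : ℕ => chi e ((j:ℤ) + sq - t)) (j+1)
            - (fun j : ℕ => chi e ((j:ℤ) + sq - t)) j) := by
          apply Finset.sum_congr rfl
          intro j _
          rw [chi_arg e (show (j:ℤ) + 1 + sq - t = (((j:ℕ)+1:ℕ):ℤ) + sq - t by push_cast; ring)]
      _ = chi e ((C:ℤ) + sq - t) - chi e (((0:ℕ):ℤ) + sq - t) :=
          Finset.sum_range_sub (fun j : ℕ => chi e ((j:ℤ) + sq - t)) C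
      _ = chi e ((C:ℤ) + sq - t) - chi e (sq - t) := by
          rw [chi_arg e (show ((0:ℕ):ℤ) + sq - t = sq - t by push_cast; ring)]
  linarith [hD1, hD2, hcols, hsplit2, htel]

/-- The key single-partition identity. -/
lemma star (e : ℕ) (q : IntPartition) (sq t : ℤ) (c : ℕ) :
    D1 e q sq t c + D2 e q sq t c
      = chi e (sq - t) + cntF e q sq (t+1) + cntF e q sq (t-1) - 2 * cntF e q sq t := by
  have key : ∀ k, D1 e q sq t (c + k) + D2 e q sq t (c + k) = D1 e q sq t c + D2 e q sq t c := by
    intro k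
    induction k with
    | zero => rfl
    | succ n ih => rw [show c + (n+1) = (c + n) + 1 by omega, Fc_succ]; exact ih
  rw [← key (q.part 0)]
  exact Fc_ge e q sq t (by omega)

end FW

namespace FW

open Finset

lemma sum_if_lt_part (W : IntPartition) {M : ℕ} (hM : W.bnd ≤ M) (v : ℕ → ℤ) (c : ℕ) :
    ∑ i ∈ range M, (if c < W.part i then v i else 0) = ∑ i ∈ range (W.conj c), v i := by
  rw [Finset.sum_ite, Finset.sum_const_zero, add_zero]
  apply Finset.sum_congr _ (fun _ _ => rfl)
  ext i
  simp only [Finset.mem_filter, Finset.mem_range]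
  rw [W.lt_part_iff]
  constructor
  · exact fun h => h.2
  · intro h
    exact ⟨lt_of_lt_of_le h (le_trans (W.conj_le_bnd _) hM), h⟩

/-- index of the last nonzero part -/
noncomputable def lastRow (p : IntPartition) : ℕ := Nat.findGreatest (fun i => p.part i ≠ 0) p.bnd

lemma lastRow_part_ne (p : IntPartition) (hp0 : p.part 0 ≠ 0) : p.part (lastRow p) ≠ 0 :=
  Nat.findGreatest_spec (P := fun i => p.part i ≠ 0) (Nat.zero_le p.bnd) hp0

lemma part_eq_zero_of_lastRow_lt (p : IntPartition) {i : ℕ} (hi : lastRow p < i) :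
    p.part i = 0 := by
  by_cases h : i ≤ p.bnd
  · by_contra hc
    exact Nat.findGreatest_is_greatest (P := fun i => p.part i ≠ 0) hi h hc
  · exact p.part_eq_zero_of_bnd_le (by omega)

/-- removing the corner node at the end of the last nonzero row -/
noncomputable def remCorner (p : IntPartition) : IntPartition where
  part := fun i => if i = lastRow p then p.part (lastRow p) - 1 else p.part i
  antitone := by
    intro i i' hii'
    by_cases h1 : i = lastRow p <;> by_cases h2 : i' = lastRow p <;>
      simp only [h1, h2, if_pos, if_neg, ite_true, ite_false]
    · omega
    · -- i = lastRow, i' ≠ lastRow, i ≤ i' so lastRow < i'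
      have hlt : lastRow p < i' := by omega
      rw [part_eq_zero_of_lastRow_lt p hlt]
      omega
    · have : p.part (lastRow p) ≤ p.part i := p.antitone (by omega)
      omega
    · exact p.antitone hii'
  eventually_zero := by
    obtain ⟨N, hN⟩ := p.eventually_zero
    refine ⟨N + lastRow p + 1, fun i hi => ?_⟩
    have : p.part i = 0 := hN i (by omega)
    simp only [this]
    split
    · omega
    · rfl

lemma remCorner_part_ne (p : IntPartition) (i : ℕ) (hi : i ≠ lastRow p) :
    (remCorner p).part i = p.part i := by
  simp only [remCorner, if_neg hi]

lemma remCorner_part_eq (p : IntPartition) :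
    (remCorner p).part (lastRow p) = p.part (lastRow p) - 1 := by
  simp only [remCorner, if_pos]

/-- the removed column index -/
noncomputable def remCol (p : IntPartition) : ℕ := p.part (lastRow p) - 1

lemma part_lastRow (p : IntPartition) (hp0 : p.part 0 ≠ 0) :
    p.part (lastRow p) = remCol p + 1 := by
  have := lastRow_part_ne p hp0
  unfold remCol
  omega

lemma conj_remCol (p : IntPartition) (hp0 : p.part 0 ≠ 0) :
    p.conj (remCol p) = lastRow p + 1 := by
  have h1 : lastRow p < p.conj (remCol p) :=
    (p.lt_part_iff _ _).mp (by rw [part_lastRow p hp0]; omega)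
  have h2 : ¬ (lastRow p + 1 < p.conj (remCol p)) := by
    intro h
    have := (p.lt_part_iff (lastRow p + 1) (remCol p)).mpr h
    rw [part_eq_zero_of_lastRow_lt p (by omega)] at this
    omega
  omega

lemma remCorner_conj_remCol (p : IntPartition) (hp0 : p.part 0 ≠ 0) :
    (remCorner p).conj (remCol p) = lastRow p := by
  have h2 : ¬ (lastRow p < (remCorner p).conj (remCol p)) := by
    intro h
    have h3 := ((remCorner p).lt_part_iff (lastRow p) (remCol p)).mpr h
    rw [remCorner_part_eq] at h3
    have := part_lastRow p hp0
    omega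
  rcases Nat.eq_zero_or_pos (lastRow p) with h0 | h0
  · omega
  · have h1 : lastRow p - 1 < (remCorner p).conj (remCol p) := by
      rw [← (remCorner p).lt_part_iff]
      rw [remCorner_part_ne p _ (by omega)]
      have hle : p.part (lastRow p) ≤ p.part (lastRow p - 1) := p.antitone (by omega)
      have := part_lastRow p hp0
      omega
    omega

lemma remCorner_conj (p : IntPartition) (hp0 : p.part 0 ≠ 0) (j : ℕ) (hj : j ≠ remCol p) :
    (remCorner p).conj j = p.conj j := by
  unfold IntPartition.conj
  congr 1
  ext i
  simp only [Set.mem_setOf_eq]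
  by_cases hir : i = lastRow p
  · subst hir
    rw [remCorner_part_eq]
    have := part_lastRow p hp0
    unfold remCol at hj
    omega
  · rw [remCorner_part_ne p i hir]

end FW

namespace FW

open Finset

lemma sum_sub_single {M r : ℕ} (hr : r < M) (A B : ℕ → ℤ)
    (h : ∀ i, i ≠ r → A i = B i) :
    ∑ i ∈ range M, A i - ∑ i ∈ range M, B i = A r - B r := by
  rw [← Finset.sum_sub_distrib]
  apply Finset.sum_eq_single_of_mem r (Finset.mem_range.mpr hr)
  intro b _ hb
  rw [h b hb]
  ring

section step

variable (e : ℕ) (p : IntPartition) (sa : ℤ)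

/-- the content of the removed node -/
noncomputable def remT (p : IntPartition) (sa : ℤ) : ℤ := (remCol p : ℤ) - lastRow p + sa

lemma Bt_p_r (hp0 : p.part 0 ≠ 0) : Bt p sa (lastRow p) = remT p sa + 1 := by
  rw [Bt, part_lastRow p hp0, remT]
  push_cast
  ring

lemma Bt_q_r (hp0 : p.part 0 ≠ 0) : Bt (remCorner p) sa (lastRow p) = remT p sa := by
  rw [Bt, remCorner_part_eq, part_lastRow p hp0, Nat.add_sub_cancel, remT]

lemma Bt_q_eq (i : ℕ) (hi : i ≠ lastRow p) : Bt (remCorner p) sa i = Bt p sa i := by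
  rw [Bt, Bt, remCorner_part_ne p i hi]

lemma Zb_p_c (hp0 : p.part 0 ≠ 0) : Zb p sa (remCol p) = remT p sa := by
  rw [Zb, conj_remCol p hp0, remT]
  push_cast
  ring

lemma Zb_q_c (hp0 : p.part 0 ≠ 0) : Zb (remCorner p) sa (remCol p) = remT p sa + 1 := by
  rw [Zb, remCorner_conj_remCol p hp0, remT]
  push_cast
  ring

lemma Zb_q_eq (hp0 : p.part 0 ≠ 0) (j : ℕ) (hj : j ≠ remCol p) :
    Zb (remCorner p) sa j = Zb p sa j := by
  rw [Zb, Zb, remCorner_conj p hp0 j hj]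

/-- (S1): removing the corner changes the content count by an indicator -/
lemma cnt_step (hp0 : p.part 0 ≠ 0) (v : ℤ) :
    cntF e p sa v = cntF e (remCorner p) sa v + chi e (remT p sa - v) := by
  have hrM : lastRow p < max p.bnd (remCorner p).bnd := by
    have := p.lt_bnd_of_part_ne (lastRow_part_ne p hp0)
    omega
  rw [cntF_eq e p sa v (le_max_left p.bnd (remCorner p).bnd),
      cntF_eq e (remCorner p) sa v (le_max_right p.bnd (remCorner p).bnd)]
  have key : (∑ i ∈ range (max p.bnd (remCorner p).bnd),
        ∑ j ∈ range (p.part i), chi e ((j:ℤ) - i + sa - v))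
      - (∑ i ∈ range (max p.bnd (remCorner p).bnd),
        ∑ j ∈ range ((remCorner p).part i), chi e ((j:ℤ) - i + sa - v))
      = (∑ j ∈ range (p.part (lastRow p)), chi e ((j:ℤ) - lastRow p + sa - v))
        - ∑ j ∈ range ((remCorner p).part (lastRow p)), chi e ((j:ℤ) - lastRow p + sa - v) := by
    apply sum_sub_single hrM
    intro i hi
    show (∑ j ∈ range (p.part i), chi e ((j:ℤ) - i + sa - v))
        = ∑ j ∈ range ((remCorner p).part i), chi e ((j:ℤ) - i + sa - v)
    rw [remCorner_part_ne p i hi]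
  have hr : (∑ j ∈ range (p.part (lastRow p)), chi e ((j:ℤ) - lastRow p + sa - v))
      - (∑ j ∈ range ((remCorner p).part (lastRow p)), chi e ((j:ℤ) - lastRow p + sa - v))
      = chi e (remT p sa - v) := by
    rw [remCorner_part_eq, part_lastRow p hp0, Nat.add_sub_cancel, Finset.sum_range_succ,
        chi_arg e (show ((remCol p : ℤ)) - lastRow p + sa - v = remT p sa - v by
          rw [remT])]
    try ring
  rw [hr] at key
  linarith [key]

/-- (S2): row-type hook change -/
lemma NhF_row_step (hp0 : p.part 0 ≠ 0) (W : IntPartition) (sW : ℤ) :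
    NhF e p W sa sW = NhF e (remCorner p) W sa sW + D1 e W sW (remT p sa) (remCol p) := by
  have hrM : lastRow p < max p.bnd (remCorner p).bnd := by
    have := p.lt_bnd_of_part_ne (lastRow_part_ne p hp0)
    omega
  rw [NhF_eq e p W sa sW (le_max_left p.bnd (remCorner p).bnd),
      NhF_eq e (remCorner p) W sa sW (le_max_right p.bnd (remCorner p).bnd)]
  have key : (∑ i ∈ range (max p.bnd (remCorner p).bnd),
        ∑ j ∈ range (p.part i), chi e (Bt p sa i - Zb W sW j))
      - (∑ i ∈ range (max p.bnd (remCorner p).bnd),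
        ∑ j ∈ range ((remCorner p).part i), chi e (Bt (remCorner p) sa i - Zb W sW j))
      = (∑ j ∈ range (p.part (lastRow p)), chi e (Bt p sa (lastRow p) - Zb W sW j))
        - ∑ j ∈ range ((remCorner p).part (lastRow p)),
            chi e (Bt (remCorner p) sa (lastRow p) - Zb W sW j) := by
    apply sum_sub_single hrM
    intro i hi
    show (∑ j ∈ range (p.part i), chi e (Bt p sa i - Zb W sW j))
        = ∑ j ∈ range ((remCorner p).part i), chi e (Bt (remCorner p) sa i - Zb W sW j)
    rw [remCorner_part_ne p i hi]
    exact Finset.sum_congr rfl (fun j _ => by rw [Bt_q_eq p sa i hi])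
  have hr : (∑ j ∈ range (p.part (lastRow p)), chi e (Bt p sa (lastRow p) - Zb W sW j))
      - (∑ j ∈ range ((remCorner p).part (lastRow p)),
          chi e (Bt (remCorner p) sa (lastRow p) - Zb W sW j))
      = D1 e W sW (remT p sa) (remCol p) := by
    rw [remCorner_part_eq, part_lastRow p hp0, Nat.add_sub_cancel, Bt_p_r p sa hp0,
        Bt_q_r p sa hp0, D1]
    have h1 : ∀ j : ℕ, chi e (remT p sa + 1 - Zb W sW j)
        = chi e (Zb W sW j - remT p sa - 1) := fun j => by
      rw [chi_arg e (show remT p sa + 1 - Zb W sW j = -(Zb W sW j - remT p sa - 1) by ring),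
          chi_neg]
    have h2 : ∀ j : ℕ, chi e (remT p sa - Zb W sW j)
        = chi e (Zb W sW j - remT p sa) := fun j => by
      rw [chi_arg e (show remT p sa - Zb W sW j = -(Zb W sW j - remT p sa) by ring), chi_neg]
    rw [Finset.sum_congr rfl (fun j _ => h1 j), Finset.sum_congr rfl (fun j _ => h2 j)]
  rw [hr] at key
  linarith [key]

/-- (S3): column-type hook change -/
lemma NhF_col_step (hp0 : p.part 0 ≠ 0) (W : IntPartition) (sW : ℤ) :
    NhF e W p sW sa = NhF e W (remCorner p) sW sa + D2 e W sW (remT p sa) (remCol p) := by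
  rw [NhF, NhF, ← sub_eq_iff_eq_add', ← Finset.sum_sub_distrib]
  have inner : ∀ i, ((∑ j ∈ range (W.part i), chi e (Bt W sW i - Zb p sa j))
        - ∑ j ∈ range (W.part i), chi e (Bt W sW i - Zb (remCorner p) sa j))
      = if remCol p < W.part i
          then (chi e (Bt W sW i - remT p sa) - chi e (Bt W sW i - remT p sa - 1)) else 0 := by
    intro i
    rw [← Finset.sum_sub_distrib]
    have hterm : ∀ j, chi e (Bt W sW i - Zb p sa j) - chi e (Bt W sW i - Zb (remCorner p) sa j)
        = if j = remCol p
            then (chi e (Bt W sW i - remT p sa) - chi e (Bt W sW i - remT p sa - 1)) else 0 := by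
      intro j
      by_cases hjc : j = remCol p
      · subst hjc
        rw [if_pos rfl, Zb_p_c p sa hp0, Zb_q_c p sa hp0,
            chi_arg e (show Bt W sW i - (remT p sa + 1) = Bt W sW i - remT p sa - 1 by ring)]
      · rw [if_neg hjc, Zb_q_eq p sa hp0 j hjc]
        ring
    rw [Finset.sum_congr rfl (fun j _ => hterm j),
        Finset.sum_ite_eq' (range (W.part i)) (remCol p)
          (fun _ => chi e (Bt W sW i - remT p sa) - chi e (Bt W sW i - remT p sa - 1))]
    simp only [Finset.mem_range]
  rw [Finset.sum_congr rfl (fun i _ => inner i), sum_if_lt_part W le_rfl _ (remCol p)]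
  rfl

/-- (S4): diagonal pair -/
lemma NhF_diag_step (he : 1 < e) (hp0 : p.part 0 ≠ 0) :
    NhF e p p sa sa = NhF e (remCorner p) (remCorner p) sa sa
      + D1 e (remCorner p) sa (remT p sa) (remCol p)
      + D2 e (remCorner p) sa (remT p sa) (remCol p) - 1 := by
  have h1 : NhF e p p sa sa = NhF e (remCorner p) p sa sa + D1 e p sa (remT p sa) (remCol p) :=
    NhF_row_step e p sa hp0 p sa
  have h2 : NhF e (remCorner p) p sa sa = NhF e (remCorner p) (remCorner p) sa sa
      + D2 e (remCorner p) sa (remT p sa) (remCol p) :=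
    NhF_col_step e p sa hp0 (remCorner p) sa
  have h3 : D1 e p sa (remT p sa) (remCol p) = D1 e (remCorner p) sa (remT p sa) (remCol p) - 1 := by
    rw [D1, D1]
    have hfirst : (∑ j ∈ range (remCol p + 1), chi e (Zb p sa j - remT p sa - 1))
        - (∑ j ∈ range (remCol p + 1), chi e (Zb (remCorner p) sa j - remT p sa - 1))
        = chi e (Zb p sa (remCol p) - remT p sa - 1)
          - chi e (Zb (remCorner p) sa (remCol p) - remT p sa - 1) := by
      apply sum_sub_single (by omega)
      intro j hj
      show chi e (Zb p sa j - remT p sa - 1) = chi e (Zb (remCorner p) sa j - remT p sa - 1)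
      rw [Zb_q_eq p sa hp0 j hj]
    have hsecond : (∑ j ∈ range (remCol p), chi e (Zb p sa j - remT p sa))
        = ∑ j ∈ range (remCol p), chi e (Zb (remCorner p) sa j - remT p sa) := by
      apply Finset.sum_congr rfl
      intro j hj
      simp only [Finset.mem_range] at hj
      rw [Zb_q_eq p sa hp0 j (by omega)]
    rw [Zb_p_c p sa hp0, Zb_q_c p sa hp0,
        chi_arg e (show remT p sa - remT p sa - 1 = -1 by ring), chi_neg, chi_one he,
        chi_arg e (show remT p sa + 1 - remT p sa - 1 = 0 by ring), chi_zero] at hfirst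
    rw [hsecond]
    linarith [hfirst]
  rw [h1, h2, h3]
  ring

end step

end FW

namespace FW

open Finset

lemma pick_lemma {e : ℕ} (he : 0 < e) (f : ℤ → ℤ)
    (hf : ∀ v w : ℤ, (e:ℤ) ∣ v - w → f v = f w) (t : ℤ) :
    ∑ v ∈ range e, chi e (t - (v:ℤ)) * f (v:ℤ) = f t := by
  have hepos : (0:ℤ) < e := by exact_mod_cast he
  set v0 : ℕ := (t % (e:ℤ)).toNat with hv0
  have hmod0 : (0:ℤ) ≤ t % e := Int.emod_nonneg t (by omega)
  have hmodlt : t % (e:ℤ) < e := Int.emod_lt_of_pos t hepos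
  have hv0cast : (v0 : ℤ) = t % e := Int.toNat_of_nonneg hmod0
  have hv0mem : v0 ∈ range e := by
    rw [Finset.mem_range]
    omega
  have hdvd0 : (e:ℤ) ∣ t - v0 := by
    rw [hv0cast]
    have := Int.emod_emod_of_dvd t (dvd_refl (e:ℤ))
    exact Int.dvd_self_sub_of_emod_eq rfl
  rw [Finset.sum_eq_single_of_mem v0 hv0mem]
  · rw [show chi e (t - (v0:ℤ)) = 1 from by rw [chi]; exact if_pos hdvd0, one_mul]
    exact (hf t v0 hdvd0).symm
  · intro v hv hne
    have hvlt : v < e := Finset.mem_range.mp hv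
    have hchi : chi e (t - (v:ℤ)) = 0 := by
      rw [chi, if_neg]
      intro hdvd
      have hd2 : (e:ℤ) ∣ ((v:ℤ) - v0) := by
        have : ((v:ℤ) - v0) = (t - v0) - (t - v) := by ring
        rw [this]
        exact dvd_sub hdvd0 hdvd
      have hne2 : ((v:ℤ) - v0) ≠ 0 := by
        intro h0
        apply hne
        have : (v:ℤ) = v0 := by omega
        exact_mod_cast this
      have habs : (e:ℤ) ∣ |(v:ℤ) - v0| := (dvd_abs _ _).mpr hd2
      have hle := Int.le_of_dvd (abs_pos.mpr hne2) habs
      have h1 : (v:ℤ) < e := by exact_mod_cast hvlt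
      have h2 : (v0:ℤ) < e := by omega
      have h3 : (0:ℤ) ≤ v := Int.ofNat_nonneg v
      have h4 : (0:ℤ) ≤ v0 := Int.ofNat_nonneg v0
      rcases abs_cases ((v:ℤ) - v0) with ⟨ha, _⟩ | ⟨ha, _⟩ <;> omega
    rw [hchi, zero_mul]

lemma pick_one {e : ℕ} (he : 0 < e) (t : ℤ) :
    ∑ v ∈ range e, chi e (t - (v:ℤ)) = 1 := by
  have := pick_lemma he (fun _ => (1:ℤ)) (fun _ _ _ => rfl) t
  simpa using this

/-- the change in the square-sum when one count is incremented at residue `t` -/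
lemma sq_step {e : ℕ} (he : 1 < e) (f : ℤ → ℤ)
    (hf : ∀ v w : ℤ, (e:ℤ) ∣ v - w → f v = f w) (t : ℤ) :
    ∑ v ∈ range e, ((f (v:ℤ) + chi e (t - (v:ℤ))) - (f ((v:ℤ)-1) + chi e (t - (v:ℤ) + 1)))^2
      = (∑ v ∈ range e, (f (v:ℤ) - f ((v:ℤ)-1))^2)
        + 2*(f t - f (t-1)) - 2*(f (t+1) - f t) + 2 := by
  have hper : ∀ v w : ℤ, (e:ℤ) ∣ v - w → (f v - f (v-1)) = (f w - f (w-1)) := by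
    intro v w h
    have h2 : v - 1 - (w-1) = v - w := by ring
    rw [hf v w h, hf (v-1) (w-1) (by rw [h2]; exact h)]
  have expand : ∀ v : ℕ, ((f (v:ℤ) + chi e (t - (v:ℤ))) - (f ((v:ℤ)-1) + chi e (t - (v:ℤ) + 1)))^2
      = (f (v:ℤ) - f ((v:ℤ)-1))^2
        + 2 * (chi e (t - (v:ℤ)) * (f (v:ℤ) - f ((v:ℤ)-1)))
        - 2 * (chi e (t - (v:ℤ) + 1) * (f (v:ℤ) - f ((v:ℤ)-1)))
        + (chi e (t - (v:ℤ)) + chi e (t - (v:ℤ) + 1))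
        - 2 * (chi e (t - (v:ℤ)) * chi e (t - (v:ℤ) + 1)) := by
    intro v
    have h1 : chi e (t - (v:ℤ)) * chi e (t - (v:ℤ)) = chi e (t - (v:ℤ)) := chi_mul_self _
    have h2 : chi e (t - (v:ℤ) + 1) * chi e (t - (v:ℤ) + 1) = chi e (t - (v:ℤ) + 1) :=
      chi_mul_self _
    nlinarith [h1, h2]
  rw [Finset.sum_congr rfl (fun v _ => expand v)]
  rw [Finset.sum_sub_distrib, Finset.sum_add_distrib, Finset.sum_sub_distrib,
      Finset.sum_add_distrib, Finset.sum_add_distrib]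
  rw [← Finset.mul_sum, ← Finset.mul_sum, ← Finset.mul_sum]
  have e1 : ∑ v ∈ range e, chi e (t - (v:ℤ)) * (f (v:ℤ) - f ((v:ℤ)-1)) = f t - f (t-1) :=
    pick_lemma (by omega) (fun v => f v - f (v-1)) hper t
  have e2 : ∑ v ∈ range e, chi e (t - (v:ℤ) + 1) * (f (v:ℤ) - f ((v:ℤ)-1)) = f (t+1) - f t := by
    have hh := pick_lemma (e := e) (by omega) (fun v => f v - f (v-1)) hper (t+1)
    simp only [show t + 1 - 1 = t by ring] at hh
    rw [← hh]
    exact Finset.sum_congr rfl (fun v _ => by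
      rw [chi_arg e (show t - (v:ℤ) + 1 = t + 1 - (v:ℤ) by ring)])
  have e3 : ∑ v ∈ range e, chi e (t - (v:ℤ)) = 1 := pick_one (by omega) t
  have e4 : ∑ v ∈ range e, chi e (t - (v:ℤ) + 1) = 1 := by
    calc ∑ v ∈ range e, chi e (t - (v:ℤ) + 1)
        = ∑ v ∈ range e, chi e (t + 1 - (v:ℤ)) :=
          Finset.sum_congr rfl (fun v _ =>
            chi_arg e (show t - (v:ℤ) + 1 = t + 1 - (v:ℤ) by ring))
      _ = 1 := pick_one (by omega) (t+1)
  have e5 : ∑ v ∈ range e, chi e (t - (v:ℤ)) * chi e (t - (v:ℤ) + 1) = 0 := by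
    rw [Finset.sum_eq_zero]
    intro v _
    exact chi_mul_succ he _
  rw [e1, e2, e3, e4, e5]
  ring

end FW

namespace FW

open Finset

noncomputable def psize (p : IntPartition) : ℕ := ∑ i ∈ range p.bnd, p.part i

lemma psize_eq (p : IntPartition) {A : ℕ} (hA : p.bnd ≤ A) :
    psize p = ∑ i ∈ range A, p.part i := by
  apply Finset.sum_subset (by simp [Finset.range_subset, hA]; intro x hx; omega)
  intro i _ hi
  simp only [Finset.mem_range, not_lt] at hi
  exact p.part_eq_zero_of_bnd_le hi

lemma part0_of_psize (p : IntPartition) (h : psize p = 0) : p.part 0 = 0 := by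
  by_contra hc
  have hb : 0 < p.bnd := p.lt_bnd_of_part_ne hc
  have hle : p.part 0 ≤ ∑ i ∈ range p.bnd, p.part i :=
    Finset.single_le_sum (f := p.part) (fun i _ => Nat.zero_le _) (Finset.mem_range.mpr hb)
  unfold psize at h
  omega

lemma cntF_zero (e : ℕ) (p : IntPartition) (sp t : ℤ) (h : p.part 0 = 0) :
    cntF e p sp t = 0 := by
  unfold cntF
  apply Finset.sum_eq_zero
  intro i _
  rw [(p.part_zero_eq_zero_iff).mp h i]
  simp

lemma NhF_zero (e : ℕ) (p q : IntPartition) (sp sq : ℤ) (h : p.part 0 = 0) :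
    NhF e p q sp sq = 0 := by
  unfold NhF
  apply Finset.sum_eq_zero
  intro i _
  rw [(p.part_zero_eq_zero_iff).mp h i]
  simp

lemma psize_rem (p : IntPartition) (hp0 : p.part 0 ≠ 0) :
    psize p = psize (remCorner p) + 1 := by
  have hrM : lastRow p < max p.bnd (remCorner p).bnd := by
    have := p.lt_bnd_of_part_ne (lastRow_part_ne p hp0)
    omega
  rw [psize_eq p (le_max_left p.bnd (remCorner p).bnd),
      psize_eq (remCorner p) (le_max_right p.bnd (remCorner p).bnd)]
  have hpt : ∀ i ∈ range (max p.bnd (remCorner p).bnd),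
      p.part i = (remCorner p).part i + (if i = lastRow p then 1 else 0) := by
    intro i _
    by_cases hi : i = lastRow p
    · subst hi
      rw [if_pos rfl, remCorner_part_eq, part_lastRow p hp0]
      omega
    · rw [if_neg hi, remCorner_part_ne p i hi]
      omega
  rw [Finset.sum_congr rfl hpt, Finset.sum_add_distrib]
  have hone : (∑ i ∈ range (max p.bnd (remCorner p).bnd),
      if i = lastRow p then 1 else 0) = 1 := by
    rw [Finset.sum_ite_eq' (range (max p.bnd (remCorner p).bnd)) (lastRow p) (fun _ => 1),
        if_pos (Finset.mem_range.mpr hrM)]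
  omega

section multi

variable (e : ℕ) {l : ℕ}

noncomputable def Ctot (lam : Fin l → IntPartition) (s : Fin l → ℤ) (v : ℤ) : ℤ :=
  ∑ b, cntF e (lam b) (s b) v

noncomputable def RHSF (lam : Fin l → IntPartition) (s : Fin l → ℤ) : ℤ :=
  ∑ x, ∑ y, NhF e (lam x) (lam y) (s x) (s y)

noncomputable def msize (lam : Fin l → IntPartition) : ℕ := ∑ b, psize (lam b)

lemma Ctot_congr (lam : Fin l → IntPartition) (s : Fin l → ℤ) {v w : ℤ}
    (h : (e:ℤ) ∣ v - w) : Ctot e lam s v = Ctot e lam s w :=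
  Finset.sum_congr rfl (fun b _ => cntF_congr e (lam b) (s b) h)

variable (lam : Fin l → IntPartition) (s : Fin l → ℤ) (a : Fin l)

lemma msize_update (hp0 : (lam a).part 0 ≠ 0) :
    msize lam = msize (Function.update lam a (remCorner (lam a))) + 1 := by
  unfold msize
  have hpt : ∀ b : Fin l, psize (lam b)
      = psize (Function.update lam a (remCorner (lam a)) b) + (if b = a then 1 else 0) := by
    intro b
    by_cases hb : b = a
    · subst hb
      rw [if_pos rfl, Function.update_self]
      exact psize_rem (lam b) hp0
    · rw [if_neg hb, Function.update_of_ne hb]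
      omega
  rw [Finset.sum_congr rfl (fun b _ => hpt b), Finset.sum_add_distrib]
  have hone : (∑ b : Fin l, if b = a then 1 else 0) = 1 := by
    rw [Finset.sum_ite_eq' Finset.univ a (fun _ => 1), if_pos (Finset.mem_univ a)]
  omega

lemma Ctot_step (hp0 : (lam a).part 0 ≠ 0) (v : ℤ) :
    Ctot e lam s v = Ctot e (Function.update lam a (remCorner (lam a))) s v
      + chi e (remT (lam a) (s a) - v) := by
  unfold Ctot
  have hpt : ∀ b : Fin l, cntF e (lam b) (s b) v
      = cntF e (Function.update lam a (remCorner (lam a)) b) (s b) v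
        + (if b = a then chi e (remT (lam a) (s a) - v) else 0) := by
    intro b
    by_cases hb : b = a
    · subst hb
      rw [if_pos rfl, Function.update_self]
      exact cnt_step e (lam b) (s b) hp0 v
    · rw [if_neg hb, Function.update_of_ne hb, add_zero]
  rw [Finset.sum_congr rfl (fun b _ => hpt b), Finset.sum_add_distrib]
  have hone : (∑ b : Fin l, if b = a then chi e (remT (lam a) (s a) - v) else 0)
      = chi e (remT (lam a) (s a) - v) := by
    rw [Finset.sum_ite_eq' Finset.univ a (fun _ => chi e (remT (lam a) (s a) - v)),
        if_pos (Finset.mem_univ a)]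
  rw [hone]

lemma RHSF_step (he : 1 < e) (hp0 : (lam a).part 0 ≠ 0) :
    RHSF e lam s = RHSF e (Function.update lam a (remCorner (lam a))) s
      + (∑ b, (D1 e (Function.update lam a (remCorner (lam a)) b) (s b)
                  (remT (lam a) (s a)) (remCol (lam a))
             + D2 e (Function.update lam a (remCorner (lam a)) b) (s b)
                  (remT (lam a) (s a)) (remCol (lam a)))) - 1 := by
  have hpt : ∀ x y : Fin l, NhF e (lam x) (lam y) (s x) (s y)
      = NhF e (Function.update lam a (remCorner (lam a)) x)
            (Function.update lam a (remCorner (lam a)) y) (s x) (s y)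
        + ((if x = a then D1 e (Function.update lam a (remCorner (lam a)) y) (s y)
              (remT (lam a) (s a)) (remCol (lam a)) else 0)
          + ((if y = a then D2 e (Function.update lam a (remCorner (lam a)) x) (s x)
              (remT (lam a) (s a)) (remCol (lam a)) else 0)
            - (if x = a ∧ y = a then 1 else 0))) := by
    intro x y
    by_cases hx : x = a <;> by_cases hy : y = a
    · rw [hx, hy, if_pos rfl, if_pos rfl, if_pos ⟨rfl, rfl⟩, Function.update_self]
      have hd := NhF_diag_step e (lam a) (s a) he hp0
      linarith [hd]
    · rw [hx, if_pos rfl, if_neg hy, if_neg (by tauto), Function.update_self,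
          Function.update_of_ne hy]
      have hd := NhF_row_step e (lam a) (s a) hp0 (lam y) (s y)
      linarith [hd]
    · rw [hy, if_neg hx, if_pos rfl, if_neg (by tauto), Function.update_self,
          Function.update_of_ne hx]
      have hd := NhF_col_step e (lam a) (s a) hp0 (lam x) (s x)
      linarith [hd]
    · rw [if_neg hx, if_neg hy, if_neg (by tauto), Function.update_of_ne hx,
          Function.update_of_ne hy]
      ring
  unfold RHSF
  rw [Finset.sum_congr rfl (fun x _ => Finset.sum_congr rfl (fun y _ => hpt x y))]
  have hinner : ∀ x : Fin l,
      ∑ y : Fin l, (NhF e (Function.update lam a (remCorner (lam a)) x)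
            (Function.update lam a (remCorner (lam a)) y) (s x) (s y)
        + ((if x = a then D1 e (Function.update lam a (remCorner (lam a)) y) (s y)
              (remT (lam a) (s a)) (remCol (lam a)) else 0)
          + ((if y = a then D2 e (Function.update lam a (remCorner (lam a)) x) (s x)
              (remT (lam a) (s a)) (remCol (lam a)) else 0)
            - (if x = a ∧ y = a then 1 else 0))))
      = (∑ y : Fin l, NhF e (Function.update lam a (remCorner (lam a)) x)
            (Function.update lam a (remCorner (lam a)) y) (s x) (s y))
        + ((if x = a then ∑ y : Fin l, D1 e (Function.update lam a (remCorner (lam a)) y) (s y)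
              (remT (lam a) (s a)) (remCol (lam a)) else 0)
          + (D2 e (Function.update lam a (remCorner (lam a)) x) (s x)
              (remT (lam a) (s a)) (remCol (lam a))
            - (if x = a then 1 else 0))) := by
    intro x
    rw [Finset.sum_add_distrib, Finset.sum_add_distrib, Finset.sum_sub_distrib]
    congr 1
    congr 1
    · by_cases hx : x = a <;> simp [hx]
    · congr 1
      · rw [Finset.sum_ite_eq' Finset.univ a
          (fun _ => D2 e (Function.update lam a (remCorner (lam a)) x) (s x)
            (remT (lam a) (s a)) (remCol (lam a))), if_pos (Finset.mem_univ a)]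
      · by_cases hx : x = a <;> simp [hx]
  rw [Finset.sum_congr rfl (fun x _ => hinner x)]
  rw [Finset.sum_add_distrib, Finset.sum_add_distrib, Finset.sum_sub_distrib]
  rw [Finset.sum_ite_eq' Finset.univ a
      (fun _ => ∑ y : Fin l, D1 e (Function.update lam a (remCorner (lam a)) y) (s y)
        (remT (lam a) (s a)) (remCol (lam a))), if_pos (Finset.mem_univ a)]
  rw [Finset.sum_ite_eq' Finset.univ a (fun _ => (1:ℤ)), if_pos (Finset.mem_univ a)]
  rw [Finset.sum_add_distrib]
  ring

end multi

end FW

namespace FW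

open Finset

theorem mainF (e : ℕ) (he : 1 < e) :
    ∀ (n : ℕ) {l : ℕ} (lam : Fin l → IntPartition) (s : Fin l → ℤ), msize lam = n →
    2 * (∑ x, Ctot e lam s (s x))
      - (∑ v ∈ range e, (Ctot e lam s (v:ℤ) - Ctot e lam s ((v:ℤ) - 1))^2)
      = 2 * RHSF e lam s := by
  intro n
  induction n using Nat.strong_induction_on with
  | _ n IH =>
    intro l lam s hsz
    by_cases hall : ∀ b, (lam b).part 0 = 0
    · have hC : ∀ v : ℤ, Ctot e lam s v = 0 := fun v =>
        Finset.sum_eq_zero (fun b _ => cntF_zero e _ _ _ (hall b))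
      have hR : RHSF e lam s = 0 :=
        Finset.sum_eq_zero (fun x _ => Finset.sum_eq_zero (fun y _ =>
          NhF_zero e _ _ _ _ (hall x)))
      rw [hR]
      have h1 : ∑ x, Ctot e lam s (s x) = 0 := Finset.sum_eq_zero (fun x _ => hC (s x))
      have h2 : ∑ v ∈ range e, (Ctot e lam s (v:ℤ) - Ctot e lam s ((v:ℤ) - 1))^2 = 0 :=
        Finset.sum_eq_zero (fun v _ => by rw [hC, hC]; ring)
      rw [h1, h2]
      ring
    · push_neg at hall
      obtain ⟨a, ha⟩ := hall
      have hm := msize_update lam a ha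
      have hn1 : 1 ≤ n := by omega
      have hsz' : msize (Function.update lam a (remCorner (lam a))) = n - 1 := by omega
      have ih := IH (n-1) (by omega) (Function.update lam a (remCorner (lam a))) s hsz'
      have hper : ∀ v w : ℤ, (e:ℤ) ∣ v - w →
          Ctot e (Function.update lam a (remCorner (lam a))) s v
            = Ctot e (Function.update lam a (remCorner (lam a))) s w :=
        fun v w h => Ctot_congr e _ s h
      have h1 : ∑ x, Ctot e lam s (s x)
          = (∑ x, Ctot e (Function.update lam a (remCorner (lam a))) s (s x))
            + ∑ x, chi e (remT (lam a) (s a) - s x) := by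
        rw [← Finset.sum_add_distrib]
        exact Finset.sum_congr rfl (fun x _ => Ctot_step e lam s a ha (s x))
      have h2 : ∑ v ∈ range e, (Ctot e lam s (v:ℤ) - Ctot e lam s ((v:ℤ) - 1))^2
          = ∑ v ∈ range e,
              ((Ctot e (Function.update lam a (remCorner (lam a))) s (v:ℤ)
                  + chi e (remT (lam a) (s a) - (v:ℤ)))
                - (Ctot e (Function.update lam a (remCorner (lam a))) s ((v:ℤ)-1)
                  + chi e (remT (lam a) (s a) - (v:ℤ) + 1)))^2 := by
        apply Finset.sum_congr rfl
        intro v _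
        rw [Ctot_step e lam s a ha (v:ℤ), Ctot_step e lam s a ha ((v:ℤ)-1),
            chi_arg e (show remT (lam a) (s a) - ((v:ℤ)-1)
              = remT (lam a) (s a) - (v:ℤ) + 1 by ring)]
      have h3 := sq_step he (fun v => Ctot e (Function.update lam a (remCorner (lam a))) s v)
        hper (remT (lam a) (s a))
      have hstar : ∑ b, (D1 e (Function.update lam a (remCorner (lam a)) b) (s b)
                  (remT (lam a) (s a)) (remCol (lam a))
             + D2 e (Function.update lam a (remCorner (lam a)) b) (s b)
                  (remT (lam a) (s a)) (remCol (lam a)))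
          = (∑ b, chi e (s b - remT (lam a) (s a)))
            + Ctot e (Function.update lam a (remCorner (lam a))) s (remT (lam a) (s a) + 1)
            + Ctot e (Function.update lam a (remCorner (lam a))) s (remT (lam a) (s a) - 1)
            - 2 * Ctot e (Function.update lam a (remCorner (lam a))) s (remT (lam a) (s a)) := by
        rw [Finset.sum_congr rfl (fun b _ =>
          star e (Function.update lam a (remCorner (lam a)) b) (s b)
            (remT (lam a) (s a)) (remCol (lam a)))]
        rw [Finset.sum_sub_distrib, Finset.sum_add_distrib, Finset.sum_add_distrib,
            ← Finset.mul_sum]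
        rfl
      have hchi : ∑ x, chi e (s x - remT (lam a) (s a))
          = ∑ x, chi e (remT (lam a) (s a) - s x) := by
        apply Finset.sum_congr rfl
        intro x _
        rw [chi_arg e (show s x - remT (lam a) (s a)
            = -(remT (lam a) (s a) - s x) by ring), chi_neg]
      have hR := RHSF_step e lam s a he ha
      linarith [h1, h2, h3, hstar, hchi, hR, ih]

end FW

namespace FW

open Finset

lemma chargedHook_eq {l : ℕ} (lam : Fin l → IntPartition) (s : Fin l → ℤ)
    (a b : Fin l) (i j : ℕ) :
    chargedHook lam s a b i j = Bt (lam a) (s a) i - Zb (lam b) (s b) j := by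
  unfold chargedHook hookLen Bt Zb
  push_cast
  ring

lemma sum_range_if {B K : ℕ} (hK : K ≤ B) (g : ℕ → ℤ) :
    ∑ j ∈ range B, (if j < K then g j else 0) = ∑ j ∈ range K, g j := by
  rw [Finset.sum_ite, Finset.sum_const_zero, add_zero]
  apply Finset.sum_congr _ (fun _ _ => rfl)
  ext j
  simp only [Finset.mem_filter, Finset.mem_range]
  omega

/-- global bound for an `l`-multipartition -/
noncomputable def BB {l : ℕ} (lam : Fin l → IntPartition) : ℕ :=
  1 + ∑ b, ((lam b).bnd + (lam b).part 0)

lemma bnd_le_BB {l : ℕ} (lam : Fin l → IntPartition) (b : Fin l) : (lam b).bnd ≤ BB lam := by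
  have h1 : (lam b).bnd + (lam b).part 0 ≤ ∑ x : Fin l, ((lam x).bnd + (lam x).part 0) :=
    Finset.single_le_sum (f := fun x : Fin l => (lam x).bnd + (lam x).part 0)
      (fun i _ => Nat.zero_le _) (Finset.mem_univ b)
  unfold BB
  omega

lemma part_le_BB {l : ℕ} (lam : Fin l → IntPartition) (b : Fin l) :
    (lam b).part 0 ≤ BB lam := by
  have h1 : (lam b).bnd + (lam b).part 0 ≤ ∑ x : Fin l, ((lam x).bnd + (lam x).part 0) :=
    Finset.single_le_sum (f := fun x : Fin l => (lam x).bnd + (lam x).part 0)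
      (fun i _ => Nat.zero_le _) (Finset.mem_univ b)
  unfold BB
  omega

lemma inner_double (e : ℕ) {l : ℕ} (lam : Fin l → IntPartition) (b : Fin l) (g : ℕ → ℕ → ℤ) :
    ∑ i ∈ range (BB lam), ∑ j ∈ range (BB lam),
        (if j < (lam b).part i then g i j else 0)
      = ∑ i ∈ range (BB lam), ∑ j ∈ range ((lam b).part i), g i j := by
  apply Finset.sum_congr rfl
  intro i _
  have hK : (lam b).part i ≤ BB lam :=
    le_trans ((lam b).antitone (Nat.zero_le i)) (part_le_BB lam b)
  exact sum_range_if hK _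

lemma resCount_eq (e : ℕ) {l : ℕ} (lam : Fin l → IntPartition) (s : Fin l → ℤ) (v : ℤ) :
    (resCount e lam s v : ℤ) = Ctot e lam s v := by
  classical
  have hset : {x : Fin l × ℕ × ℕ | x.2.2 < (lam x.1).part x.2.1 ∧
        (e : ℤ) ∣ ((x.2.2 : ℤ) - x.2.1 + s x.1 - v)}
      = ↑(((univ : Finset (Fin l)) ×ˢ (range (BB lam) ×ˢ range (BB lam))).filter
          (fun x => x.2.2 < (lam x.1).part x.2.1 ∧
            (e : ℤ) ∣ ((x.2.2 : ℤ) - x.2.1 + s x.1 - v))) := by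
    ext x
    simp only [Set.mem_setOf_eq, Finset.coe_filter, Set.mem_setOf_eq, Finset.mem_product,
      Finset.mem_univ, Finset.mem_range, true_and]
    constructor
    · intro h
      refine ⟨⟨?_, ?_⟩, h⟩
      · have : (lam x.1).part x.2.1 ≠ 0 := by omega
        exact lt_of_lt_of_le ((lam x.1).lt_bnd_of_part_ne this) (bnd_le_BB lam x.1)
      · have h2 : (lam x.1).part x.2.1 ≤ (lam x.1).part 0 := (lam x.1).antitone (Nat.zero_le _)
        have h3 := part_le_BB lam x.1
        omega
    · exact fun h => h.2
  rw [resCount, hset, Set.ncard_coe_finset, Finset.card_filter]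
  push_cast
  rw [Finset.sum_product _ _ _]
  have hpt : ∀ (b : Fin l) (y : ℕ × ℕ),
      (if y.2 < (lam b).part y.1 ∧ (e : ℤ) ∣ ((y.2 : ℤ) - y.1 + s b - v) then (1:ℤ) else 0)
      = (if y.2 < (lam b).part y.1 then chi e ((y.2 : ℤ) - y.1 + s b - v) else 0) := by
    intro b y
    by_cases h1 : y.2 < (lam b).part y.1
    · by_cases h2 : (e : ℤ) ∣ ((y.2 : ℤ) - y.1 + s b - v)
      · rw [if_pos ⟨h1, h2⟩, if_pos h1, chi, if_pos h2]
      · rw [if_neg (by tauto), if_pos h1, chi, if_neg h2]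
    · rw [if_neg (by tauto), if_neg h1]
  have hb : ∀ b : Fin l,
      (∑ y ∈ range (BB lam) ×ˢ range (BB lam),
        if y.2 < (lam b).part y.1 ∧ (e : ℤ) ∣ ((y.2 : ℤ) - y.1 + s b - v) then (1:ℤ) else 0)
      = cntF e (lam b) (s b) v := by
    intro b
    rw [Finset.sum_congr rfl (fun y _ => hpt b y), Finset.sum_product _ _ _]
    rw [inner_double e lam b (fun i j => chi e ((j:ℤ) - i + s b - v))]
    exact (cntF_eq e (lam b) (s b) v (bnd_le_BB lam b)).symm
  rw [Finset.sum_congr rfl (fun b _ => hb b)]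
  rfl

lemma hookcount_eq (e : ℕ) {l : ℕ} (lam : Fin l → IntPartition) (s : Fin l → ℤ) :
    ((Set.ncard {x : Fin l × Fin l × ℕ × ℕ |
        x.2.2.2 < (lam x.1).part x.2.2.1 ∧
          (e : ℤ) ∣ chargedHook lam s x.1 x.2.1 x.2.2.1 x.2.2.2} : ℕ) : ℤ)
      = RHSF e lam s := by
  classical
  have hset : {x : Fin l × Fin l × ℕ × ℕ |
        x.2.2.2 < (lam x.1).part x.2.2.1 ∧
          (e : ℤ) ∣ chargedHook lam s x.1 x.2.1 x.2.2.1 x.2.2.2}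
      = ↑(((univ : Finset (Fin l)) ×ˢ ((univ : Finset (Fin l))
            ×ˢ (range (BB lam) ×ˢ range (BB lam)))).filter
          (fun x => x.2.2.2 < (lam x.1).part x.2.2.1 ∧
            (e : ℤ) ∣ chargedHook lam s x.1 x.2.1 x.2.2.1 x.2.2.2)) := by
    ext x
    simp only [Set.mem_setOf_eq, Finset.coe_filter, Set.mem_setOf_eq, Finset.mem_product,
      Finset.mem_univ, Finset.mem_range, true_and]
    constructor
    · intro h
      refine ⟨⟨?_, ?_⟩, h⟩
      · have : (lam x.1).part x.2.2.1 ≠ 0 := by omega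
        exact lt_of_lt_of_le ((lam x.1).lt_bnd_of_part_ne this) (bnd_le_BB lam x.1)
      · have h2 : (lam x.1).part x.2.2.1 ≤ (lam x.1).part 0 :=
          (lam x.1).antitone (Nat.zero_le _)
        have h3 := part_le_BB lam x.1
        omega
    · exact fun h => h.2
  rw [hset, Set.ncard_coe_finset, Finset.card_filter]
  push_cast
  rw [Finset.sum_product _ _ _]
  have hab : ∀ (a : Fin l) (y : Fin l × ℕ × ℕ),
      (if y.2.2 < (lam a).part y.2.1 ∧
          (e : ℤ) ∣ chargedHook lam s a y.1 y.2.1 y.2.2 then (1:ℤ) else 0)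
      = (if y.2.2 < (lam a).part y.2.1
          then chi e (Bt (lam a) (s a) y.2.1 - Zb (lam y.1) (s y.1) y.2.2) else 0) := by
    intro a y
    rw [chargedHook_eq lam s a y.1 y.2.1 y.2.2]
    by_cases h1 : y.2.2 < (lam a).part y.2.1
    · by_cases h2 : (e : ℤ) ∣ (Bt (lam a) (s a) y.2.1 - Zb (lam y.1) (s y.1) y.2.2)
      · rw [if_pos ⟨h1, h2⟩, if_pos h1, chi, if_pos h2]
      · rw [if_neg (by tauto), if_pos h1, chi, if_neg h2]
    · rw [if_neg (by tauto), if_neg h1]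
  have ha : ∀ a : Fin l,
      (∑ y ∈ (univ : Finset (Fin l)) ×ˢ (range (BB lam) ×ˢ range (BB lam)),
        if y.2.2 < (lam a).part y.2.1 ∧
          (e : ℤ) ∣ chargedHook lam s a y.1 y.2.1 y.2.2 then (1:ℤ) else 0)
      = ∑ b, NhF e (lam a) (lam b) (s a) (s b) := by
    intro a
    rw [Finset.sum_congr rfl (fun y _ => hab a y), Finset.sum_product _ _ _]
    apply Finset.sum_congr rfl
    intro b _
    rw [Finset.sum_product _ _ _]
    rw [inner_double e lam a (fun i j => chi e (Bt (lam a) (s a) i - Zb (lam b) (s b) j))]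
    exact (NhF_eq e (lam a) (lam b) (s a) (s b) (bnd_le_BB lam a)).symm
  rw [Finset.sum_congr rfl (fun a _ => ha a)]
  rfl

end FW

/-- Fayers' weight (doubled, to clear the factor 1/2) equals twice the number of charged hook
lengths in `H(λ)` divisible by `e`. -/
theorem stmt3 (l : ℕ) (hl : 1 ≤ l) (e : ℕ) (he : 1 < e)
    (lam : Fin l → IntPartition) (s : Fin l → ℤ) :
    2 * ∑ a : Fin l, (resCount e lam s (s a) : ℤ)
      - ∑ i ∈ Finset.range e,
          ((resCount e lam s (i : ℤ) : ℤ) - (resCount e lam s ((i : ℤ) - 1) : ℤ)) ^ 2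
      = 2 * (Set.ncard {x : Fin l × Fin l × ℕ × ℕ |
          x.2.2.2 < (lam x.1).part x.2.2.1 ∧
            (e : ℤ) ∣ chargedHook lam s x.1 x.2.1 x.2.2.1 x.2.2.2} : ℤ) := by
  have hL1 : ∑ a : Fin l, (resCount e lam s (s a) : ℤ) = ∑ a, FW.Ctot e lam s (s a) :=
    Finset.sum_congr rfl (fun a _ => FW.resCount_eq e lam s (s a))
  have hL2 : ∑ i ∈ Finset.range e,
        ((resCount e lam s (i : ℤ) : ℤ) - (resCount e lam s ((i : ℤ) - 1) : ℤ)) ^ 2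
      = ∑ i ∈ Finset.range e,
        (FW.Ctot e lam s (i : ℤ) - FW.Ctot e lam s ((i : ℤ) - 1)) ^ 2 :=
    Finset.sum_congr rfl (fun i _ => by
      rw [FW.resCount_eq e lam s (i:ℤ), FW.resCount_eq e lam s ((i:ℤ)-1)])
  have hmain := FW.mainF e he (FW.msize lam) lam s rfl
  have hR := FW.hookcount_eq e lam s
  rw [hL1, hL2, hmain, hR]
end

section
/- Let e ∈ ℤ_{>1}, let λ be a partition and let μ be the e-core of λ. Then s_μ(q) divides s_λ(q) in ℤ[q,q^{−1}], where for a partition ν, s_ν(q) := q^{−N(ν)} ∏_{(i,j) ∈ [ν]} [h^ν_{i,j}]_q with N(ν) := ∑_{i ≥ 1} (i−1)ν_i and [h]_q := 1 + q + ⋯ + q^{h−1}. -/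
/-- Removing one rim `e`-hook, on the abacus: replace `L` by `(L ∖ {β}) ∪ {β − e}`
for some `β ∈ L` with `β − e ∉ L`. -/
def hookRemoveStep (e : ℕ) (L L' : Set ℤ) : Prop :=
  ∃ β ∈ L, β - (e : ℤ) ∉ L ∧ L' = (L \ {β}) ∪ {β - (e : ℤ)}

/-- `N(ν) = ∑_{i ≥ 1} (i−1) ν_i`. -/
noncomputable def nStat (p : IntPartition) : ℕ := ∑ᶠ i : ℕ, i * p.part i

/-- `[h]_q = 1 + q + ⋯ + q^{h−1}` as a Laurent polynomial over `ℤ`. -/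
noncomputable def qInt (h : ℤ) : LaurentPolynomial ℤ :=
  ∑ r ∈ Finset.range h.toNat, LaurentPolynomial.T (r : ℤ)

/-- The Schur element `s_ν(q) = q^{−N(ν)} ∏_{(i,j) ∈ [ν]} [h^ν_{i,j}]_q` of a partition. -/
noncomputable def schurOne (p : IntPartition) : LaurentPolynomial ℤ :=
  LaurentPolynomial.T (-(nStat p : ℤ)) *
    ∏ᶠ (i : ℕ) (j : ℕ) (_ : j < p.part i), qInt (hookLen p p i j)

namespace SchurAux

lemma conj_spec (p : IntPartition) (j i : ℕ) : i < p.conj j ↔ j < p.part i := by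
  obtain ⟨N, hN⟩ := p.eventually_zero
  have hne : {i : ℕ | p.part i ≤ j}.Nonempty := ⟨N, by simp [hN N le_rfl]⟩
  set k := sInf {i : ℕ | p.part i ≤ j} with hk
  have hmem : p.part k ≤ j := Nat.sInf_mem hne
  have hset : {i : ℕ | j < p.part i} = Set.Iio k := by
    ext i
    simp only [Set.mem_setOf_eq, Set.mem_Iio]
    constructor
    · intro h
      by_contra hik
      push_neg at hik
      exact absurd (le_trans (p.antitone hik) hmem) (not_le.2 h)
    · intro h
      by_contra hji
      push_neg at hji
      exact absurd (Nat.sInf_le (by simpa using hji)) (not_le.2 h)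
  have : p.conj j = k := by
    rw [IntPartition.conj, hset, ← Finset.coe_Iio, Set.ncard_coe_finset]
    simp
  rw [this]
  exact (Set.ext_iff.mp hset i).symm


/-- β-numbers. -/
def xseq (p : IntPartition) (i : ℕ) : ℤ := (p.part i : ℤ) - i
/-- co-β-numbers: enumeration of the complement of the abacus. -/
noncomputable def yseq (p : IntPartition) (j : ℕ) : ℤ := (j : ℤ) + 1 - p.conj j

lemma conj_anti (p : IntPartition) : Antitone p.conj := by
  intro j j' h
  by_contra hc
  push_neg at hc
  have h1 : j' < p.part (p.conj j) := (conj_spec p j' _).1 hc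
  have h2 : ¬ (j < p.part (p.conj j)) := by
    intro hlt
    exact lt_irrefl _ ((conj_spec p j _).2 hlt)
  exact h2 (lt_of_le_of_lt h h1)

lemma xseq_strictAnti (p : IntPartition) : StrictAnti (xseq p) := by
  intro i i' h
  have := p.antitone h.le
  unfold xseq
  omega

lemma yseq_strictMono (p : IntPartition) : StrictMono (yseq p) := by
  apply strictMono_nat_of_lt_succ
  intro j
  have := conj_anti p (by omega : j ≤ j + 1)
  unfold yseq
  omega

lemma xseq_mem (p : IntPartition) (i : ℕ) : xseq p i ∈ abacusSet p 0 := ⟨i, by simp [xseq]⟩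

lemma mem_abacus_iff (p : IntPartition) (t : ℤ) :
    t ∈ abacusSet p 0 ↔ ∃ i : ℕ, t = xseq p i := by
  simp [abacusSet, xseq]

lemma yseq_notMem (p : IntPartition) (j : ℕ) : yseq p j ∉ abacusSet p 0 := by
  rw [mem_abacus_iff]
  rintro ⟨k, hk⟩
  by_cases h : j < p.part k
  · have hkc : k < p.conj j := (conj_spec p j k).2 h
    have : (j : ℤ) + 1 ≤ p.part k := by exact_mod_cast h
    unfold yseq xseq at hk
    omega
  · push_neg at h
    have hkc : ¬ (k < p.conj j) := fun hc => absurd ((conj_spec p j k).1 hc) (not_lt.2 h)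
    push_neg at hkc
    have : (p.part k : ℤ) ≤ j := by exact_mod_cast h
    have : (p.conj j : ℤ) ≤ k := by exact_mod_cast hkc
    unfold yseq xseq at hk
    omega

lemma notMem_eq_yseq (p : IntPartition) (t : ℤ) (ht : t ∉ abacusSet p 0) :
    ∃ j : ℕ, t = yseq p j := by
  by_contra hc
  push_neg at hc
  -- case t < yseq p 0 : t ∈ abacus
  have hy0 : yseq p 0 ≤ t := by
    by_contra hlt
    push_neg at hlt
    -- t ≤ -conj 0, so t = xseq k with k = (-t).toNat
    have h1 : t ≤ -(p.conj 0 : ℤ) := by unfold yseq at hlt; omega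
    set k := (-t).toNat with hkdef
    have hc0 : (0:ℤ) ≤ (p.conj 0 : ℤ) := Int.natCast_nonneg _
    have hk : (k : ℤ) = -t := by
      rw [hkdef]; rw [Int.toNat_of_nonneg (by omega)]
    have hkc : p.conj 0 ≤ k := by omega
    have hpart : p.part k = 0 := by
      by_contra hp
      have h2 : 0 < p.part k := Nat.pos_of_ne_zero hp
      have := (conj_spec p 0 k).2 h2
      omega
    exact ht ⟨k, by rw [hpart]; push_cast; omega⟩
  -- now find the largest j with yseq p j ≤ t
  set n := (t - 1 + p.conj 0).toNat with hn
  have hPbound : ∀ j : ℕ, yseq p j ≤ t → j ≤ n := by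
    intro j hj
    have h1 : (p.conj j : ℤ) ≤ (p.conj 0 : ℤ) := by exact_mod_cast conj_anti p (Nat.zero_le j)
    unfold yseq at hj
    omega
  set j := Nat.findGreatest (fun j => yseq p j ≤ t) n with hjdef
  have hj : yseq p j ≤ t := by
    have := Nat.findGreatest_spec (P := fun i => yseq p i ≤ t) (Nat.zero_le n) hy0
    simpa using this
  have hjs : t < yseq p (j + 1) := by
    by_contra hle
    push_neg at hle
    by_cases hjn : j + 1 ≤ n
    · exact Nat.findGreatest_is_greatest (P := fun i => yseq p i ≤ t)
        (Nat.lt_succ_self j) hjn (by simpa using hle)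
    · exact hjn (hPbound _ hle)
  have hjlt : yseq p j < t := lt_of_le_of_ne hj (fun h => hc j h.symm)
  unfold yseq at hjlt hjs
  set k := ((j : ℤ) + 1 - t).toNat with hkdef
  have hc1 : (0:ℤ) ≤ (p.conj (j+1) : ℤ) := Int.natCast_nonneg _
  have hkc : (k : ℤ) = (j : ℤ) + 1 - t := by
    rw [hkdef]; rw [Int.toNat_of_nonneg (by push_cast at hjs ⊢; omega)]
  have hklt : k < p.conj j := by
    have : (k : ℤ) < (p.conj j : ℤ) := by push_cast at hjlt ⊢; omega
    exact_mod_cast this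
  have hkge : p.conj (j+1) ≤ k := by
    have : (p.conj (j+1) : ℤ) ≤ (k : ℤ) := by push_cast at hjs ⊢; omega
    exact_mod_cast this
  have h1 : j < p.part k := (conj_spec p j k).1 hklt
  have h2 : p.part k ≤ j + 1 := by
    by_contra hgt
    push_neg at hgt
    have := (conj_spec p (j+1) k).2 hgt
    omega
  have hpk : p.part k = j + 1 := by omega
  exact ht ⟨k, by rw [hpk]; push_cast; omega⟩


open scoped Classical

lemma hook_eq (p : IntPartition) (i j : ℕ) :
    hookLen p p i j = xseq p i - yseq p j := by
  unfold hookLen xseq yseq; ring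

lemma hook_pos (p : IntPartition) {i j : ℕ} (hij : j < p.part i) :
    1 ≤ hookLen p p i j := by
  have h1 : i < p.conj j := (conj_spec p j i).2 hij
  have h2 : (i : ℤ) + 1 ≤ (p.conj j : ℤ) := by exact_mod_cast h1
  have h3 : (j : ℤ) + 1 ≤ (p.part i : ℤ) := by exact_mod_cast hij
  unfold hookLen
  omega

lemma lt_part_of_hook_pos (p : IntPartition) {i j : ℕ} (h : 1 ≤ hookLen p p i j) :
    j < p.part i := by
  by_contra hc
  push_neg at hc
  have h1 : ¬ (i < p.conj j) := fun hlt => absurd ((conj_spec p j i).1 hlt) (not_lt.2 hc)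
  push_neg at h1
  have h2 : (p.conj j : ℤ) ≤ i := by exact_mod_cast h1
  have h3 : (p.part i : ℤ) ≤ j := by exact_mod_cast hc
  unfold hookLen at h
  omega

lemma cellSet_finite (p : IntPartition) :
    {ij : ℕ × ℕ | ij.2 < p.part ij.1}.Finite := by
  obtain ⟨N, hN⟩ := p.eventually_zero
  apply Set.Finite.subset ((Finset.range N ×ˢ Finset.range (p.part 0 + 1)) :
    Finset (ℕ × ℕ)).finite_toSet
  rintro ⟨i, j⟩ hij
  simp only [Set.mem_setOf_eq] at hij
  simp only [Finset.coe_product, Set.mem_prod, Finset.mem_coe, Finset.mem_range]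
  constructor
  · by_contra hi
    push_neg at hi
    rw [hN i hi] at hij
    omega
  · have := p.antitone (Nat.zero_le i)
    omega

noncomputable def cellF (p : IntPartition) : Finset (ℕ × ℕ) := (cellSet_finite p).toFinset

lemma mem_cellF (p : IntPartition) (ij : ℕ × ℕ) :
    ij ∈ cellF p ↔ ij.2 < p.part ij.1 := by
  simp [cellF, Set.Finite.mem_toFinset]

/-- window property for an abacus-like set -/
def IsWindow (S : Set ℤ) (a c : ℤ) : Prop :=
  (∀ x, x < a → x ∈ S) ∧ (∀ x, c < x → x ∉ S)

/-- number of cells of `p` with hook length `m` -/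
noncomputable def Ncell (p : IntPartition) (m : ℤ) : ℕ :=
  ((cellF p).filter (fun ij => hookLen p p ij.1 ij.2 = m)).card

/-- windowed count of `m`-descents of a set -/
noncomputable def wcount (S : Set ℤ) (a cm m : ℤ) : ℕ :=
  ((Finset.Icc a cm).filter (fun x => x ∈ S ∧ x - m ∉ S)).card

lemma Ncell_eq_wcount (p : IntPartition) (a c m : ℤ) (hm : 1 ≤ m)
    (hw : IsWindow (abacusSet p 0) a c) :
    Ncell p m = wcount (abacusSet p 0) a (c + m) m := by
  set L := abacusSet p 0 with hL
  apply Finset.card_bij (fun ij _ => xseq p ij.1)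
  · rintro ⟨i, j⟩ hij
    simp only [Finset.mem_filter, mem_cellF] at hij
    obtain ⟨hcell, hhook⟩ := hij
    have hx : xseq p i ∈ L := xseq_mem p i
    have hy : xseq p i - m = yseq p j := by
      rw [hook_eq] at hhook; omega
    have hynot : xseq p i - m ∉ L := by rw [hy]; exact yseq_notMem p j
    simp only [Finset.mem_filter, Finset.mem_Icc]
    refine ⟨⟨?_, ?_⟩, hx, hynot⟩
    · by_contra hlt
      push_neg at hlt
      exact hynot (hw.1 _ (by omega))
    · by_contra hgt
      push_neg at hgt
      exact (hw.2 _ (by omega)) hx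
  · rintro ⟨i, j⟩ hij ⟨i', j'⟩ hij' heq
    simp only [Finset.mem_filter, mem_cellF] at hij hij'
    have hii : i = i' := (xseq_strictAnti p).injective heq
    subst hii
    have : yseq p j = yseq p j' := by
      have h1 := hij.2; have h2 := hij'.2
      rw [hook_eq] at h1 h2
      omega
    have := (yseq_strictMono p).injective this
    simp [this]
  · intro t ht
    simp only [Finset.mem_filter, Finset.mem_Icc] at ht
    obtain ⟨-, htL, htm⟩ := ht
    obtain ⟨i, hi⟩ := (mem_abacus_iff p t).1 htL
    obtain ⟨j, hj⟩ := notMem_eq_yseq p (t - m) htm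
    have hhook : hookLen p p i j = m := by rw [hook_eq]; omega
    have hcell : j < p.part i := lt_part_of_hook_pos p (by omega)
    exact ⟨⟨i, j⟩, by simp [Finset.mem_filter, mem_cellF, hcell, hhook], hi.symm⟩


/-- ℤ-valued indicator -/
noncomputable def indZ (S : Set ℤ) (x : ℤ) : ℤ := if x ∈ S then 1 else 0

/-- the invariant: windowed signed count on the class `b` mod `e` -/
noncomputable def Dq (S : Set ℤ) (a cm : ℤ) (e : ℕ) (b m : ℤ) : ℤ :=
  ∑ x ∈ Finset.Icc a cm, if x % (e : ℤ) = b then indZ S x - indZ S (x - m) else 0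

noncomputable def Aq (S : Set ℤ) (a cm : ℤ) (e : ℕ) (b m : ℤ) : ℕ :=
  ((Finset.Icc a cm).filter (fun x => (x ∈ S ∧ x - m ∉ S) ∧ x % (e : ℤ) = b)).card

noncomputable def Bq (S : Set ℤ) (a cm : ℤ) (e : ℕ) (b m : ℤ) : ℕ :=
  ((Finset.Icc a cm).filter (fun x => (x ∉ S ∧ x - m ∈ S) ∧ x % (e : ℤ) = b)).card

lemma indZ_step {S : Set ℤ} {β : ℤ} {e : ℕ} (he : 0 < e) (hβ : β ∈ S)
    (hβe : β - (e : ℤ) ∉ S) (x : ℤ) :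
    indZ ((S \ {β}) ∪ {β - (e : ℤ)}) x
      = indZ S x - (if x = β then 1 else 0) + (if x = β - (e : ℤ) then 1 else 0) := by
  have hne : β - (e : ℤ) ≠ β := by omega
  unfold indZ
  by_cases h1 : x = β
  · have hL : x ∉ (S \ {β}) ∪ {β - (e : ℤ)} := by
      intro h
      simp only [Set.mem_union, Set.mem_diff, Set.mem_singleton_iff] at h
      rcases h with h | h
      · exact h.2 h1
      · rw [h1] at h; exact hne h.symm
    rw [if_neg hL, h1, if_pos hβ, if_pos rfl, if_neg (fun hh => hne hh.symm)]
    ring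
  · by_cases h2 : x = β - (e : ℤ)
    · subst h2
      have hL : β - (e:ℤ) ∈ (S \ {β}) ∪ {β - (e : ℤ)} := Or.inr rfl
      rw [if_pos hL, if_neg hβe, if_neg h1, if_pos rfl]
      ring
    · have : (x ∈ (S \ {β}) ∪ {β - (e : ℤ)}) ↔ x ∈ S := by
        simp [Set.mem_union, Set.mem_diff, Set.mem_singleton_iff, h1, h2]
      by_cases h3 : x ∈ S <;> simp [this, h1, h2, h3]

lemma Dq_step {S : Set ℤ} {β : ℤ} {e : ℕ} (he : 0 < e) (hβ : β ∈ S)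
    (hβe : β - (e : ℤ) ∉ S) (a c b m : ℤ) (hm : 1 ≤ m)
    (ha : a ≤ β - (e : ℤ)) (hc : β ≤ c) :
    Dq ((S \ {β}) ∪ {β - (e : ℤ)}) a (c + m) e b m = Dq S a (c + m) e b m := by
  have key : Dq ((S \ {β}) ∪ {β - (e : ℤ)}) a (c + m) e b m - Dq S a (c + m) e b m = 0 := by
    unfold Dq
    rw [← Finset.sum_sub_distrib]
    have hrw : ∀ x ∈ Finset.Icc a (c + m),
        ((if x % (e : ℤ) = b then
            indZ ((S \ {β}) ∪ {β - (e : ℤ)}) x - indZ ((S \ {β}) ∪ {β - (e : ℤ)}) (x - m)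
          else 0)
          - (if x % (e : ℤ) = b then indZ S x - indZ S (x - m) else 0))
        = (if x = β then (if x % (e : ℤ) = b then (-1 : ℤ) else 0) else 0)
          + (if x = β - (e : ℤ) then (if x % (e : ℤ) = b then (1 : ℤ) else 0) else 0)
          + (if x = β + m then (if x % (e : ℤ) = b then (1 : ℤ) else 0) else 0)
          + (if x = β - (e : ℤ) + m then (if x % (e : ℤ) = b then (-1 : ℤ) else 0) else 0) := by
      intro x _
      rw [indZ_step he hβ hβe, indZ_step he hβ hβe]
      by_cases hP : x % (e : ℤ) = b <;> simp only [hP, if_true, if_false] <;>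
        split_ifs <;> omega
    rw [Finset.sum_congr rfl hrw]
    rw [Finset.sum_add_distrib, Finset.sum_add_distrib, Finset.sum_add_distrib]
    rw [Finset.sum_ite_eq' (Finset.Icc a (c+m)) β, Finset.sum_ite_eq' (Finset.Icc a (c+m)) (β - (e:ℤ)),
        Finset.sum_ite_eq' (Finset.Icc a (c+m)) (β + m), Finset.sum_ite_eq' (Finset.Icc a (c+m)) (β - (e:ℤ) + m)]
    have h1 : β ∈ Finset.Icc a (c + m) := by rw [Finset.mem_Icc]; omega
    have h2 : β - (e:ℤ) ∈ Finset.Icc a (c + m) := by rw [Finset.mem_Icc]; omega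
    have h3 : β + m ∈ Finset.Icc a (c + m) := by rw [Finset.mem_Icc]; omega
    have h4 : β - (e:ℤ) + m ∈ Finset.Icc a (c + m) := by rw [Finset.mem_Icc]; omega
    rw [if_pos h1, if_pos h2, if_pos h3, if_pos h4]
    have hsub : ∀ t : ℤ, (t - (e:ℤ)) % (e:ℤ) = t % (e:ℤ) := by
      intro t
      rw [Int.sub_emod, Int.emod_self, sub_zero, Int.emod_emod_of_dvd _ dvd_rfl]
    have hmod1 : (β - (e:ℤ)) % (e:ℤ) = β % (e:ℤ) := hsub β
    have hmod2 : (β - (e:ℤ) + m) % (e:ℤ) = (β + m) % (e:ℤ) := by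
      have h5 : β - (e:ℤ) + m = (β + m) - (e:ℤ) := by ring
      rw [h5, hsub]
    rw [hmod1, hmod2]
    split_ifs <;> ring
  omega

lemma Aq_sub_Bq (S : Set ℤ) (a cm : ℤ) (e : ℕ) (b m : ℤ) :
    (Aq S a cm e b m : ℤ) - (Bq S a cm e b m : ℤ) = Dq S a cm e b m := by
  unfold Aq Bq Dq
  rw [Finset.card_filter, Finset.card_filter]
  push_cast
  rw [← Finset.sum_sub_distrib]
  apply Finset.sum_congr rfl
  intro x _
  by_cases h1 : x ∈ S <;> by_cases h2 : x - m ∈ S <;> by_cases h3 : x % (e:ℤ) = b <;>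
    simp [indZ, h1, h2, h3]


lemma window_step {S : Set ℤ} {β : ℤ} {e : ℕ} {a c : ℤ} (he : 0 < e) (hβ : β ∈ S)
    (hβe : β - (e : ℤ) ∉ S) (hw : IsWindow S a c) :
    IsWindow ((S \ {β}) ∪ {β - (e : ℤ)}) a c ∧ a ≤ β - (e : ℤ) ∧ β ≤ c := by
  have h1 : a ≤ β - (e : ℤ) := by
    by_contra h; push_neg at h; exact hβe (hw.1 _ h)
  have h2 : β ≤ c := by
    by_contra h; push_neg at h; exact (hw.2 _ h) hβ
  refine ⟨⟨?_, ?_⟩, h1, h2⟩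
  · intro x hx
    left
    exact ⟨hw.1 x hx, by simp only [Set.mem_singleton_iff]; omega⟩
  · intro x hx hmem
    rcases hmem with h | h
    · exact (hw.2 x hx) h.1
    · simp only [Set.mem_singleton_iff] at h; omega

/-- invariance along the chain of hook removals -/
lemma chain_invariant {e : ℕ} (he : 0 < e) {L M : Set ℤ} {a c : ℤ}
    (hsteps : Relation.ReflTransGen (hookRemoveStep e) L M)
    (hw : IsWindow L a c) :
    IsWindow M a c ∧ ∀ b m : ℤ, 1 ≤ m → Dq M a (c + m) e b m = Dq L a (c + m) e b m := by
  induction hsteps with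
  | refl => exact ⟨hw, fun _ _ _ => rfl⟩
  | tail _ hstep ih =>
      obtain ⟨hwS, hD⟩ := ih
      obtain ⟨β, hβ, hβe, rfl⟩ := hstep
      obtain ⟨hwS', h1, h2⟩ := window_step he hβ hβe hwS
      refine ⟨hwS', fun b m hm => ?_⟩
      rw [Dq_step he hβ hβe a c b m hm h1 h2]
      exact hD b m hm

/-- the core abacus is downward closed along each `e`-runner -/
lemma core_downclosed {e : ℕ} (he : 0 < e) {M : Set ℤ}
    (hcore : ∀ β ∈ M, β - (e : ℤ) ∈ M) :
    ∀ u ∈ M, ∀ v : ℤ, v ≤ u → v % (e : ℤ) = u % (e : ℤ) → v ∈ M := by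
  have aux : ∀ k : ℕ, ∀ u ∈ M, u - (k : ℤ) * e ∈ M := by
    intro k
    induction k with
    | zero => intro u hu; simpa using hu
    | succ n ih =>
        intro u hu
        have h1 := hcore _ (ih u hu)
        have heq : u - (((n + 1 : ℕ)) : ℤ) * e = u - (n:ℤ) * e - e := by push_cast; ring
        rw [heq]
        exact h1
  intro u hu v hvu hmod
  have hdvd : (e : ℤ) ∣ u - v := Int.ModEq.dvd hmod
  obtain ⟨k, hk⟩ := hdvd
  have hk0 : 0 ≤ k := by
    by_contra h
    push_neg at h
    have : (e:ℤ) * k < 0 := mul_neg_of_pos_of_neg (by exact_mod_cast he) h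
    omega
  have : v = u - (k.toNat : ℤ) * e := by
    rw [Int.toNat_of_nonneg hk0, mul_comm]; omega
  rw [this]
  exact aux k.toNat u hu

lemma Aq_or_Bq_zero {e : ℕ} (he : 0 < e) {M : Set ℤ}
    (hdc : ∀ u ∈ M, ∀ v : ℤ, v ≤ u → v % (e : ℤ) = u % (e : ℤ) → v ∈ M)
    (a cm b m : ℤ) : Aq M a cm e b m = 0 ∨ Bq M a cm e b m = 0 := by
  by_contra hc
  push_neg at hc
  obtain ⟨hA, hB⟩ := hc
  obtain ⟨x, hx⟩ := Finset.card_pos.mp (Nat.pos_of_ne_zero hA)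
  obtain ⟨z, hz⟩ := Finset.card_pos.mp (Nat.pos_of_ne_zero hB)
  simp only [Finset.mem_filter] at hx hz
  obtain ⟨-, ⟨hxM, hxmM⟩, hxb⟩ := hx
  obtain ⟨-, ⟨hzM, hzmM⟩, hzb⟩ := hz
  have hxz : x % (e:ℤ) = z % (e:ℤ) := by rw [hxb, hzb]
  have h1 : ¬ (z ≤ x) := fun h => hzM (hdc x hxM z h hxz.symm)
  have hmodm : (x - m) % (e:ℤ) = (z - m) % (e:ℤ) := by
    rw [Int.sub_emod, hxz, ← Int.sub_emod]
  have h2 : ¬ (x - m ≤ z - m) := fun h => hxmM (hdc (z - m) hzmM (x - m) h hmodm)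
  omega

/-- windowed descent count splits as a sum over residue classes -/
lemma wcount_eq_sum (S : Set ℤ) (a cm m : ℤ) (e : ℕ) (he : 0 < e) :
    wcount S a cm m = ∑ b ∈ Finset.Icc (0:ℤ) ((e:ℤ) - 1), Aq S a cm e b m := by
  unfold wcount Aq
  rw [Finset.card_eq_sum_card_fiberwise (f := fun x => x % (e : ℤ))
    (t := Finset.Icc (0:ℤ) ((e:ℤ) - 1)) ?_]
  · apply Finset.sum_congr rfl
    intro b _
    congr 1
    rw [Finset.filter_filter]
  · intro x _
    show x % (e:ℤ) ∈ Finset.Icc (0:ℤ) ((e:ℤ) - 1)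
    rw [Finset.mem_Icc]
    have h1 := Int.emod_nonneg x (by exact_mod_cast he.ne' : (e:ℤ) ≠ 0)
    have h2 := Int.emod_lt_of_pos x (by exact_mod_cast he : (0:ℤ) < e)
    omega

/-- the main counting inequality -/
lemma wcount_le {e : ℕ} (he : 0 < e) {L M : Set ℤ} {a c : ℤ}
    (hsteps : Relation.ReflTransGen (hookRemoveStep e) L M)
    (hw : IsWindow L a c)
    (hcore : ∀ β ∈ M, β - (e : ℤ) ∈ M)
    (m : ℤ) (hm : 1 ≤ m) :
    wcount M a (c + m) m ≤ wcount L a (c + m) m := by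
  obtain ⟨hwM, hD⟩ := chain_invariant he hsteps hw
  rw [wcount_eq_sum _ _ _ _ _ he, wcount_eq_sum _ _ _ _ _ he]
  apply Finset.sum_le_sum
  intro b _
  have hdc := core_downclosed he hcore
  rcases Aq_or_Bq_zero he hdc a (c + m) b m with h0 | h0
  · rw [h0]; exact Nat.zero_le _
  · have h1 : (Aq M a (c+m) e b m : ℤ) = Dq M a (c+m) e b m := by
      have := Aq_sub_Bq M a (c+m) e b m
      rw [h0] at this
      simpa using this
    have h2 := Aq_sub_Bq L a (c+m) e b m
    have h3 := hD b m hm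
    have h4 : (Aq M a (c+m) e b m : ℤ) ≤ (Aq L a (c+m) e b m : ℤ) := by
      rw [h1, h3, ← h2]
      have : (0:ℤ) ≤ (Bq L a (c+m) e b m : ℤ) := Int.natCast_nonneg _
      omega
    exact_mod_cast h4


lemma abacus_window (p : IntPartition) : ∃ a c : ℤ, IsWindow (abacusSet p 0) a c := by
  obtain ⟨N, hN⟩ := p.eventually_zero
  refine ⟨-(N:ℤ), (p.part 0 : ℤ), ?_, ?_⟩
  · intro x hx
    set j := (-x).toNat with hj
    have hxj : (j : ℤ) = -x := by rw [hj, Int.toNat_of_nonneg (by omega)]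
    have hjN : N ≤ j := by omega
    exact ⟨j, by rw [hN j hjN]; push_cast; omega⟩
  · rintro x hx ⟨j, rfl⟩
    have : (p.part j : ℤ) ≤ (p.part 0 : ℤ) := by exact_mod_cast p.antitone (Nat.zero_le j)
    omega

lemma finprod_hooks (p : IntPartition) :
    (∏ᶠ (i : ℕ) (j : ℕ) (_ : j < p.part i), qInt (hookLen p p i j))
      = ∏ ij ∈ cellF p, qInt (hookLen p p ij.1 ij.2) := by
  obtain ⟨N, hN⟩ := p.eventually_zero
  set K := p.part 0 + 1 with hK
  have hpartK : ∀ i, p.part i < K := fun i => by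
    have := p.antitone (Nat.zero_le i); omega
  have inner : ∀ i : ℕ, (∏ᶠ (j : ℕ) (_ : j < p.part i), qInt (hookLen p p i j))
      = ∏ j ∈ Finset.range (p.part i), qInt (hookLen p p i j) := by
    intro i
    rw [finprod_eq_prod_of_mulSupport_subset _
      (s := Finset.range (p.part i)) ?_]
    · exact Finset.prod_congr rfl (fun j hj => by
        rw [finprod_eq_if, if_pos (Finset.mem_range.mp hj)])
    · intro j hj
      simp only [Function.mem_mulSupport] at hj
      by_contra hjr
      simp only [Finset.coe_range, Set.mem_Iio] at hjr
      push_neg at hjr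
      exact hj (by rw [finprod_eq_if, if_neg (by omega)])
  have houter : (∏ᶠ (i : ℕ) (j : ℕ) (_ : j < p.part i), qInt (hookLen p p i j))
      = ∏ i ∈ Finset.range N, ∏ j ∈ Finset.range (p.part i), qInt (hookLen p p i j) := by
    rw [finprod_eq_prod_of_mulSupport_subset _ (s := Finset.range N) ?_]
    · exact Finset.prod_congr rfl (fun i _ => inner i)
    · intro i hi
      simp only [Function.mem_mulSupport] at hi
      by_contra hir
      simp only [Finset.coe_range, Set.mem_Iio] at hir
      push_neg at hir
      apply hi
      rw [inner i, hN i hir]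
      simp
  rw [houter]
  have hstep2 : ∀ i ∈ Finset.range N,
      (∏ j ∈ Finset.range (p.part i), qInt (hookLen p p i j))
        = ∏ j ∈ Finset.range K, if j < p.part i then qInt (hookLen p p i j) else 1 := by
    intro i _
    rw [← Finset.prod_filter]
    congr 1
    ext j
    simp only [Finset.mem_filter, Finset.mem_range]
    have := hpartK i
    omega
  rw [Finset.prod_congr rfl hstep2, ← Finset.prod_product']
  have hcf : cellF p = (Finset.range N ×ˢ Finset.range K).filter
      (fun ij => ij.2 < p.part ij.1) := by
    ext ⟨i, j⟩
    simp only [mem_cellF, Finset.mem_filter, Finset.mem_product, Finset.mem_range]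
    constructor
    · intro h
      refine ⟨⟨?_, ?_⟩, h⟩
      · by_contra hi
        push_neg at hi
        rw [hN i hi] at h
        omega
      · have := hpartK i; omega
    · exact fun h => h.2
  rw [hcf, Finset.prod_filter]

lemma prod_hooks_group (p : IntPartition) (T : Finset ℤ)
    (hT : ∀ ij ∈ cellF p, hookLen p p ij.1 ij.2 ∈ T) :
    (∏ ij ∈ cellF p, qInt (hookLen p p ij.1 ij.2)) = ∏ m ∈ T, qInt m ^ (Ncell p m) := by
  rw [← Finset.prod_fiberwise_of_maps_to hT (fun ij => qInt (hookLen p p ij.1 ij.2))]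
  apply Finset.prod_congr rfl
  intro m _
  calc (∏ ij ∈ (cellF p).filter (fun ij => hookLen p p ij.1 ij.2 = m),
          qInt (hookLen p p ij.1 ij.2))
      = ∏ _ij ∈ (cellF p).filter (fun ij => hookLen p p ij.1 ij.2 = m), qInt m :=
        Finset.prod_congr rfl (fun ij hij => by rw [(Finset.mem_filter.mp hij).2])
    _ = qInt m ^ (Ncell p m) := by rw [Finset.prod_const]; rfl

lemma hook_mem_Icc (p : IntPartition) (B : ℤ)
    (hB : (p.part 0 : ℤ) + (p.conj 0 : ℤ) ≤ B) :
    ∀ ij ∈ cellF p, hookLen p p ij.1 ij.2 ∈ Finset.Icc (1:ℤ) B := by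
  rintro ⟨i, j⟩ hij
  rw [mem_cellF] at hij
  dsimp only at hij ⊢
  rw [Finset.mem_Icc]
  refine ⟨hook_pos p hij, ?_⟩
  have h1 : (p.part i : ℤ) ≤ (p.part 0 : ℤ) := by exact_mod_cast p.antitone (Nat.zero_le i)
  have h2 : (p.conj j : ℤ) ≤ (p.conj 0 : ℤ) := by exact_mod_cast conj_anti p (Nat.zero_le j)
  unfold hookLen
  omega

end SchurAux

open SchurAux

/-- If `μ` is the `e`-core of `λ` then `s_μ(q)` divides `s_λ(q)` in `ℤ[q,q⁻¹]`. -/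
theorem stmt4 (e : ℕ) (he : 1 < e) (lam mu : IntPartition)
    (hsteps : Relation.ReflTransGen (hookRemoveStep e) (abacusSet lam 0) (abacusSet mu 0))
    (hcore : ∀ β ∈ abacusSet mu 0, β - (e : ℤ) ∈ abacusSet mu 0) :
    schurOne mu ∣ schurOne lam := by
  have he0 : 0 < e := by omega
  obtain ⟨a, c, hw⟩ := abacus_window lam
  have hchain := chain_invariant he0 hsteps hw
  have hcount : ∀ m : ℤ, 1 ≤ m → Ncell mu m ≤ Ncell lam m := by
    intro m hm
    rw [Ncell_eq_wcount mu a c m hm hchain.1, Ncell_eq_wcount lam a c m hm hw]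
    exact wcount_le he0 hsteps hw hcore m hm
  set B := max ((lam.part 0 : ℤ) + lam.conj 0) ((mu.part 0 : ℤ) + mu.conj 0) with hB
  set T := Finset.Icc (1:ℤ) B with hT
  have hplam : (∏ᶠ (i : ℕ) (j : ℕ) (_ : j < lam.part i), qInt (hookLen lam lam i j))
      = ∏ m ∈ T, qInt m ^ Ncell lam m := by
    rw [finprod_hooks, prod_hooks_group lam T (hook_mem_Icc lam B (le_max_left _ _))]
  have hpmu : (∏ᶠ (i : ℕ) (j : ℕ) (_ : j < mu.part i), qInt (hookLen mu mu i j))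
      = ∏ m ∈ T, qInt m ^ Ncell mu m := by
    rw [finprod_hooks, prod_hooks_group mu T (hook_mem_Icc mu B (le_max_right _ _))]
  have hdvd : (∏ m ∈ T, qInt m ^ Ncell mu m) ∣ ∏ m ∈ T, qInt m ^ Ncell lam m := by
    apply Finset.prod_dvd_prod_of_dvd
    intro m hm
    exact pow_dvd_pow _ (hcount m (Finset.mem_Icc.mp hm).1)
  obtain ⟨k, hk⟩ := hdvd
  refine ⟨LaurentPolynomial.T ((nStat mu : ℤ) - (nStat lam : ℤ)) * k, ?_⟩
  unfold schurOne
  rw [hplam, hpmu, hk]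
  have hTT : LaurentPolynomial.T (R := ℤ) (-(nStat mu : ℤ)) *
      LaurentPolynomial.T ((nStat mu : ℤ) - (nStat lam : ℤ))
        = LaurentPolynomial.T (-(nStat lam : ℤ)) := by
    rw [← LaurentPolynomial.T_add]
    congr 1
    ring
  rw [← hTT]
  ring
end

section
/- Let l ≥ 1, e ∈ ℤ_{>1}, let λ = (λ^0,…,λ^{l−1}) be an l-partition of n and s = (s_0,…,s_{l−1}) ∈ ℤ^l, and assume that 0 is not an element of the multiset H(λ) of charged hook lengths (equivalently, s_λ(y) ≠ 0). Then the multiplicity of the e-th cyclotomic polynomial Φ_e(y) in s_λ(y), i.e., the largest N ∈ ℕ with Φ_e(y)^N dividing s_λ(y) in ℚ[y,y^{−1}], equals the number of elements of H(λ), counted with multiplicity, that are congruent to 0 modulo e. -/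
/-- `[h]_y = 1 + y + ⋯ + y^{h−1}` as a Laurent polynomial over `ℚ`. -/
noncomputable def yInt (h : ℤ) : LaurentPolynomial ℚ :=
  ∑ r ∈ Finset.range h.toNat, LaurentPolynomial.T (r : ℤ)

/-- `N(λ̄)` for the partition `λ̄` obtained by reordering all parts of the `l`-partition `λ`:
`N(λ̄) = ∑_{k ≥ 1} binom(λ̄'_k, 2)` where `λ̄'_k = ∑_a (λ^a)'_k`. -/
noncomputable def nStatBar {l : ℕ} (lam : Fin l → IntPartition) : ℕ :=
  ∑ᶠ k : ℕ, Nat.choose (∑ a : Fin l, (lam a).conj k) 2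

/-- The Schur element
`s_λ(y) = (−1)^{n(l−1)} y^{−N(λ̄)} ∏_a ∏_{(i,j) ∈ [λ^a]}
  ([h^{λ^a,λ^a}_{i,j}]_y ∏_{b ≠ a} (y^{ch^{a,b}_{i,j}} − 1))`
viewed in `ℚ[y,y⁻¹]`. -/
noncomputable def schurElt (l n : ℕ) (lam : Fin l → IntPartition) (s : Fin l → ℤ) :
    LaurentPolynomial ℚ :=
  (-1) ^ (n * (l - 1)) *
    LaurentPolynomial.T (-(nStatBar lam : ℤ)) *
    ∏ᶠ (a : Fin l) (i : ℕ) (j : ℕ) (_ : j < (lam a).part i),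
      (yInt (hookLen (lam a) (lam a) i j) *
        ∏ b ∈ Finset.univ.erase a, (LaurentPolynomial.T (chargedHook lam s a b i j) - 1))


open Polynomial LaurentPolynomial

section ExactDvd

variable {α : Type*} [CommMonoidWithZero α] [IsCancelMulZero α] {q : α}

theorem exact_mul (hq : Prime q) {x y : α} {m n : ℕ}
    (h1 : q ^ m ∣ x) (h2 : ¬ q ^ (m + 1) ∣ x) (h3 : q ^ n ∣ y) (h4 : ¬ q ^ (n + 1) ∣ y) :
    q ^ (m + n) ∣ x * y ∧ ¬ q ^ (m + n + 1) ∣ x * y := by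
  obtain ⟨x', rfl⟩ := h1
  obtain ⟨y', rfl⟩ := h3
  have hx' : ¬ q ∣ x' := fun ⟨c, hc⟩ => h2 ⟨c, by rw [hc, ← mul_assoc, ← pow_succ]⟩
  have hy' : ¬ q ∣ y' := fun ⟨c, hc⟩ => h4 ⟨c, by rw [hc, ← mul_assoc, ← pow_succ]⟩
  constructor
  · exact ⟨x' * y', by rw [pow_add, mul_mul_mul_comm]⟩
  · rintro ⟨c, hc⟩
    have hqm : (q ^ (m + n) : α) ≠ 0 := pow_ne_zero _ hq.ne_zero
    have : q ^ (m + n) * (x' * y') = q ^ (m + n) * (q * c) :=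
      calc q ^ (m + n) * (x' * y') = q ^ m * x' * (q ^ n * y') := by
            rw [pow_add, mul_mul_mul_comm]
        _ = q ^ (m + n + 1) * c := hc
        _ = q ^ (m + n) * (q * c) := by rw [pow_succ, mul_assoc]
    have := mul_left_cancel₀ hqm this
    rcases (hq.dvd_mul.mp ⟨c, this⟩) with h | h
    · exact hx' h
    · exact hy' h

theorem exact_prod (hq : Prime q) {ι : Type*} (s : Finset ι) (f : ι → α) (m : ι → ℕ)
    (h : ∀ i ∈ s, q ^ (m i) ∣ f i ∧ ¬ q ^ (m i + 1) ∣ f i) :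
    q ^ (∑ i ∈ s, m i) ∣ ∏ i ∈ s, f i ∧ ¬ q ^ (∑ i ∈ s, m i + 1) ∣ ∏ i ∈ s, f i := by
  induction s using Finset.cons_induction with
  | empty =>
    refine ⟨by simp, ?_⟩
    simp only [Finset.sum_empty, Finset.prod_empty, zero_add, pow_one]
    exact fun hd => hq.not_unit (isUnit_of_dvd_one hd)
  | cons a s ha ih =>
    rw [Finset.sum_cons, Finset.prod_cons]
    obtain ⟨ih1, ih2⟩ := ih (fun i hi => h i (Finset.mem_cons_of_mem hi))
    obtain ⟨h1, h2⟩ := h a (Finset.mem_cons_self a s)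
    exact exact_mul hq h1 h2 ih1 ih2

end ExactDvd

section LaurentTransfer

variable {R : Type*} [CommRing R] [IsDomain R]

theorem toLaurent_dvd_toLaurent_of_prime {q f : R[X]} (hq : Prime q) (hqX : ¬ q ∣ X)
    (h : toLaurent q ∣ toLaurent f) : q ∣ f := by
  obtain ⟨c, hc⟩ := h
  obtain ⟨k, c', hc'⟩ := c.exists_T_pow
  have : toLaurent (f * X ^ k) = toLaurent (q * c') := by
    rw [map_mul, map_mul, Polynomial.toLaurent_X_pow, hc', hc]; ring
  have hfx : f * X ^ k = q * c' := Polynomial.toLaurent_injective this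
  rcases hq.dvd_mul.mp ⟨c', hfx⟩ with h | h
  · exact h
  · exact absurd (hq.dvd_of_dvd_pow h) hqX

theorem toLaurent_pow_dvd_iff {q f : R[X]} (hq : Prime q) (hqX : ¬ q ∣ X) (N : ℕ) :
    (toLaurent q) ^ N ∣ toLaurent f ↔ q ^ N ∣ f := by
  constructor
  · intro h
    induction N generalizing f with
    | zero => exact one_dvd f
    | succ N ih =>
      have h1 : toLaurent q ∣ toLaurent f := (dvd_pow_self _ (Nat.succ_ne_zero N)).trans h
      obtain ⟨g, rfl⟩ := toLaurent_dvd_toLaurent_of_prime hq hqX h1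
      rw [map_mul, pow_succ'] at h
      have hq0 : (toLaurent q : R[T;T⁻¹]) ≠ 0 := by
        simpa using hq.ne_zero
      obtain ⟨d, hd⟩ := h
      rw [mul_assoc] at hd
      have hd' := mul_left_cancel₀ hq0 hd
      rw [pow_succ']
      exact mul_dvd_mul_left q (ih ⟨d, hd'⟩)
  · intro ⟨g, hg⟩
    exact ⟨toLaurent g, by rw [hg]; simp [map_mul, map_pow]⟩

end LaurentTransfer

section Cyclo

open Complex in
theorem cyc_root_of_dvd {e : ℕ} (he : 1 < e) {f : ℚ[X]} (h : cyclotomic e ℚ ∣ f) :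
    Polynomial.eval (Complex.exp (2 * Real.pi * Complex.I / e)) (f.map (algebraMap ℚ ℂ)) = 0 := by
  have he0 : (e : ℕ) ≠ 0 := by omega
  have hprim := Complex.isPrimitiveRoot_exp e he0
  have : NeZero ((e : ℕ) : ℂ) := ⟨Nat.cast_ne_zero.mpr he0⟩
  have hroot : IsRoot (cyclotomic e ℂ) (Complex.exp (2 * Real.pi * Complex.I / e)) :=
    (Polynomial.isRoot_cyclotomic_iff).mpr hprim
  obtain ⟨g, rfl⟩ := h
  rw [Polynomial.map_mul, eval_mul, map_cyclotomic, IsRoot.eq_zero hroot, zero_mul]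

theorem cyc_dvd_X_pow_sub_one_iff {e : ℕ} (he : 1 < e) {m : ℕ} (hm : 0 < m) :
    cyclotomic e ℚ ∣ X ^ m - 1 ↔ e ∣ m := by
  constructor
  · intro h
    have := cyc_root_of_dvd he h
    rw [Polynomial.map_sub, Polynomial.map_pow, Polynomial.map_one, Polynomial.map_X,
      eval_sub, eval_pow, eval_X, eval_one, sub_eq_zero] at this
    exact ((Complex.isPrimitiveRoot_exp e (by omega)).pow_eq_one_iff_dvd m).mp this
  · rintro ⟨k, rfl⟩
    refine (cyclotomic.dvd_X_pow_sub_one e ℚ).trans ?_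
    have := sub_dvd_pow_sub_pow (X ^ e : ℚ[X]) 1 k
    simpa [← pow_mul] using this

theorem cyc_not_sq_dvd {e : ℕ} (he : 1 < e) {m : ℕ} (hm : 0 < m) :
    ¬ (cyclotomic e ℚ) ^ 2 ∣ X ^ m - 1 := by
  intro h
  have hsf : Squarefree (X ^ m - 1 : ℚ[X]) := by
    have : ((m : ℚ)) ≠ 0 := Nat.cast_ne_zero.mpr hm.ne'
    exact (Polynomial.X_pow_sub_one_separable_iff.mpr this).squarefree
  rw [pow_two] at h
  exact ((cyclotomic.irreducible_rat (by omega : 0 < e)).prime).not_unit (hsf _ h)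

theorem geom_sum_mul_aux (m : ℕ) :
    (∑ i ∈ Finset.range m, (X : ℚ[X]) ^ i) * (X - 1) = X ^ m - 1 := geom_sum_mul X m

theorem cyc_dvd_geom_iff {e : ℕ} (he : 1 < e) {m : ℕ} (hm : 0 < m) :
    cyclotomic e ℚ ∣ ∑ i ∈ Finset.range m, (X : ℚ[X]) ^ i ↔ e ∣ m := by
  constructor
  · intro h
    exact (cyc_dvd_X_pow_sub_one_iff he hm).mp
      (geom_sum_mul_aux m ▸ h.trans (dvd_mul_right _ _))
  · intro h
    exact cyclotomic_dvd_geom_sum_of_dvd ℚ h (by omega)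

theorem cyc_not_sq_dvd_geom {e : ℕ} (he : 1 < e) {m : ℕ} (hm : 0 < m) :
    ¬ (cyclotomic e ℚ) ^ 2 ∣ ∑ i ∈ Finset.range m, (X : ℚ[X]) ^ i := fun h =>
  cyc_not_sq_dvd he hm (geom_sum_mul_aux m ▸ h.trans (dvd_mul_right _ _))

theorem cyc_exact_geom {e : ℕ} (he : 1 < e) {m : ℕ} (hm : 0 < m) :
    (cyclotomic e ℚ) ^ (if e ∣ m then 1 else 0) ∣ ∑ i ∈ Finset.range m, (X : ℚ[X]) ^ i ∧
    ¬ (cyclotomic e ℚ) ^ ((if e ∣ m then 1 else 0) + 1) ∣ ∑ i ∈ Finset.range m, (X : ℚ[X]) ^ i := by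
  by_cases hd : e ∣ m <;> simp only [hd, if_true, if_false]
  · exact ⟨by simpa using (cyc_dvd_geom_iff he hm).mpr hd,
      by simpa [one_add_one_eq_two] using cyc_not_sq_dvd_geom he hm⟩
  · exact ⟨one_dvd _, by simpa using fun h => hd ((cyc_dvd_geom_iff he hm).mp h)⟩

theorem cyc_exact_X_pow_sub_one {e : ℕ} (he : 1 < e) {m : ℕ} (hm : 0 < m) :
    (cyclotomic e ℚ) ^ (if e ∣ m then 1 else 0) ∣ (X : ℚ[X]) ^ m - 1 ∧
    ¬ (cyclotomic e ℚ) ^ ((if e ∣ m then 1 else 0) + 1) ∣ (X : ℚ[X]) ^ m - 1 := by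
  by_cases hd : e ∣ m <;> simp only [hd, if_true, if_false]
  · exact ⟨by simpa using (cyc_dvd_X_pow_sub_one_iff he hm).mpr hd,
      by simpa [one_add_one_eq_two] using cyc_not_sq_dvd he hm⟩
  · exact ⟨one_dvd _, by simpa using fun h => hd ((cyc_dvd_X_pow_sub_one_iff he hm).mp h)⟩

theorem cyc_not_dvd_X {e : ℕ} (he : 1 < e) : ¬ cyclotomic e ℚ ∣ X := by
  intro h
  have := cyc_root_of_dvd he h
  rw [Polynomial.map_X, eval_X] at this
  exact Complex.exp_ne_zero _ this

end Cyclo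

namespace Stmt7Aux

open Polynomial LaurentPolynomial

theorem conj_ge (p : IntPartition) {i j : ℕ} (h : j < p.part i) : i + 1 ≤ p.conj j := by
  obtain ⟨N, hN⟩ := p.eventually_zero
  have hfin : {i' : ℕ | j < p.part i'}.Finite := by
    apply Set.Finite.subset (Finset.range N).finite_toSet
    intro i' hi'
    simp only [Set.mem_setOf_eq] at hi'
    simp only [Finset.coe_range, Set.mem_Iio]
    by_contra hlt
    rw [hN i' (by omega)] at hi'
    omega
  have hsub : (↑(Finset.range (i + 1)) : Set ℕ) ⊆ {i' : ℕ | j < p.part i'} := by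
    intro i' hi'
    simp only [Finset.coe_range, Set.mem_Iio] at hi'
    exact lt_of_lt_of_le h (p.antitone (by omega))
  have := Set.ncard_le_ncard hsub hfin
  rw [Set.ncard_coe_finset, Finset.card_range] at this
  exact this

theorem hookLen_pos (p : IntPartition) {i j : ℕ} (h : j < p.part i) : 0 < hookLen p p i j := by
  have h2 := conj_ge p h
  have h1 : j + 1 ≤ p.part i := h
  simp only [hookLen]
  have h1' : (j : ℤ) + 1 ≤ (p.part i : ℤ) := by exact_mod_cast h1
  have h2' : (i : ℤ) + 1 ≤ (p.conj j : ℤ) := by exact_mod_cast h2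
  omega

theorem yInt_eq (h : ℤ) : yInt h = toLaurent (∑ r ∈ Finset.range h.toNat, (X : ℚ[X]) ^ r) := by
  rw [map_sum, yInt]
  exact Finset.sum_congr rfl fun r _ => (Polynomial.toLaurent_X_pow r).symm

theorem T_sub_one_assoc (m : ℤ) :
    Associated (toLaurent ((X : ℚ[X]) ^ m.natAbs - 1)) (T m - 1 : LaurentPolynomial ℚ) := by
  rcases le_or_gt 0 m with hpos | hneg
  · have hna : (m.natAbs : ℤ) = m := by omega
    have heq : toLaurent ((X : ℚ[X]) ^ m.natAbs - 1) = T m - 1 := by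
      rw [map_sub, Polynomial.toLaurent_X_pow, map_one, hna]
    rw [heq]
  · have hna : (m.natAbs : ℤ) = -m := by omega
    have heq : toLaurent ((X : ℚ[X]) ^ m.natAbs - 1) = T (-m) - 1 := by
      rw [map_sub, Polynomial.toLaurent_X_pow, map_one, hna]
    refine ⟨((isUnit_T (R := ℚ) m).neg).unit, ?_⟩
    rw [heq, IsUnit.unit_spec]
    have key : (T (-m) : LaurentPolynomial ℚ) * T m = 1 := by
      rw [← T_add, neg_add_cancel, T_zero]
    calc (T (-m) - 1 : LaurentPolynomial ℚ) * -T m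
        = -(T (-m) * T m) + T m := by ring
      _ = T m - 1 := by rw [key]; ring

/-- The Laurent node factor. -/
noncomputable def FlX {l : ℕ} (lam : Fin l → IntPartition) (s : Fin l → ℤ)
    (a : Fin l) (i j : ℕ) : LaurentPolynomial ℚ :=
  yInt (hookLen (lam a) (lam a) i j) *
    ∏ b ∈ Finset.univ.erase a, (LaurentPolynomial.T (chargedHook lam s a b i j) - 1)

/-- The polynomial node factor. -/
noncomputable def PfX {l : ℕ} (lam : Fin l → IntPartition) (s : Fin l → ℤ)
    (a : Fin l) (i j : ℕ) : ℚ[X] :=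
  (∑ r ∈ Finset.range (hookLen (lam a) (lam a) i j).toNat, X ^ r) *
    ∏ b ∈ Finset.univ.erase a, (X ^ (chargedHook lam s a b i j).natAbs - 1)

/-- The node multiplicity. -/
noncomputable def mX {l : ℕ} (lam : Fin l → IntPartition) (s : Fin l → ℤ) (e : ℕ)
    (a : Fin l) (i j : ℕ) : ℕ :=
  (Finset.univ.filter fun b => (e : ℤ) ∣ chargedHook lam s a b i j).card

theorem node_assoc {l : ℕ} (lam : Fin l → IntPartition) (s : Fin l → ℤ)
    (a : Fin l) (i j : ℕ) :
    Associated (toLaurent (PfX lam s a i j)) (FlX lam s a i j) := by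
  unfold PfX FlX
  rw [map_mul, ← yInt_eq, map_prod]
  exact Associated.rfl.mul_mul
    (Associated.prod _ _ _ fun b _ => T_sub_one_assoc _)

theorem node_exact {l : ℕ} (lam : Fin l → IntPartition) (s : Fin l → ℤ) {e : ℕ} (he : 1 < e)
    (a : Fin l) (i j : ℕ) (hij : j < (lam a).part i)
    (h0 : ∀ b, chargedHook lam s a b i j ≠ 0) :
    (cyclotomic e ℚ) ^ (mX lam s e a i j) ∣ PfX lam s a i j ∧
      ¬ (cyclotomic e ℚ) ^ (mX lam s e a i j + 1) ∣ PfX lam s a i j := by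
  classical
  have hq : Prime (cyclotomic e ℚ) := (cyclotomic.irreducible_rat (by omega)).prime
  have hh : 0 < hookLen (lam a) (lam a) i j := hookLen_pos _ hij
  have hha : chargedHook lam s a a i j = hookLen (lam a) (lam a) i j := by
    simp [chargedHook]
  have hcond : (e ∣ (hookLen (lam a) (lam a) i j).toNat) ↔
      ((e : ℤ) ∣ chargedHook lam s a a i j) := by
    rw [hha]
    constructor
    · intro hd
      have := Int.natCast_dvd_natCast.mpr hd
      rwa [Int.toNat_of_nonneg hh.le] at this
    · intro hd
      have h2 : (e : ℤ) ∣ ((hookLen (lam a) (lam a) i j).toNat : ℤ) := by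
        rwa [Int.toNat_of_nonneg hh.le]
      exact_mod_cast h2
  have hgeom := cyc_exact_geom he (m := (hookLen (lam a) (lam a) i j).toNat) (by omega)
  simp only [hcond] at hgeom
  have hfac : ∀ b ∈ Finset.univ.erase a,
      (cyclotomic e ℚ) ^ (if (e : ℤ) ∣ chargedHook lam s a b i j then 1 else 0) ∣
          (X ^ (chargedHook lam s a b i j).natAbs - 1 : ℚ[X]) ∧
        ¬ (cyclotomic e ℚ) ^ ((if (e : ℤ) ∣ chargedHook lam s a b i j then 1 else 0) + 1) ∣
          (X ^ (chargedHook lam s a b i j).natAbs - 1 : ℚ[X]) := by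
    intro b _
    have hne : (chargedHook lam s a b i j).natAbs ≠ 0 := Int.natAbs_ne_zero.mpr (h0 b)
    have hcb : (e ∣ (chargedHook lam s a b i j).natAbs) ↔
        ((e : ℤ) ∣ chargedHook lam s a b i j) := by
      rw [← Int.natAbs_dvd_natAbs, Int.natAbs_natCast]
    have := cyc_exact_X_pow_sub_one he
      (m := (chargedHook lam s a b i j).natAbs) (Nat.pos_of_ne_zero hne)
    simpa only [hcb] using this
  have hprod := exact_prod hq (Finset.univ.erase a) _ _ hfac
  have hmul := exact_mul hq hgeom.1 hgeom.2 hprod.1 hprod.2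
  have hsum : (if (e : ℤ) ∣ chargedHook lam s a a i j then 1 else 0) +
      (∑ b ∈ Finset.univ.erase a, if (e : ℤ) ∣ chargedHook lam s a b i j then 1 else 0)
        = mX lam s e a i j := by
    simp only [mX]
    rw [Finset.card_filter]
    exact Finset.add_sum_erase _ (fun b => if (e : ℤ) ∣ chargedHook lam s a b i j then 1 else 0) (Finset.mem_univ a)
  rw [hsum] at hmul
  exact hmul

end Stmt7Aux

open Stmt7Aux Polynomial LaurentPolynomial in
/-- If `0 ∉ H(λ)` (equivalently `s_λ(y) ≠ 0`), the largest `N` with `Φ_e(y)^N ∣ s_λ(y)` in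
`ℚ[y,y⁻¹]` equals the number of charged hook lengths in `H(λ)` divisible by `e`. -/
theorem stmt7 (l n : ℕ) (hl : 1 ≤ l) (e : ℕ) (he : 1 < e)
    (lam : Fin l → IntPartition) (s : Fin l → ℤ)
    (hn : ∑ a : Fin l, (∑ᶠ i : ℕ, (lam a).part i) = n)
    (h0 : ∀ (a b : Fin l) (i j : ℕ), j < (lam a).part i → chargedHook lam s a b i j ≠ 0) :
    (Polynomial.toLaurent (Polynomial.cyclotomic e ℚ)) ^
        (Set.ncard {x : Fin l × Fin l × ℕ × ℕ | x.2.2.2 < (lam x.1).part x.2.2.1 ∧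
          (e : ℤ) ∣ chargedHook lam s x.1 x.2.1 x.2.2.1 x.2.2.2})
        ∣ schurElt l n lam s ∧
    ∀ N : ℕ, (Polynomial.toLaurent (Polynomial.cyclotomic e ℚ)) ^ N ∣ schurElt l n lam s →
      N ≤ Set.ncard {x : Fin l × Fin l × ℕ × ℕ | x.2.2.2 < (lam x.1).part x.2.2.1 ∧
          (e : ℤ) ∣ chargedHook lam s x.1 x.2.1 x.2.2.1 x.2.2.2} := by
  classical
  have hq : Prime (cyclotomic e ℚ) := (cyclotomic.irreducible_rat (by omega)).prime
  have hqX : ¬ cyclotomic e ℚ ∣ X := cyc_not_dvd_X he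
  choose Nb hNb using fun a : Fin l => (lam a).eventually_zero
  set M : ℕ := Finset.univ.sup Nb with hMdef
  have hM : ∀ (a : Fin l) (i : ℕ), M ≤ i → (lam a).part i = 0 := fun a i hi =>
    hNb a i (le_trans (Finset.le_sup (Finset.mem_univ a)) hi)
  set B : ℕ := Finset.univ.sup (fun a : Fin l => (lam a).part 0) + 1 with hBdef
  have hB : ∀ (a : Fin l) (i : ℕ), (lam a).part i < B := fun a i =>
    lt_of_le_of_lt ((lam a).antitone (Nat.zero_le i))
      (Nat.lt_succ_of_le (Finset.le_sup (f := fun a : Fin l => (lam a).part 0) (Finset.mem_univ a)))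
  -- reduce the finprods to finite products
  have hjred : ∀ (m : ℕ) (f : ℕ → LaurentPolynomial ℚ),
      (∏ᶠ (j : ℕ) (_ : j < m), f j) = ∏ j ∈ Finset.range m, f j := by
    intro m f
    have h1 : (∏ᶠ (j : ℕ) (_ : j < m), f j) = ∏ᶠ (j : ℕ), if j < m then f j else 1 :=
      finprod_congr fun j => finprod_eq_if
    rw [h1, finprod_eq_prod_of_mulSupport_subset _ (s := Finset.range m)
      (by intro j hj
          simp only [Function.mem_mulSupport, ne_eq, ite_eq_right_iff, not_forall] at hj
          exact Finset.mem_coe.mpr (Finset.mem_range.mpr hj.1))]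
    exact Finset.prod_congr rfl fun j hj => if_pos (Finset.mem_range.mp hj)
  have hired : ∀ a : Fin l,
      (∏ᶠ (i : ℕ), ∏ j ∈ Finset.range ((lam a).part i), FlX lam s a i j)
        = ∏ i ∈ Finset.range M, ∏ j ∈ Finset.range ((lam a).part i), FlX lam s a i j := by
    intro a
    apply finprod_eq_prod_of_mulSupport_subset
    intro i hi
    simp only [Function.mem_mulSupport] at hi
    by_contra hc
    apply hi
    have hz : (lam a).part i = 0 :=
      hM a i (by simpa [Finset.mem_coe, Finset.mem_range, not_lt] using hc)
    rw [hz]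
    simp
  have hfin : schurElt l n lam s =
      ((-1) ^ (n * (l - 1)) * T (-(nStatBar lam : ℤ))) *
        ∏ a : Fin l, ∏ i ∈ Finset.range M, ∏ j ∈ Finset.range ((lam a).part i),
          FlX lam s a i j := by
    unfold schurElt
    congr 1
    rw [finprod_eq_prod_of_fintype]
    refine Finset.prod_congr rfl fun a _ => ?_
    rw [← hired a]
    exact finprod_congr fun i => hjred _ _
  set BigPf : ℚ[X] := ∏ a : Fin l, ∏ i ∈ Finset.range M,
      ∏ j ∈ Finset.range ((lam a).part i), PfX lam s a i j with hBigPf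
  have hassoc : Associated (toLaurent BigPf) (schurElt l n lam s) := by
    rw [hfin]
    have h1 : Associated (toLaurent BigPf)
        (∏ a : Fin l, ∏ i ∈ Finset.range M, ∏ j ∈ Finset.range ((lam a).part i),
          FlX lam s a i j) := by
      rw [hBigPf, map_prod]
      refine Associated.prod _ _ _ fun a _ => ?_
      rw [map_prod]
      refine Associated.prod _ _ _ fun i _ => ?_
      rw [map_prod]
      exact Associated.prod _ _ _ fun j _ => node_assoc lam s a i j
    refine h1.trans ?_
    have hC : IsUnit ((-1 : LaurentPolynomial ℚ) ^ (n * (l - 1)) * T (-(nStatBar lam : ℤ))) :=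
      (isUnit_one.neg.pow _).mul (isUnit_T _)
    exact ⟨hC.unit, by rw [IsUnit.unit_spec, mul_comm]⟩
  have hiff : ∀ N : ℕ, (Polynomial.toLaurent (cyclotomic e ℚ)) ^ N ∣ schurElt l n lam s ↔
      (cyclotomic e ℚ) ^ N ∣ BigPf := fun N => by
    rw [← hassoc.dvd_iff_dvd_right]
    exact toLaurent_pow_dvd_iff hq hqX N
  have hexact := exact_prod hq Finset.univ
    (fun a => ∏ i ∈ Finset.range M, ∏ j ∈ Finset.range ((lam a).part i), PfX lam s a i j)
    (fun a => ∑ i ∈ Finset.range M, ∑ j ∈ Finset.range ((lam a).part i), mX lam s e a i j)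
    (fun a _ => exact_prod hq _ _ _ (fun i _ => exact_prod hq _ _ _
      (fun j hj => node_exact lam s he a i j (Finset.mem_range.mp hj)
        (fun b => h0 a b i j (Finset.mem_range.mp hj)))))
  have hcard : Set.ncard {x : Fin l × Fin l × ℕ × ℕ | x.2.2.2 < (lam x.1).part x.2.2.1 ∧
      (e : ℤ) ∣ chargedHook lam s x.1 x.2.1 x.2.2.1 x.2.2.2} =
      ∑ a : Fin l, ∑ i ∈ Finset.range M, ∑ j ∈ Finset.range ((lam a).part i),
        mX lam s e a i j := by
    have hset : {x : Fin l × Fin l × ℕ × ℕ | x.2.2.2 < (lam x.1).part x.2.2.1 ∧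
        (e : ℤ) ∣ chargedHook lam s x.1 x.2.1 x.2.2.1 x.2.2.2} =
        ↑((Finset.univ ×ˢ Finset.univ ×ˢ Finset.range M ×ˢ Finset.range B).filter
          fun x : Fin l × Fin l × ℕ × ℕ => x.2.2.2 < (lam x.1).part x.2.2.1 ∧
            (e : ℤ) ∣ chargedHook lam s x.1 x.2.1 x.2.2.1 x.2.2.2) := by
      ext x
      simp only [Set.mem_setOf_eq, Finset.coe_filter, Finset.mem_product, Finset.mem_univ,
        Finset.mem_range, true_and, Set.mem_setOf_eq]
      constructor
      · rintro ⟨h1, h2⟩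
        refine ⟨⟨?_, ?_⟩, h1, h2⟩
        · by_contra hc
          rw [hM x.1 x.2.2.1 (by omega)] at h1
          omega
        · have := hB x.1 x.2.2.1
          omega
      · tauto
    rw [hset, Set.ncard_coe_finset, Finset.card_filter, Finset.sum_product]
    refine Finset.sum_congr rfl fun a _ => ?_
    rw [Finset.sum_product, Finset.sum_comm, Finset.sum_product]
    refine Finset.sum_congr rfl fun i _ => ?_
    have hzero : ∀ j ∈ Finset.range B, j ∉ Finset.range ((lam a).part i) →
        (∑ b : Fin l, if j < (lam a).part i ∧
          (e : ℤ) ∣ chargedHook lam s a b i j then 1 else 0) = 0 := by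
      intro j _ hj
      exact Finset.sum_eq_zero fun b _ =>
        if_neg (fun hcond => hj (Finset.mem_range.mpr hcond.1))
    have h1 : ∑ j ∈ Finset.range ((lam a).part i),
          (∑ b : Fin l, if j < (lam a).part i ∧
            (e : ℤ) ∣ chargedHook lam s a b i j then 1 else 0)
        = ∑ j ∈ Finset.range B,
          (∑ b : Fin l, if j < (lam a).part i ∧
            (e : ℤ) ∣ chargedHook lam s a b i j then 1 else 0) :=
      Finset.sum_subset (Finset.range_subset_range.mpr (hB a i).le) hzero
    rw [← h1]
    refine Finset.sum_congr rfl fun j hj => ?_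
    simp only [mX]
    rw [Finset.card_filter]
    refine Finset.sum_congr rfl fun b _ => ?_
    have hjp : j < (lam a).part i := Finset.mem_range.mp hj
    simp [hjp]
  constructor
  · rw [hcard]
    exact (hiff _).mpr hexact.1
  · intro N hN
    rw [hcard]
    by_contra hc
    push_neg at hc
    have hle : (∑ a : Fin l, ∑ i ∈ Finset.range M, ∑ j ∈ Finset.range ((lam a).part i),
        mX lam s e a i j) + 1 ≤ N := hc
    exact hexact.2 ((pow_dvd_pow _ hle).trans ((hiff N).mp hN))
end

section
/- Let λ and μ be partitions, let s, s' ∈ ℤ with s ≤ s', and fix m ∈ ℤ_{>0} with m + s ≥ 1, m + s' ≥ 1, λ_{m+s} = 0 and μ_{m+s'} = 0. Set X := {λ_j − j + s + 1 : 1 ≤ j ≤ m+s} and Y := {μ_j − j + s' + 1 : 1 ≤ j ≤ m+s'}. For x ∈ X set δ_X(x) := #{y ∈ ℤ : −m < y < x, y ∉ X}, and for x ∈ Y set δ_Y(x) := #{y ∈ ℤ : −m < y < x, y ∉ Y}; let y_1 < y_2 < ⋯ enumerate {y ∈ ℤ : y > −m, y ∉ Y} and z_1 < z_2 < ⋯ enumerate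 {y ∈ ℤ : y > −m, y ∉ X}. Then the multiset (⊎_{x ∈ X} {x − y_d : 1 ≤ d ≤ δ_X(x)}) ⊎ (⊎_{x ∈ Y} {x − z_d : 1 ≤ d ≤ δ_Y(x)}) contains 0 with multiplicity exactly #{x ∈ X : x ∉ Y}. -/
section Stmt8Aux
open Finset

lemma card_filter_erase_add {α : Type*} [DecidableEq α] (S : Finset α) (P : α → Prop)
    [DecidablePred P] (c : α) (hc : c ∈ S) :
    (S.filter P).card = ((S.erase c).filter P).card + (if P c then 1 else 0) := by
  rw [filter_erase]
  by_cases h : P c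
  · have hm : c ∈ S.filter P := mem_filter.mpr ⟨hc, h⟩
    rw [if_pos h, card_erase_of_mem hm]
    have := card_pos.mpr ⟨c, hm⟩
    omega
  · rw [if_neg h, erase_eq_of_notMem (fun hh => h (mem_filter.mp hh).2)]; omega

lemma key_count : ∀ (n : ℕ) (A B : Finset ℤ), Disjoint A B → (A ∪ B).card = n →
    (A.filter fun a => (B.filter (· < a)).card ≤ (A.filter (· < a)).card).card
      = (B.filter fun b => (B.filter (· < b)).card < (A.filter (· < b)).card).card
        + (A.card - B.card) := by
  intro n
  induction n with
  | zero =>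
    intro A B hd hc
    have h := card_eq_zero.mp hc
    have hA : A = ∅ := eq_empty_of_forall_notMem fun x hx => by
      rw [eq_empty_iff_forall_notMem] at h; exact h x (mem_union_left _ hx)
    have hB : B = ∅ := eq_empty_of_forall_notMem fun x hx => by
      rw [eq_empty_iff_forall_notMem] at h; exact h x (mem_union_right _ hx)
    simp [hA, hB]
  | succ n ih =>
    intro A B hd hc
    have hne : (A ∪ B).Nonempty := card_pos.mp (by omega)
    set c := (A ∪ B).max' hne with hcdef
    have hcmem : c ∈ A ∪ B := (A ∪ B).max'_mem hne
    have hmax : ∀ x ∈ A ∪ B, x ≤ c := fun x hx => le_max' _ x hx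
    rcases mem_union.mp hcmem with hcA | hcB
    · -- c ∈ A
      have hcB : c ∉ B := disjoint_left.mp hd hcA
      have hdisj' : Disjoint (A.erase c) B := Disjoint.mono_left (erase_subset _ _) hd
      have hcard' : ((A.erase c) ∪ B).card = n := by
        have h2 : (A.erase c) ∪ B = (A ∪ B).erase c := by
          rw [erase_union_distrib, erase_eq_of_notMem hcB]
        rw [h2, card_erase_of_mem hcmem, hc]; omega
      have hfiltA : ∀ a : ℤ, a ≤ c → A.filter (· < a) = (A.erase c).filter (· < a) := by
        intro a ha
        rw [filter_erase, erase_eq_of_notMem]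
        simp only [mem_filter]
        rintro ⟨-, h⟩; omega
      have hBc : B.filter (· < c) = B := by
        apply filter_true_of_mem
        intro b hb
        have h1 := hmax b (mem_union_right _ hb)
        have h2 : b ≠ c := fun h => hcB (h ▸ hb)
        omega
      have hAc : A.filter (· < c) = A.erase c := by
        ext a
        simp only [mem_filter, mem_erase]
        constructor
        · rintro ⟨h1, h2⟩; exact ⟨by omega, h1⟩
        · rintro ⟨h1, h2⟩
          have := hmax a (mem_union_left _ h2)
          exact ⟨h2, by omega⟩
      have hA'card : (A.erase c).card = A.card - 1 := card_erase_of_mem hcA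
      have hApos : 1 ≤ A.card := card_pos.mpr ⟨c, hcA⟩
      have hPcongr : ∀ a ∈ A.erase c,
          ((B.filter (· < a)).card ≤ (A.filter (· < a)).card
            ↔ (B.filter (· < a)).card ≤ ((A.erase c).filter (· < a)).card) := by
        intro a ha
        rw [hfiltA a (hmax a (mem_union_left _ (erase_subset _ _ ha)))]
      have hPc : ((B.filter (· < c)).card ≤ (A.filter (· < c)).card) ↔ B.card ≤ A.card - 1 := by
        rw [hBc, hAc, hA'card]
      have hLHS : (A.filter fun a => (B.filter (· < a)).card ≤ (A.filter (· < a)).card).card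
          = ((A.erase c).filter fun a =>
              (B.filter (· < a)).card ≤ ((A.erase c).filter (· < a)).card).card
            + (if B.card ≤ A.card - 1 then 1 else 0) := by
        rw [card_filter_erase_add A _ c hcA, filter_congr hPcongr, if_congr hPc rfl rfl]
      have hRHS : (B.filter fun b => (B.filter (· < b)).card < (A.filter (· < b)).card)
          = (B.filter fun b => (B.filter (· < b)).card < ((A.erase c).filter (· < b)).card) := by
        apply filter_congr
        intro b hb
        rw [hfiltA b (hmax b (mem_union_right _ hb))]
      rw [hLHS, hRHS, ih (A.erase c) B hdisj' hcard', hA'card]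
      by_cases h : B.card ≤ A.card - 1 <;> simp only [h, if_true, if_false] <;> omega
    · -- c ∈ B
      have hcA : c ∉ A := disjoint_right.mp hd hcB
      have hdisj' : Disjoint A (B.erase c) := Disjoint.mono_right (erase_subset _ _) hd
      have hcard' : (A ∪ B.erase c).card = n := by
        have h2 : A ∪ B.erase c = (A ∪ B).erase c := by
          rw [erase_union_distrib, erase_eq_of_notMem hcA]
        rw [h2, card_erase_of_mem hcmem, hc]; omega
      have hfiltB : ∀ a : ℤ, a ≤ c → B.filter (· < a) = (B.erase c).filter (· < a) := by
        intro a ha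
        rw [filter_erase, erase_eq_of_notMem]
        simp only [mem_filter]
        rintro ⟨-, h⟩; omega
      have hLHS : (A.filter fun a => (B.filter (· < a)).card ≤ (A.filter (· < a)).card)
          = (A.filter fun a => ((B.erase c).filter (· < a)).card ≤ (A.filter (· < a)).card) := by
        apply filter_congr
        intro a ha
        rw [hfiltB a (hmax a (mem_union_left _ ha))]
      have hAc : A.filter (· < c) = A := by
        apply filter_true_of_mem
        intro a ha
        have h1 := hmax a (mem_union_left _ ha)
        have h2 : a ≠ c := fun h => hcA (h ▸ ha)
        omega
      have hBc : B.filter (· < c) = B.erase c := by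
        ext b
        simp only [mem_filter, mem_erase]
        constructor
        · rintro ⟨h1, h2⟩; exact ⟨by omega, h1⟩
        · rintro ⟨h1, h2⟩
          have := hmax b (mem_union_right _ h2)
          exact ⟨h2, by omega⟩
      have hB'card : (B.erase c).card = B.card - 1 := card_erase_of_mem hcB
      have hBpos : 1 ≤ B.card := card_pos.mpr ⟨c, hcB⟩
      have hQcongr : ∀ b ∈ B.erase c,
          ((B.filter (· < b)).card < (A.filter (· < b)).card
            ↔ ((B.erase c).filter (· < b)).card < (A.filter (· < b)).card) := by
        intro b hb
        rw [hfiltB b (hmax b (mem_union_right _ (erase_subset _ _ hb)))]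
      have hQc : ((B.filter (· < c)).card < (A.filter (· < c)).card) ↔ B.card - 1 < A.card := by
        rw [hBc, hAc, hB'card]
      have hRHScnt : (B.filter fun b => (B.filter (· < b)).card < (A.filter (· < b)).card).card
          = ((B.erase c).filter fun b =>
              ((B.erase c).filter (· < b)).card < (A.filter (· < b)).card).card
            + (if B.card - 1 < A.card then 1 else 0) := by
        rw [card_filter_erase_add B _ c hcB, filter_congr hQcongr, if_congr hQc rfl rfl]
      rw [hLHS, hRHScnt, ih A (B.erase c) hdisj' hcard', hB'card]
      by_cases h : B.card - 1 < A.card <;> simp only [h, if_true, if_false] <;> omega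

lemma delta_add (W : Finset ℤ) (mI : ℤ) (hW : ∀ w ∈ W, mI < w) (x : ℤ) :
    Set.ncard {y : ℤ | mI < y ∧ y < x ∧ y ∉ W} + (W.filter (· < x)).card
      = (Finset.Ioo mI x).card := by
  have h1 : {y : ℤ | mI < y ∧ y < x ∧ y ∉ W}
      = ↑((Finset.Ioo mI x).filter (fun y => y ∉ W)) := by
    ext y
    simp only [Set.mem_setOf_eq, coe_filter, Finset.mem_Ioo, Set.mem_setOf_eq]
    tauto
  rw [h1, Set.ncard_coe_finset]
  have h2 : W.filter (· < x) = (Finset.Ioo mI x).filter (fun y => y ∈ W) := by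
    ext y
    simp only [mem_filter, Finset.mem_Ioo]
    constructor
    · rintro ⟨h3, h4⟩; exact ⟨⟨hW y h3, h4⟩, h3⟩
    · rintro ⟨⟨_, h4⟩, h3⟩; exact ⟨h3, h4⟩
  rw [h2, add_comm]
  exact card_filter_add_card_filter_not _

lemma count_enum (g : ℕ → ℤ) (hg : StrictMono g) (W : Finset ℤ) (mI : ℤ)
    (hgr : Set.range g = {y : ℤ | mI < y ∧ y ∉ W}) (δW : ℤ → ℕ)
    (hδW : ∀ x, δW x = Set.ncard {y : ℤ | mI < y ∧ y < x ∧ y ∉ W})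
    (x : ℤ) (hx : mI < x) (n : ℕ) :
    Multiset.count 0 ((Multiset.range n).map fun d => x - g d)
      = if x ∉ W ∧ δW x < n then 1 else 0 := by
  rw [Multiset.count_map]
  by_cases hxW : x ∈ W
  · rw [if_neg (by simp [hxW]), Multiset.card_eq_zero, Multiset.filter_eq_nil]
    intro d hd hcontra
    have hmem : g d ∈ Set.range g := ⟨d, rfl⟩
    rw [hgr] at hmem
    exact hmem.2 (by rw [show g d = x by omega]; exact hxW)
  · obtain ⟨d0, hd0⟩ : x ∈ Set.range g := by rw [hgr]; exact ⟨hx, hxW⟩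
    have hδeq : δW x = d0 := by
      rw [hδW]
      have hset : {y : ℤ | mI < y ∧ y < x ∧ y ∉ W} = g '' Set.Iio d0 := by
        ext y
        simp only [Set.mem_setOf_eq, Set.mem_image, Set.mem_Iio]
        constructor
        · rintro ⟨h1, h2, h3⟩
          obtain ⟨e, he⟩ : y ∈ Set.range g := by rw [hgr]; exact ⟨h1, h3⟩
          refine ⟨e, ?_, he⟩
          have : g e < g d0 := by rw [he, hd0]; exact h2
          exact hg.lt_iff_lt.mp this
        · rintro ⟨e, he, rfl⟩
          have h1 : g e ∈ Set.range g := ⟨e, rfl⟩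
          rw [hgr] at h1
          exact ⟨h1.1, by rw [← hd0]; exact hg he, h1.2⟩
      rw [hset, Set.ncard_image_of_injective _ hg.injective, ← Finset.coe_Iio,
        Set.ncard_coe_finset, Nat.card_Iio]
    have hfilt : (Multiset.range n).filter (fun d => (0:ℤ) = x - g d)
        = (Multiset.range n).filter (fun d => d = d0) := by
      apply Multiset.filter_congr
      intro d hd
      constructor
      · intro h
        exact hg.injective (by rw [hd0]; omega)
      · rintro rfl
        rw [hd0, sub_self]
    rw [hfilt]
    show ((Finset.range n).filter (fun d => d = d0)).card = _
    rw [Finset.filter_eq']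
    by_cases h : d0 < n
    · rw [if_pos (Finset.mem_range.mpr h), if_pos ⟨hxW, hδeq ▸ h⟩, Finset.card_singleton]
    · rw [if_neg (fun hc => h (Finset.mem_range.mp hc)),
        if_neg (fun hc => h (hδeq ▸ hc.2)), Finset.card_empty]

lemma beta_gt (p : IntPartition) (s : ℤ) (m : ℕ) (hms : 1 ≤ (m : ℤ) + s) :
    ∀ x ∈ betaFinset p s m, -(m : ℤ) < x := by
  intro x hx
  simp only [betaFinset, Finset.mem_image, Finset.mem_range] at hx
  obtain ⟨j, hj, rfl⟩ := hx
  have h1 : ((((m : ℤ) + s).toNat : ℤ)) = (m : ℤ) + s := Int.toNat_of_nonneg (by omega)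
  have h2 : (j : ℤ) < (((m : ℤ) + s).toNat : ℤ) := Nat.cast_lt.mpr hj
  have h3 : (0 : ℤ) ≤ (p.part j : ℤ) := Int.natCast_nonneg _
  omega

lemma beta_card (p : IntPartition) (s : ℤ) (m : ℕ) :
    (betaFinset p s m).card = ((m : ℤ) + s).toNat := by
  have hsa : StrictAnti (fun j : ℕ => (p.part j : ℤ) - j + s) := by
    intro j k hjk
    have h1 : (p.part k : ℤ) ≤ (p.part j : ℤ) := Nat.cast_le.mpr (p.antitone hjk.le)
    have h2 : (j : ℤ) < (k : ℤ) := Nat.cast_lt.mpr hjk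
    simp only []
    omega
  rw [betaFinset, Finset.card_image_of_injective _ hsa.injective, Finset.card_range]


end Stmt8Aux

/-- Key counting step: the multiset
`(⊎_{x ∈ X} {x − y_d : 1 ≤ d ≤ δ_X(x)}) ⊎ (⊎_{x ∈ Y} {x − z_d : 1 ≤ d ≤ δ_Y(x)})`
contains `0` with multiplicity exactly `#{x ∈ X : x ∉ Y}`.  Here `yf`, `zf` are the increasing
enumerations of the empty positions `{y > −m : y ∉ Y}` and `{y > −m : y ∉ X}` (so that
`y_d = yf (d−1)` and `z_d = zf (d−1)`). -/
theorem stmt8 (lam mu : IntPartition) (s s' : ℤ) (hss : s ≤ s')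
    (m : ℕ) (hm : 0 < m) (hms : 1 ≤ (m : ℤ) + s) (hms' : 1 ≤ (m : ℤ) + s')
    (hz1 : lam.part (((m : ℤ) + s).toNat - 1) = 0)
    (hz2 : mu.part (((m : ℤ) + s').toNat - 1) = 0)
    (X Y : Finset ℤ) (hX : X = betaFinset lam s m) (hY : Y = betaFinset mu s' m)
    (δX δY : ℤ → ℕ)
    (hδX : ∀ x : ℤ, δX x = Set.ncard {y : ℤ | -(m : ℤ) < y ∧ y < x ∧ y ∉ X})
    (hδY : ∀ x : ℤ, δY x = Set.ncard {y : ℤ | -(m : ℤ) < y ∧ y < x ∧ y ∉ Y})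
    (yf zf : ℕ → ℤ) (hyf : StrictMono yf) (hzf : StrictMono zf)
    (hyfr : Set.range yf = {y : ℤ | -(m : ℤ) < y ∧ y ∉ Y})
    (hzfr : Set.range zf = {y : ℤ | -(m : ℤ) < y ∧ y ∉ X}) :
    Multiset.count 0
        ((X.1.bind fun x => (Multiset.range (δX x)).map fun d => x - yf d) +
          (Y.1.bind fun x => (Multiset.range (δY x)).map fun d => x - zf d))
      = (X.filter fun x => x ∉ Y).card := by
  have hXgt : ∀ x ∈ X, -(m : ℤ) < x := hX ▸ beta_gt lam s m hms
  have hYgt : ∀ x ∈ Y, -(m : ℤ) < x := hY ▸ beta_gt mu s' m hms'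
  have hXYcard : X.card ≤ Y.card := by
    rw [hX, hY, beta_card, beta_card]
    exact Int.toNat_le_toNat (by omega)
  -- delta identities
  have hdX : ∀ x : ℤ, δX x + (X.filter (· < x)).card = (Finset.Ioo (-(m : ℤ)) x).card :=
    fun x => by rw [hδX x]; exact delta_add X _ hXgt x
  have hdY : ∀ x : ℤ, δY x + (Y.filter (· < x)).card = (Finset.Ioo (-(m : ℤ)) x).card :=
    fun x => by rw [hδY x]; exact delta_add Y _ hYgt x
  -- splitting of the filters
  have hsX : ∀ x : ℤ, (X.filter (· < x)).card
      = ((X \ Y).filter (· < x)).card + ((X ∩ Y).filter (· < x)).card := by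
    intro x
    conv_lhs => rw [← Finset.sdiff_union_inter X Y]
    rw [Finset.filter_union,
      Finset.card_union_of_disjoint
        (Finset.disjoint_filter_filter (Finset.disjoint_sdiff_inter X Y))]
  have hsY : ∀ x : ℤ, (Y.filter (· < x)).card
      = ((Y \ X).filter (· < x)).card + ((X ∩ Y).filter (· < x)).card := by
    intro x
    conv_lhs => rw [← Finset.sdiff_union_inter Y X]
    rw [Finset.filter_union,
      Finset.card_union_of_disjoint
        (Finset.disjoint_filter_filter (Finset.disjoint_sdiff_inter Y X)),
      Finset.inter_comm]
  have hiff1 : ∀ x : ℤ, (δY x < δX x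
      ↔ ((X \ Y).filter (· < x)).card < ((Y \ X).filter (· < x)).card) := by
    intro x
    have h1 := hdX x; have h2 := hdY x; have h3 := hsX x; have h4 := hsY x
    omega
  have hiff2 : ∀ x : ℤ, (δX x < δY x
      ↔ ((Y \ X).filter (· < x)).card < ((X \ Y).filter (· < x)).card) := by
    intro x
    have h1 := hdX x; have h2 := hdY x; have h3 := hsX x; have h4 := hsY x
    omega
  -- compute the two counts
  rw [Multiset.count_add]
  have hb1 : Multiset.count 0 (X.1.bind fun x => (Multiset.range (δX x)).map fun d => x - yf d)
      = ∑ x ∈ X, Multiset.count 0 ((Multiset.range (δX x)).map fun d => x - yf d) :=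
    Multiset.count_bind
  have hb2 : Multiset.count 0 (Y.1.bind fun x => (Multiset.range (δY x)).map fun d => x - zf d)
      = ∑ x ∈ Y, Multiset.count 0 ((Multiset.range (δY x)).map fun d => x - zf d) :=
    Multiset.count_bind
  have hc1 : ∑ x ∈ X, Multiset.count 0 ((Multiset.range (δX x)).map fun d => x - yf d)
      = (X.filter fun x => x ∉ Y ∧ δY x < δX x).card := by
    rw [Finset.card_filter]
    apply Finset.sum_congr rfl
    intro x hxm
    exact count_enum yf hyf Y (-(m : ℤ)) hyfr δY hδY x (hXgt x hxm) (δX x)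
  have hc2 : ∑ x ∈ Y, Multiset.count 0 ((Multiset.range (δY x)).map fun d => x - zf d)
      = (Y.filter fun x => x ∉ X ∧ δX x < δY x).card := by
    rw [Finset.card_filter]
    apply Finset.sum_congr rfl
    intro x hxm
    exact count_enum zf hzf X (-(m : ℤ)) hzfr δX hδX x (hYgt x hxm) (δY x)
  rw [hb1, hb2, hc1, hc2]
  -- rewrite the filters over the symmetric differences
  have hf1 : (X.filter fun x => x ∉ Y ∧ δY x < δX x)
      = ((X \ Y).filter fun a =>
          ((X \ Y).filter (· < a)).card < ((Y \ X).filter (· < a)).card) := by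
    ext a
    simp only [Finset.mem_filter, Finset.mem_sdiff, hiff1 a]
    tauto
  have hf2 : (Y.filter fun x => x ∉ X ∧ δX x < δY x)
      = ((Y \ X).filter fun b =>
          ((Y \ X).filter (· < b)).card < ((X \ Y).filter (· < b)).card) := by
    ext b
    simp only [Finset.mem_filter, Finset.mem_sdiff, hiff2 b]
    tauto
  rw [hf1, hf2]
  have hkey := key_count ((X \ Y) ∪ (Y \ X)).card (X \ Y) (Y \ X) disjoint_sdiff_sdiff rfl
  have hneg := Finset.card_filter_add_card_filter_not
    (s := X \ Y) (p := fun a => ((Y \ X).filter (· < a)).card ≤ ((X \ Y).filter (· < a)).card)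
  have hnegf : ((X \ Y).filter fun a =>
        ¬ ((Y \ X).filter (· < a)).card ≤ ((X \ Y).filter (· < a)).card)
      = ((X \ Y).filter fun a =>
          ((X \ Y).filter (· < a)).card < ((Y \ X).filter (· < a)).card) := by
    apply Finset.filter_congr
    intro a ha
    simp [Nat.not_le]
  rw [hnegf] at hneg
  have hA2 := Finset.card_sdiff_add_card_inter X Y
  have hB2 := Finset.card_sdiff_add_card_inter Y X
  rw [Finset.inter_comm Y X] at hB2
  have hRHS : (X.filter fun x => x ∉ Y) = X \ Y := (Finset.sdiff_eq_filter X Y).symm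
  rw [hRHS]
  omega
end
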